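/- arXiv:math/9412213 — 5 statements merged into one kernel-verified Lean document; each statement's English description precedes it below -/
import Mathlib

section
/- Let 2 < p < ∞. A linear operator T : ℝ² → ℝ² with operator norm ‖T‖ = 1 from ℓ^p_2 to ℓ²_2 is an extreme point of the closed unit ball of L(ℓ^p_2, ℓ²_2) if and only if either (a) T attains its norm on two linearly independent vectors, or (b) T = e_i⊗y for some i ∈ {1,2} and some Euclidean unit vector y (i.e. T is the map z ↦ z_i·y). -/
noncomputable section

/-- The ℓ^r norm on ℝ². -/
def pnorm (r : ℝ) (z : ℝ × ℝ) : ℝ := (|z.1| ^ r + |z.2| ^ r) ^ (1 / r)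

/-- Apply a 2×2 real matrix, viewed as a linear operator ℝ² → ℝ², to a vector. -/
def app (A : Matrix (Fin 2) (Fin 2) ℝ) (z : ℝ × ℝ) : ℝ × ℝ :=
  (A 0 0 * z.1 + A 0 1 * z.2, A 1 0 * z.1 + A 1 1 * z.2)

/-- Operator norm from ℓ^p_2 to ℓ^q_2. -/
def opNorm (p q : ℝ) (A : Matrix (Fin 2) (Fin 2) ℝ) : ℝ :=
  sSup {c : ℝ | ∃ z : ℝ × ℝ, pnorm p z = 1 ∧ c = pnorm q (app A z)}

/-- Closed unit ball of L(ℓ^p_2, ℓ^q_2). -/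
def unitBall (p q : ℝ) : Set (Matrix (Fin 2) (Fin 2) ℝ) := {A | opNorm p q A ≤ 1}

/-- The rank-one operator u ⊗ v : z ↦ (u·z)·v. -/
def tensor (u v : ℝ × ℝ) : Matrix (Fin 2) (Fin 2) ℝ :=
  !![v.1 * u.1, v.1 * u.2; v.2 * u.1, v.2 * u.2]

/-- Signed power of a vector: (sgn z1 |z1|^r, sgn z2 |z2|^r). -/
def spow (z : ℝ × ℝ) (r : ℝ) : ℝ × ℝ :=
  (Real.sign z.1 * |z.1| ^ r, Real.sign z.2 * |z.2| ^ r)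

/-- Rotation: z^o = (−z2, z1). -/
def rot (z : ℝ × ℝ) : ℝ × ℝ := (-z.2, z.1)

namespace Stmt4Aux
open Real

lemma abs_rpow_two (a : ℝ) : |a| ^ (2:ℝ) = a ^ 2 := by
  rw [show (2:ℝ) = ((2:ℕ):ℝ) by norm_num, Real.rpow_natCast, sq_abs]

lemma pnorm_two (y : ℝ × ℝ) : pnorm 2 y = Real.sqrt (y.1^2 + y.2^2) := by
  unfold pnorm
  rw [abs_rpow_two, abs_rpow_two, Real.sqrt_eq_rpow]

lemma pnorm_two_nonneg (y : ℝ × ℝ) : 0 ≤ pnorm 2 y := by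
  rw [pnorm_two]; positivity

lemma pnorm_two_sq (y : ℝ × ℝ) : pnorm 2 y ^ 2 = y.1^2 + y.2^2 := by
  rw [pnorm_two, Real.sq_sqrt (by positivity)]

lemma pnorm_two_eq_iff {y : ℝ × ℝ} {r : ℝ} (hr : 0 ≤ r) :
    pnorm 2 y = r ↔ y.1^2 + y.2^2 = r^2 := by
  rw [pnorm_two]
  constructor
  · intro h; rw [← h, Real.sq_sqrt (by positivity)]
  · intro h; rw [h, Real.sqrt_sq hr]

lemma pnorm_two_le_iff {y : ℝ × ℝ} {r : ℝ} (hr : 0 ≤ r) :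
    pnorm 2 y ≤ r ↔ y.1^2 + y.2^2 ≤ r^2 := by
  rw [pnorm_two]
  constructor
  · intro h
    have := Real.sq_sqrt (show (0:ℝ) ≤ y.1^2+y.2^2 by positivity)
    nlinarith [Real.sqrt_nonneg (y.1^2+y.2^2)]
  · intro h
    calc Real.sqrt (y.1^2+y.2^2) ≤ Real.sqrt (r^2) := Real.sqrt_le_sqrt h
    _ = r := Real.sqrt_sq hr

variable {p : ℝ}

lemma pnorm_nonneg (hp : 0 < p) (z : ℝ × ℝ) : 0 ≤ pnorm p z := by
  unfold pnorm
  have h1 : (0:ℝ) ≤ |z.1| ^ p := Real.rpow_nonneg (abs_nonneg _) p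
  have h2 : (0:ℝ) ≤ |z.2| ^ p := Real.rpow_nonneg (abs_nonneg _) p
  exact Real.rpow_nonneg (by linarith) _

lemma pnorm_eq_one_iff (hp : 0 < p) (z : ℝ × ℝ) :
    pnorm p z = 1 ↔ |z.1| ^ p + |z.2| ^ p = 1 := by
  unfold pnorm
  have h1 : (0:ℝ) ≤ |z.1| ^ p := Real.rpow_nonneg (abs_nonneg _) p
  have h2 : (0:ℝ) ≤ |z.2| ^ p := Real.rpow_nonneg (abs_nonneg _) p
  constructor
  · intro h
    have := congrArg (fun x : ℝ => x ^ p) h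
    simp only [Real.one_rpow] at this
    rw [← Real.rpow_mul (by linarith), one_div, inv_mul_cancel₀ (by positivity), Real.rpow_one] at this
    exact this
  · intro h; rw [h, Real.one_rpow]

lemma pnorm_sq (hp : 0 < p) (z : ℝ × ℝ) :
    pnorm p z ^ 2 = (|z.1| ^ p + |z.2| ^ p) ^ (2/p) := by
  unfold pnorm
  have h1 : (0:ℝ) ≤ |z.1| ^ p := Real.rpow_nonneg (abs_nonneg _) p
  have h2 : (0:ℝ) ≤ |z.2| ^ p := Real.rpow_nonneg (abs_nonneg _) p
  rw [← Real.rpow_natCast ((|z.1| ^ p + |z.2| ^ p) ^ (1/p)) 2, ← Real.rpow_mul (by linarith)]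
  norm_num
  rw [inv_mul_eq_div]

lemma pnorm_smul (hp : 0 < p) (c : ℝ) (z : ℝ × ℝ) :
    pnorm p (c * z.1, c * z.2) = |c| * pnorm p z := by
  unfold pnorm
  simp only [abs_mul]
  rw [Real.mul_rpow (abs_nonneg c) (abs_nonneg _), Real.mul_rpow (abs_nonneg c) (abs_nonneg _),
    ← mul_add, Real.mul_rpow (Real.rpow_nonneg (abs_nonneg c) p)
      (by positivity), ← Real.rpow_mul (abs_nonneg c)]
  congr 2
  field_simp
  simp

lemma pnorm_zero (hp : 0 < p) : pnorm p (0, 0) = 0 := by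
  unfold pnorm
  simp only [abs_zero]
  rw [Real.zero_rpow (ne_of_gt hp)]
  simp only [add_zero, zero_add]
  exact Real.zero_rpow (by positivity)

lemma pnorm_e1 (hp : 0 < p) : pnorm p (1, 0) = 1 := by
  rw [pnorm_eq_one_iff hp]
  simp only [abs_one, abs_zero, Real.one_rpow, Real.zero_rpow (ne_of_gt hp), add_zero]

lemma pnorm_e2 (hp : 0 < p) : pnorm p (0, 1) = 1 := by
  rw [pnorm_eq_one_iff hp]
  simp only [abs_one, abs_zero, Real.one_rpow, Real.zero_rpow (ne_of_gt hp), zero_add]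

lemma pnorm_pos (hp : 0 < p) {z : ℝ × ℝ} (hz : z ≠ 0) : 0 < pnorm p z := by
  have h : z.1 ≠ 0 ∨ z.2 ≠ 0 := by
    by_contra h; push_neg at h
    exact hz (Prod.ext h.1 h.2)
  have h1 : (0:ℝ) ≤ |z.1| ^ p := Real.rpow_nonneg (abs_nonneg _) p
  have h2 : (0:ℝ) ≤ |z.2| ^ p := Real.rpow_nonneg (abs_nonneg _) p
  have hsum : 0 < |z.1| ^ p + |z.2| ^ p := by
    rcases h with h | h
    · have : 0 < |z.1| ^ p := Real.rpow_pos_of_pos (abs_pos.mpr h) p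
      linarith
    · have : 0 < |z.2| ^ p := Real.rpow_pos_of_pos (abs_pos.mpr h) p
      linarith
  exact Real.rpow_pos_of_pos hsum _


/-! ### opNorm machinery -/

lemma app_fst (A : Matrix (Fin 2) (Fin 2) ℝ) (z : ℝ × ℝ) :
    (app A z).1 = A 0 0 * z.1 + A 0 1 * z.2 := rfl

lemma app_snd (A : Matrix (Fin 2) (Fin 2) ℝ) (z : ℝ × ℝ) :
    (app A z).2 = A 1 0 * z.1 + A 1 1 * z.2 := rfl

lemma pnorm_zero' (hp : 0 < p) : pnorm p (0 : ℝ × ℝ) = 0 := by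
  unfold pnorm
  simp only [Prod.fst_zero, Prod.snd_zero, abs_zero, Real.zero_rpow (ne_of_gt hp), add_zero]
  exact Real.zero_rpow (by positivity)

lemma bddAbove_opset (hp : 0 < p) (A : Matrix (Fin 2) (Fin 2) ℝ) :
    BddAbove {c : ℝ | ∃ z : ℝ × ℝ, pnorm p z = 1 ∧ c = pnorm 2 (app A z)} := by
  refine ⟨(|A 0 0| + |A 0 1|) + (|A 1 0| + |A 1 1|), ?_⟩
  rintro c ⟨z, hz, rfl⟩
  rw [pnorm_eq_one_iff hp] at hz
  have h1 : (0:ℝ) ≤ |z.1| ^ p := Real.rpow_nonneg (abs_nonneg _) p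
  have h2 : (0:ℝ) ≤ |z.2| ^ p := Real.rpow_nonneg (abs_nonneg _) p
  have hz1 : |z.1| ≤ 1 := by
    by_contra h; push_neg at h
    have := Real.rpow_lt_rpow (by norm_num) h hp
    rw [Real.one_rpow] at this
    linarith
  have hz2 : |z.2| ≤ 1 := by
    by_contra h; push_neg at h
    have := Real.rpow_lt_rpow (by norm_num) h hp
    rw [Real.one_rpow] at this
    linarith
  rw [pnorm_two]
  have e1 : |(app A z).1| ≤ |A 0 0| + |A 0 1| := by
    rw [app_fst]
    have t1 : |A 0 0 * z.1 + A 0 1 * z.2| ≤ |A 0 0 * z.1| + |A 0 1 * z.2| := abs_add_le _ _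
    rw [abs_mul, abs_mul] at t1
    nlinarith [abs_nonneg (A 0 0), abs_nonneg (A 0 1), abs_nonneg z.1, abs_nonneg z.2]
  have e2 : |(app A z).2| ≤ |A 1 0| + |A 1 1| := by
    rw [app_snd]
    have t1 : |A 1 0 * z.1 + A 1 1 * z.2| ≤ |A 1 0 * z.1| + |A 1 1 * z.2| := abs_add_le _ _
    rw [abs_mul, abs_mul] at t1
    nlinarith [abs_nonneg (A 1 0), abs_nonneg (A 1 1), abs_nonneg z.1, abs_nonneg z.2]
  have h01 : (0:ℝ) ≤ |A 0 0| + |A 0 1| := by positivity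
  have h02 : (0:ℝ) ≤ |A 1 0| + |A 1 1| := by positivity
  have step : Real.sqrt ((app A z).1 ^ 2 + (app A z).2 ^ 2) ≤
      Real.sqrt (((|A 0 0| + |A 0 1|) + (|A 1 0| + |A 1 1|)) ^ 2) := by
    apply Real.sqrt_le_sqrt
    have s1 := sq_abs (app A z).1
    have s2 := sq_abs (app A z).2
    nlinarith [abs_nonneg (app A z).1, abs_nonneg (app A z).2, mul_nonneg h01 h02]
  calc Real.sqrt ((app A z).1 ^ 2 + (app A z).2 ^ 2)
      ≤ Real.sqrt (((|A 0 0| + |A 0 1|) + (|A 1 0| + |A 1 1|)) ^ 2) := step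
  _ = (|A 0 0| + |A 0 1|) + (|A 1 0| + |A 1 1|) := Real.sqrt_sq (by positivity)

lemma opNorm_le_one_of_forall (hp : 0 < p) {A : Matrix (Fin 2) (Fin 2) ℝ}
    (h : ∀ z : ℝ × ℝ, pnorm p z = 1 → pnorm 2 (app A z) ≤ 1) :
    opNorm p 2 A ≤ 1 := by
  apply csSup_le
  · exact ⟨pnorm 2 (app A (1, 0)), ⟨(1, 0), pnorm_e1 hp, rfl⟩⟩
  · rintro c ⟨z, hz, rfl⟩
    exact h z hz

lemma app_smul_vec (A : Matrix (Fin 2) (Fin 2) ℝ) (c : ℝ) (z : ℝ × ℝ) :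
    app A (c * z.1, c * z.2) = (c * (app A z).1, c * (app A z).2) := by
  refine Prod.ext ?_ ?_ <;> simp only [app_fst, app_snd] <;> ring

lemma pnorm_app_le (hp : 0 < p) {A : Matrix (Fin 2) (Fin 2) ℝ}
    (hA : opNorm p 2 A ≤ 1) (z : ℝ × ℝ) :
    pnorm 2 (app A z) ≤ pnorm p z := by
  by_cases hz : z = 0
  · subst hz
    have h0 : app A 0 = 0 := by
      unfold app; simp
    rw [h0, pnorm_zero' hp, pnorm_two]
    simp
  · set m := pnorm p z with hm
    have hm0 : 0 < m := pnorm_pos hp hz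
    set z' : ℝ × ℝ := (m⁻¹ * z.1, m⁻¹ * z.2) with hz'
    have hz'1 : pnorm p z' = 1 := by
      rw [hz', pnorm_smul hp, abs_of_pos (by positivity), ← hm]
      field_simp
    have mem : pnorm 2 (app A z') ∈
        {c : ℝ | ∃ z : ℝ × ℝ, pnorm p z = 1 ∧ c = pnorm 2 (app A z)} := ⟨z', hz'1, rfl⟩
    have hle : pnorm 2 (app A z') ≤ 1 :=
      le_trans (le_csSup (bddAbove_opset hp A) mem) hA
    have happ : app A z' = (m⁻¹ * (app A z).1, m⁻¹ * (app A z).2) := app_smul_vec A m⁻¹ z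
    rw [happ] at hle
    have hsm : pnorm 2 (m⁻¹ * (app A z).1, m⁻¹ * (app A z).2) = |m⁻¹| * pnorm 2 (app A z) :=
      pnorm_smul (by norm_num : (0:ℝ) < 2) m⁻¹ (app A z)
    rw [hsm, abs_of_pos (by positivity)] at hle
    calc pnorm 2 (app A z) = m * (m⁻¹ * pnorm 2 (app A z)) := by field_simp
    _ ≤ m * 1 := mul_le_mul_of_nonneg_left hle (le_of_lt hm0)
    _ = m := mul_one m

/-! ### strict convexity of the Euclidean norm -/

lemma strict_convex2 {a b m : ℝ} {u w : ℝ × ℝ} (ha : 0 < a) (hb : 0 < b) (hab : a + b = 1)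
    (hu : u.1^2 + u.2^2 ≤ m^2) (hw : w.1^2 + w.2^2 ≤ m^2)
    (hc : (a*u.1 + b*w.1)^2 + (a*u.2 + b*w.2)^2 = m^2) : u = w := by
  have hb' : b = 1 - a := by linarith
  subst hb'
  have key : a*(1-a)*((u.1-w.1)^2 + (u.2-w.2)^2) =
      (u.1^2+u.2^2)*a + (w.1^2+w.2^2)*(1-a)
        - ((a*u.1+(1-a)*w.1)^2 + (a*u.2+(1-a)*w.2)^2) := by ring
  have hbound : a*(1-a)*((u.1-w.1)^2 + (u.2-w.2)^2) ≤ 0 := by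
    rw [key, hc]
    nlinarith [mul_le_mul_of_nonneg_right hu ha.le,
      mul_le_mul_of_nonneg_right hw (by linarith : (0:ℝ) ≤ 1 - a)]
  have hpos : 0 < a*(1-a) := mul_pos ha hb
  have h2 : (u.1-w.1)^2 + (u.2-w.2)^2 ≤ 0 := nonpos_of_mul_nonpos_right hbound hpos
  have e1 : u.1 - w.1 = 0 := by
    have h3 : (u.1-w.1)^2 = 0 := by nlinarith [sq_nonneg (u.1-w.1), sq_nonneg (u.2-w.2)]
    exact pow_eq_zero_iff (two_ne_zero) |>.mp h3
  have e2 : u.2 - w.2 = 0 := by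
    have h3 : (u.2-w.2)^2 = 0 := by nlinarith [sq_nonneg (u.1-w.1), sq_nonneg (u.2-w.2)]
    exact pow_eq_zero_iff (two_ne_zero) |>.mp h3
  exact Prod.ext (by linarith) (by linarith)

/-! ### linear independence via determinants -/

lemma li_of_det {z w : ℝ × ℝ} (h : z.1 * w.2 - z.2 * w.1 ≠ 0) :
    LinearIndependent ℝ ![z, w] := by
  rw [LinearIndependent.pair_iff]
  intro s t hst
  have h1 : s * z.1 + t * w.1 = 0 := congrArg Prod.fst hst
  have h2 : s * z.2 + t * w.2 = 0 := congrArg Prod.snd hst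
  constructor
  · by_contra hs
    apply h
    have hh : s * (z.1 * w.2 - z.2 * w.1) = 0 := by linear_combination w.2 * h1 - w.1 * h2
    rcases mul_eq_zero.mp hh with h' | h'
    · exact absurd h' hs
    · exact h'
  · by_contra ht
    apply h
    have hh : t * (z.1 * w.2 - z.2 * w.1) = 0 := by linear_combination z.1 * h2 - z.2 * h1
    rcases mul_eq_zero.mp hh with h' | h'
    · exact absurd h' ht
    · exact h'

lemma det_of_li {z w : ℝ × ℝ} (h : LinearIndependent ℝ ![z, w]) :
    z.1 * w.2 - z.2 * w.1 ≠ 0 := by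
  rw [LinearIndependent.pair_iff] at h
  intro hdet
  by_cases hz : z = 0
  · have := (h 1 0 (by simp [hz])).1
    norm_num at this
  · have hzc : z.1 ≠ 0 ∨ z.2 ≠ 0 := by
      by_contra hc; push_neg at hc
      exact hz (Prod.ext hc.1 hc.2)
    rcases hzc with hz1 | hz2
    · have hcomb : w.1 • z + (-z.1) • w = 0 := by
        refine Prod.ext ?_ ?_ <;>
          simp only [Prod.fst_add, Prod.snd_add, Prod.smul_fst, Prod.smul_snd,
            smul_eq_mul, Prod.fst_zero, Prod.snd_zero]
        · ring
        · linear_combination -hdet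
      exact hz1 (neg_eq_zero.mp (h w.1 (-z.1) hcomb).2)
    · have hcomb : w.2 • z + (-z.2) • w = 0 := by
        refine Prod.ext ?_ ?_ <;>
          simp only [Prod.fst_add, Prod.snd_add, Prod.smul_fst, Prod.smul_snd,
            smul_eq_mul, Prod.fst_zero, Prod.snd_zero]
        · linear_combination hdet
        · ring
      exact hz2 (neg_eq_zero.mp (h w.2 (-z.2) hcomb).2)

lemma vec_ne_zero_of_li {z w : ℝ × ℝ} (h : LinearIndependent ℝ ![z, w]) : z ≠ 0 ∧ w ≠ 0 := by
  have hdet := det_of_li h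
  constructor
  · intro hz; rw [hz] at hdet; simp at hdet
  · intro hw; rw [hw] at hdet; simp at hdet

lemma matrix_eq_of_agree {A B : Matrix (Fin 2) (Fin 2) ℝ} {z w : ℝ × ℝ}
    (hdet : z.1 * w.2 - z.2 * w.1 ≠ 0)
    (hz : app A z = app B z) (hw : app A w = app B w) : A = B := by
  have hz1 : A 0 0 * z.1 + A 0 1 * z.2 = B 0 0 * z.1 + B 0 1 * z.2 := congrArg Prod.fst hz
  have hz2 : A 1 0 * z.1 + A 1 1 * z.2 = B 1 0 * z.1 + B 1 1 * z.2 := congrArg Prod.snd hz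
  have hw1 : A 0 0 * w.1 + A 0 1 * w.2 = B 0 0 * w.1 + B 0 1 * w.2 := congrArg Prod.fst hw
  have hw2 : A 1 0 * w.1 + A 1 1 * w.2 = B 1 0 * w.1 + B 1 1 * w.2 := congrArg Prod.snd hw
  have e00 : A 0 0 = B 0 0 := by
    have hh : (A 0 0 - B 0 0) * (z.1 * w.2 - z.2 * w.1) = 0 := by
      linear_combination w.2 * hz1 - z.2 * hw1
    rcases mul_eq_zero.mp hh with h' | h'
    · linarith [h']
    · exact absurd h' hdet
  have e01 : A 0 1 = B 0 1 := by
    have hh : (A 0 1 - B 0 1) * (z.1 * w.2 - z.2 * w.1) = 0 := by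
      linear_combination z.1 * hw1 - w.1 * hz1
    rcases mul_eq_zero.mp hh with h' | h'
    · linarith [h']
    · exact absurd h' hdet
  have e10 : A 1 0 = B 1 0 := by
    have hh : (A 1 0 - B 1 0) * (z.1 * w.2 - z.2 * w.1) = 0 := by
      linear_combination w.2 * hz2 - z.2 * hw2
    rcases mul_eq_zero.mp hh with h' | h'
    · linarith [h']
    · exact absurd h' hdet
  have e11 : A 1 1 = B 1 1 := by
    have hh : (A 1 1 - B 1 1) * (z.1 * w.2 - z.2 * w.1) = 0 := by
      linear_combination z.1 * hw2 - w.1 * hz2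
    rcases mul_eq_zero.mp hh with h' | h'
    · linarith [h']
    · exact absurd h' hdet
  ext i j
  fin_cases i <;> fin_cases j <;> assumption


/-! ### the quadratic kill lemma -/

lemma quad_kill (hp : 2 < p) {Y U : ℝ} (hU : 0 ≤ U)
    (h : ∀ t : ℝ, 2*t*Y + t^2*U ≤ |t| ^ p) : U = 0 := by
  have key : ∀ s : ℝ, 0 < s → s ≤ 1 → U ≤ s ^ (p - 2) := by
    intro s hs hs1
    have h1 := h s
    have h2 := h (-s)
    rw [abs_of_pos hs] at h1
    rw [abs_neg, abs_of_pos hs] at h2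
    have hsum : 2 * s^2 * U ≤ 2 * s ^ p := by nlinarith
    have hs2 : s ^ p = s ^ (p-2) * s^2 := by
      rw [show p = (p-2) + 2 by ring, Real.rpow_add hs, show ((p-2)+2)-2 = p-2 by ring]
      congr 1
      rw [show (2:ℝ) = ((2:ℕ):ℝ) by norm_num, Real.rpow_natCast]
    rw [hs2] at hsum
    have hs2' : 0 < s^2 := by positivity
    nlinarith
  by_contra hU0
  have hU' : 0 < U := lt_of_le_of_ne hU (Ne.symm hU0)
  set s := min 1 ((U/2) ^ (1/(p-2))) with hsdef
  have hs0 : 0 < s := lt_min one_pos (Real.rpow_pos_of_pos (by linarith) _)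
  have hs1 : s ≤ 1 := min_le_left _ _
  have hle := key s hs0 hs1
  have hsle : s ^ (p-2) ≤ U / 2 := by
    calc s ^ (p-2) ≤ ((U/2) ^ (1/(p-2))) ^ (p-2) := by
          apply Real.rpow_le_rpow hs0.le (min_le_right _ _) (by linarith)
    _ = U / 2 := by
          rw [← Real.rpow_mul (by linarith : (0:ℝ) ≤ U/2), one_div,
            inv_mul_cancel₀ (by linarith : p - 2 ≠ 0), Real.rpow_one]
  linarith

/-! ### the master Hölder-type inequality -/

lemma master_core (hp : 2 < p) {A B : ℝ} (hA : 0 ≤ A) (hB : 0 ≤ B) (hAB : A + B = 1)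
    (x y : ℝ) :
    A ^ ((p-2)/p) * x^2 + B ^ ((p-2)/p) * y^2 ≤ pnorm p (x, y) ^ 2 := by
  have hp0 : 0 < p := by linarith
  have hlam : (0:ℝ) ≤ (p-2)/p := div_nonneg (by linarith) (by linarith)
  have hmu : (0:ℝ) < 2/p := div_pos (by norm_num) (by linarith)
  have hsum : (p-2)/p + 2/p = 1 := by field_simp; ring
  rw [pnorm_sq hp0]
  dsimp only
  set X := |x| ^ p with hX
  set Y := |y| ^ p with hY
  have hX0 : 0 ≤ X := Real.rpow_nonneg (abs_nonneg _) p
  have hY0 : 0 ≤ Y := Real.rpow_nonneg (abs_nonneg _) p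
  have hx2 : x^2 = X ^ (2/p) := by
    rw [hX, ← sq_abs x, ← Real.rpow_natCast |x| 2, ← Real.rpow_mul (abs_nonneg x)]
    congr 1
    push_cast
    field_simp
  have hy2 : y^2 = Y ^ (2/p) := by
    rw [hY, ← sq_abs y, ← Real.rpow_natCast |y| 2, ← Real.rpow_mul (abs_nonneg y)]
    congr 1
    push_cast
    field_simp
  by_cases hS : X + Y = 0
  · have hXz : X = 0 := by linarith
    have hYz : Y = 0 := by linarith
    rw [hx2, hy2, hXz, hYz, show (0:ℝ)+0 = 0 by norm_num, Real.zero_rpow (ne_of_gt hmu)]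
    norm_num
  · have hS0 : 0 < X + Y := lt_of_le_of_ne (by linarith) (Ne.symm hS)
    have key : ∀ C Z : ℝ, 0 ≤ C → 0 ≤ Z →
        C ^ ((p-2)/p) * Z ^ (2/p) ≤ (X+Y) ^ (2/p) * ((p-2)/p * C + 2/p * (Z/(X+Y))) := by
      intro C Z hC hZ
      have hgm := Real.geom_mean_le_arith_mean2_weighted hlam hmu.le hC
        (div_nonneg hZ hS0.le) hsum
      have hZfac : Z ^ (2/p) = (Z/(X+Y)) ^ (2/p) * (X+Y) ^ (2/p) := by
        rw [← Real.mul_rpow (div_nonneg hZ hS0.le) hS0.le, div_mul_cancel₀ _ (ne_of_gt hS0)]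
      rw [hZfac]
      calc C ^ ((p-2)/p) * ((Z/(X+Y)) ^ (2/p) * (X+Y) ^ (2/p))
          = (C ^ ((p-2)/p) * (Z/(X+Y)) ^ (2/p)) * (X+Y) ^ (2/p) := by ring
      _ ≤ ((p-2)/p * C + 2/p * (Z/(X+Y))) * (X+Y) ^ (2/p) := by
            apply mul_le_mul_of_nonneg_right hgm (Real.rpow_nonneg hS0.le _)
      _ = (X+Y) ^ (2/p) * ((p-2)/p * C + 2/p * (Z/(X+Y))) := by ring
    have k1 := key A X hA hX0
    have k2 := key B Y hB hY0
    rw [hx2, hy2]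
    have hfin : (X+Y) ^ (2/p) * ((p-2)/p * A + 2/p * (X/(X+Y)))
        + (X+Y) ^ (2/p) * ((p-2)/p * B + 2/p * (Y/(X+Y))) = (X+Y) ^ (2/p) := by
      have : (p-2)/p * A + 2/p * (X/(X+Y)) + ((p-2)/p * B + 2/p * (Y/(X+Y))) = 1 := by
        have hXY : X/(X+Y) + Y/(X+Y) = 1 := by field_simp
        have : (p-2)/p * (A + B) + 2/p * (X/(X+Y) + Y/(X+Y)) = 1 := by
          rw [hAB, hXY, mul_one, mul_one, hsum]
        linarith
      nlinarith [this, Real.rpow_nonneg hS0.le (2/p)]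
    linarith

lemma master (hp : 2 < p) {al be : ℝ} (hal : al ≠ 0) (hbe : be ≠ 0)
    (hn : |al| ^ p + |be| ^ p = 1) (z : ℝ × ℝ) :
    (al * |al|^(p-2) * z.1 + be * |be|^(p-2) * z.2)^2
      + (|al|^(p-2) * |be|^(p-2)) * (al * z.2 - be * z.1)^2 ≤ pnorm p z ^ 2 := by
  have hp0 : 0 < p := by linarith
  set P := |al| ^ (p-2) with hPd
  set Q := |be| ^ (p-2) with hQd
  have hal0 : 0 < |al| := abs_pos.mpr hal
  have hbe0 : 0 < |be| := abs_pos.mpr hbe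
  have hP : P * al^2 = |al| ^ p := by
    rw [hPd, ← sq_abs al, ← Real.rpow_natCast |al| 2, ← Real.rpow_add hal0]
    congr 1
    norm_num
  have hQ : Q * be^2 = |be| ^ p := by
    rw [hQd, ← sq_abs be, ← Real.rpow_natCast |be| 2, ← Real.rpow_add hbe0]
    congr 1
    norm_num
  have hn' : P * al^2 + Q * be^2 = 1 := by rw [hP, hQ]; exact hn
  have lhs_eq : (al * P * z.1 + be * Q * z.2)^2 + (P * Q) * (al * z.2 - be * z.1)^2
      = P * z.1^2 + Q * z.2^2 := by
    linear_combination (P * z.1^2 + Q * z.2^2) * hn'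
  have hPA : P = (|al| ^ p) ^ ((p-2)/p) := by
    rw [hPd, ← Real.rpow_mul (abs_nonneg al)]
    congr 1
    field_simp
  have hQB : Q = (|be| ^ p) ^ ((p-2)/p) := by
    rw [hQd, ← Real.rpow_mul (abs_nonneg be)]
    congr 1
    field_simp
  have hmc := master_core hp (Real.rpow_nonneg (abs_nonneg al) p)
    (Real.rpow_nonneg (abs_nonneg be) p) hn z.1 z.2
  rw [← hPA, ← hQB] at hmc
  have hz : pnorm p (z.1, z.2) = pnorm p z := by norm_num
  rw [hz] at hmc
  calc (al * P * z.1 + be * Q * z.2)^2 + (P * Q) * (al * z.2 - be * z.1)^2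
      = P * z.1^2 + Q * z.2^2 := lhs_eq
  _ ≤ pnorm p z ^ 2 := hmc



/-! ### existence of a norm attaining vector -/

lemma exists_attainer (hp : 0 < p) {T : Matrix (Fin 2) (Fin 2) ℝ}
    (hT : opNorm p 2 T = 1) :
    ∃ z₀ : ℝ × ℝ, pnorm p z₀ = 1 ∧ pnorm 2 (app T z₀) = 1 := by
  have cont_abs_rpow : Continuous fun x : ℝ => |x| ^ p := by
    apply continuous_iff_continuousAt.mpr
    intro x
    exact (Real.continuousAt_rpow_const |x| p (Or.inr hp.le)).comp continuous_abs.continuousAt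
  set Sp : Set (ℝ × ℝ) := {z : ℝ × ℝ | |z.1| ^ p + |z.2| ^ p = 1} with hSp
  have hf : Continuous fun z : ℝ × ℝ => |z.1| ^ p + |z.2| ^ p :=
    (cont_abs_rpow.comp continuous_fst).add (cont_abs_rpow.comp continuous_snd)
  have hclosed : IsClosed Sp := isClosed_eq hf continuous_const
  have hsub : Sp ⊆ (Set.Icc (-1) 1) ×ˢ (Set.Icc (-1) 1) := by
    intro z hz
    have h1 : (0:ℝ) ≤ |z.1| ^ p := Real.rpow_nonneg (abs_nonneg _) p
    have h2 : (0:ℝ) ≤ |z.2| ^ p := Real.rpow_nonneg (abs_nonneg _) p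
    have hz1 : |z.1| ≤ 1 := by
      by_contra h; push_neg at h
      have := Real.rpow_lt_rpow (by norm_num) h hp
      rw [Real.one_rpow] at this
      have hzz : |z.1| ^ p + |z.2| ^ p = 1 := hz
      linarith
    have hz2 : |z.2| ≤ 1 := by
      by_contra h; push_neg at h
      have := Real.rpow_lt_rpow (by norm_num) h hp
      rw [Real.one_rpow] at this
      have hzz : |z.1| ^ p + |z.2| ^ p = 1 := hz
      linarith
    exact ⟨abs_le.mp hz1, abs_le.mp hz2⟩
  have hcomp : IsCompact Sp :=
    IsCompact.of_isClosed_subset (isCompact_Icc.prod isCompact_Icc) hclosed hsub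
  have hne : Sp.Nonempty := by
    refine ⟨(1, 0), ?_⟩
    show |(1:ℝ)| ^ p + |(0:ℝ)| ^ p = 1
    simp [Real.zero_rpow (ne_of_gt hp)]
  set q : ℝ × ℝ → ℝ := fun z => pnorm 2 (app T z) with hq
  have hqc : Continuous q := by
    have : q = fun z : ℝ × ℝ => Real.sqrt ((app T z).1 ^ 2 + (app T z).2 ^ 2) := by
      funext z
      exact pnorm_two (app T z)
    rw [this]
    apply Real.continuous_sqrt.comp
    apply Continuous.add
    · apply Continuous.pow
      simp only [app_fst]
      exact (continuous_const.mul continuous_fst).add (continuous_const.mul continuous_snd)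
    · apply Continuous.pow
      simp only [app_snd]
      exact (continuous_const.mul continuous_fst).add (continuous_const.mul continuous_snd)
  obtain ⟨z₀, hz₀S, hmax'⟩ := hcomp.exists_isMaxOn hne hqc.continuousOn
  have hmax : ∀ z ∈ Sp, q z ≤ q z₀ := fun z hz => hmax' hz
  have hsup : opNorm p 2 T = q z₀ := by
    unfold opNorm
    apply le_antisymm
    · apply csSup_le
      · exact ⟨q (1, 0), ⟨(1, 0), pnorm_e1 hp, rfl⟩⟩
      · rintro c ⟨z, hz, rfl⟩
        exact hmax z ((pnorm_eq_one_iff hp z).mp hz)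
    · exact le_csSup (bddAbove_opset hp T) ⟨z₀, (pnorm_eq_one_iff hp z₀).mpr hz₀S, rfl⟩
  exact ⟨z₀, (pnorm_eq_one_iff hp z₀).mpr hz₀S, by rw [← hT, hsup]⟩



/-! ### scalar derivative facts for |x|^q -/

lemma hasDerivAt_abs_rpow (q : ℝ) {x : ℝ} (hx : x ≠ 0) :
    HasDerivAt (fun t : ℝ => |t| ^ q) (q * x * |x| ^ (q-2)) x := by
  rcases lt_or_gt_of_ne hx with hneg | hpos
  · have houter : HasDerivAt (fun t : ℝ => t ^ q) (q * (-x) ^ (q-1)) (-x) :=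
      Real.hasDerivAt_rpow_const (Or.inl (by linarith))
    have hinner : HasDerivAt (fun t : ℝ => -t) (-1) x := (hasDerivAt_id x).neg
    have hcomp := HasDerivAt.comp x houter hinner
    have heq : (fun t : ℝ => (-t) ^ q) =ᶠ[nhds x] (fun t : ℝ => |t| ^ q) := by
      filter_upwards [Iio_mem_nhds hneg] with t ht
      rw [abs_of_neg ht]
    have hder : q * (-x) ^ (q-1) * (-1) = q * x * |x| ^ (q-2) := by
      rw [abs_of_neg hneg, show q - 1 = (q-2) + 1 by ring,
        Real.rpow_add (by linarith : (0:ℝ) < -x), Real.rpow_one]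
      ring
    have := hcomp.congr_of_eventuallyEq heq.symm
    rw [hder] at this
    exact this
  · have hd : HasDerivAt (fun t : ℝ => t ^ q) (q * x ^ (q-1)) x :=
      Real.hasDerivAt_rpow_const (Or.inl hx)
    have heq : (fun t : ℝ => t ^ q) =ᶠ[nhds x] (fun t : ℝ => |t| ^ q) := by
      filter_upwards [Ioi_mem_nhds hpos] with t ht
      rw [abs_of_pos ht]
    have hder : q * x ^ (q-1) = q * x * |x| ^ (q-2) := by
      rw [abs_of_pos hpos, show q - 1 = (q-2) + 1 by ring,
        Real.rpow_add hpos, Real.rpow_one]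
      ring
    have := hd.congr_of_eventuallyEq heq.symm
    rw [hder] at this
    exact this

lemma hasDerivAt_phi' (q : ℝ) {x : ℝ} (hx : x ≠ 0) :
    HasDerivAt (fun t : ℝ => q * t * |t| ^ (q-2)) (q * (q-1) * |x| ^ (q-2)) x := by
  have habs : 0 < |x| := abs_pos.mpr hx
  have h1 : HasDerivAt (fun t : ℝ => t * |t| ^ (q-2))
      (1 * |x| ^ (q-2) + x * ((q-2) * x * |x| ^ (q-2-2))) x :=
    (hasDerivAt_id x).mul (hasDerivAt_abs_rpow (q-2) hx)
  have heq : 1 * |x| ^ (q-2) + x * ((q-2) * x * |x| ^ (q-2-2)) = (q-1) * |x| ^ (q-2) := by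
    have hx2 : x * x = |x| ^ (2:ℝ) := by
      rw [abs_rpow_two]; ring
    have : x * ((q-2) * x * |x| ^ (q-2-2)) = (q-2) * (|x| ^ (2:ℝ) * |x| ^ (q-2-2)) := by
      rw [← hx2]; ring
    rw [this, ← Real.rpow_add habs, show (2:ℝ) + (q-2-2) = q - 2 by ring]
    ring
  rw [heq] at h1
  have h2 := h1.const_mul q
  have : q * ((q-1) * |x| ^ (q-2)) = q * (q-1) * |x| ^ (q-2) := by ring
  rw [this] at h2
  have hfun : (fun t : ℝ => q * (t * |t| ^ (q-2))) = (fun t : ℝ => q * t * |t| ^ (q-2)) := by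
    funext t; ring
  rw [hfun] at h2
  exact h2

/-- Second-order Taylor upper bound for `|x|^q` around a nonzero point. -/
lemma taylor_upper (hq : 2 < q) {x : ℝ} (hx : x ≠ 0) :
    ∃ K : ℝ, 0 ≤ K ∧ ∀ h : ℝ, |h| ≤ |x|/2 →
      |x + h| ^ q ≤ |x| ^ q + q * x * |x| ^ (q-2) * h + K * h^2 := by
  have habs : 0 < |x| := abs_pos.mpr hx
  set δ := |x|/2 with hδ
  have hδ0 : 0 < δ := by positivity
  set Λ : ℝ := q * (q-1) * (3*|x|/2) ^ (q-2) with hΛ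
  have hΛ0 : 0 ≤ Λ := by
    have h0 : (0:ℝ) ≤ (3*|x|/2) ^ (q-2) := Real.rpow_nonneg (by positivity) _
    exact mul_nonneg (mul_nonneg (by linarith) (by linarith)) h0
  -- points in [x-δ, x+δ] are nonzero with |ξ| between |x|/2 and 3|x|/2
  have hmem : ∀ ξ ∈ Set.Icc (x-δ) (x+δ), ξ ≠ 0 ∧ |ξ| ≤ 3*|x|/2 := by
    intro ξ hξ
    obtain ⟨hl, hr⟩ := hξ
    rw [hδ] at hl hr
    rcases lt_or_gt_of_ne hx with hneg | hpos
    · have hxabs : |x| = -x := abs_of_neg hneg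
      rw [hxabs] at hl hr
      refine ⟨fun h0 => by rw [h0] at hr; linarith, ?_⟩
      rw [abs_le, hxabs]
      constructor <;> linarith
    · have hxabs : |x| = x := abs_of_pos hpos
      rw [hxabs] at hl hr
      refine ⟨fun h0 => by rw [h0] at hl; linarith, ?_⟩
      rw [abs_le, hxabs]
      constructor <;> linarith
  -- MVT for φ' on [x-δ, x+δ]
  have hmvt1 : ∀ ξ ∈ Set.Icc (x-δ) (x+δ),
      |q * ξ * |ξ| ^ (q-2) - q * x * |x| ^ (q-2)| ≤ Λ * |ξ - x| := by
    intro ξ hξ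
    have hconv : Convex ℝ (Set.Icc (x-δ) (x+δ)) := convex_Icc _ _
    have hd : ∀ η ∈ Set.Icc (x-δ) (x+δ),
        HasDerivWithinAt (fun t : ℝ => q * t * |t| ^ (q-2))
          (q * (q-1) * |η| ^ (q-2)) (Set.Icc (x-δ) (x+δ)) η :=
      fun η hη => (hasDerivAt_phi' q (hmem η hη).1).hasDerivWithinAt
    have hb : ∀ η ∈ Set.Icc (x-δ) (x+δ), ‖q * (q-1) * |η| ^ (q-2)‖ ≤ Λ := by
      intro η hη
      have h0 : (0:ℝ) ≤ |η| ^ (q-2) := Real.rpow_nonneg (abs_nonneg _) _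
      rw [Real.norm_eq_abs,
        abs_of_nonneg (mul_nonneg (mul_nonneg (by linarith) (by linarith)) h0)]
      have hmono : |η| ^ (q-2) ≤ (3*|x|/2) ^ (q-2) :=
        Real.rpow_le_rpow (abs_nonneg _) (hmem η hη).2 (by linarith)
      rw [hΛ]
      exact mul_le_mul_of_nonneg_left hmono (mul_nonneg (by linarith) (by linarith))
    have hxmem : x ∈ Set.Icc (x-δ) (x+δ) := ⟨by linarith, by linarith⟩
    have := Convex.norm_image_sub_le_of_norm_hasDerivWithin_le hd hb hconv hxmem hξ
    rw [Real.norm_eq_abs, Real.norm_eq_abs] at this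
    exact this
  refine ⟨Λ, hΛ0, ?_⟩
  intro h hh
  -- MVT for g(t) = |x+t|^q - φ'(x)·t on the segment from 0 to h
  set c := q * x * |x| ^ (q-2) with hc
  set g : ℝ → ℝ := fun t => |x + t| ^ q - c * t with hg
  have hseg : ∀ η ∈ Set.Icc (min 0 h) (max 0 h), x + η ∈ Set.Icc (x-δ) (x+δ) := by
    intro η hη
    obtain ⟨hl, hr⟩ := hη
    have h1 : -δ ≤ min 0 h := by
      rcases le_or_gt 0 h with hcase | hcase
      · simp [min_eq_left hcase]; linarith
      · rw [min_eq_right hcase.le]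
        have := abs_le.mp hh
        linarith [this.1]
    have h2 : max 0 h ≤ δ := by
      rcases le_or_gt 0 h with hcase | hcase
      · rw [max_eq_right hcase]
        have := abs_le.mp hh
        linarith [this.2]
      · simp [max_eq_left hcase.le]; linarith
    exact ⟨by linarith, by linarith⟩
  have hgd : ∀ η ∈ Set.Icc (min 0 h) (max 0 h),
      HasDerivWithinAt g (q * (x+η) * |x+η| ^ (q-2) - c) (Set.Icc (min 0 h) (max 0 h)) η := by
    intro η hη
    have hne : x + η ≠ 0 := (hmem _ (hseg η hη)).1
    have houter := hasDerivAt_abs_rpow q hne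
    have hinner : HasDerivAt (fun t : ℝ => x + t) 1 η := by
      simpa using (hasDerivAt_id η).const_add x
    have hcomp := HasDerivAt.comp η houter hinner
    have h1 : HasDerivAt (fun t : ℝ => |x + t| ^ q) (q * (x+η) * |x+η| ^ (q-2)) η := by
      have : (fun t : ℝ => |x + t| ^ q) = (fun t : ℝ => |t| ^ q) ∘ (fun t : ℝ => x + t) := rfl
      rw [this]
      simpa using hcomp
    have h2 : HasDerivAt (fun t : ℝ => c * t) c η := by
      simpa using (hasDerivAt_id η).const_mul c
    exact (h1.sub h2).hasDerivWithinAt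
  have hgb : ∀ η ∈ Set.Icc (min 0 h) (max 0 h),
      ‖q * (x+η) * |x+η| ^ (q-2) - c‖ ≤ Λ * |h| := by
    intro η hη
    rw [Real.norm_eq_abs]
    calc |q * (x+η) * |x+η| ^ (q-2) - c| ≤ Λ * |(x+η) - x| := hmvt1 _ (hseg η hη)
    _ = Λ * |η| := by congr 1; congr 1; ring
    _ ≤ Λ * |h| := by
        apply mul_le_mul_of_nonneg_left _ hΛ0
        obtain ⟨hl, hr⟩ := hη
        have hmin : -|h| ≤ min 0 h := by
          rcases le_or_gt 0 h with hcase | hcase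
          · rw [min_eq_left hcase]; exact neg_nonpos.mpr (abs_nonneg h)
          · rw [min_eq_right hcase.le]; exact neg_abs_le h
        have hmax : max 0 h ≤ |h| := by
          rcases le_or_gt 0 h with hcase | hcase
          · rw [max_eq_right hcase]; exact le_abs_self h
          · rw [max_eq_left hcase.le]; exact abs_nonneg h
        rw [abs_le]
        exact ⟨by linarith, by linarith⟩
  have h0mem : (0:ℝ) ∈ Set.Icc (min 0 h) (max 0 h) := ⟨min_le_left _ _, le_max_left _ _⟩
  have hhmem : h ∈ Set.Icc (min 0 h) (max 0 h) := ⟨min_le_right _ _, le_max_right _ _⟩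
  have := Convex.norm_image_sub_le_of_norm_hasDerivWithin_le hgd hgb (convex_Icc _ _) h0mem hhmem
  rw [Real.norm_eq_abs, Real.norm_eq_abs, sub_zero] at this
  have hg0 : g 0 = |x| ^ q := by rw [hg]; simp
  have hgh : g h = |x + h| ^ q - c * h := rfl
  rw [hgh, hg0] at this
  have habs2 : |(|x + h| ^ q - c * h) - |x| ^ q| ≥ (|x + h| ^ q - c * h) - |x| ^ q :=
    le_abs_self _
  have hsq : Λ * |h| * |h| = Λ * h^2 := by
    rw [show Λ * |h| * |h| = Λ * (|h| * |h|) by ring, abs_mul_abs_self h]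
    ring
  nlinarith [this, habs2, hsq]


/-! ### column kill lemmas -/

lemma rpow_two_over_p_le (hp : 2 < p) {u : ℝ} (hu : 0 ≤ u) : (1 + u) ^ (2/p) ≤ 1 + u := by
  have h1 : (1:ℝ) ≤ 1 + u := by linarith
  calc (1 + u) ^ (2/p) ≤ (1 + u) ^ (1:ℝ) := by
        apply Real.rpow_le_rpow_of_exponent_le h1
        rw [div_le_one (by linarith : (0:ℝ) < p)]
        linarith
  _ = 1 + u := Real.rpow_one _

lemma col2_zero (hp : 2 < p) {A : Matrix (Fin 2) (Fin 2) ℝ}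
    (hcontr : ∀ z : ℝ × ℝ, pnorm 2 (app A z) ≤ pnorm p z)
    (hcol : (A 0 0)^2 + (A 1 0)^2 = 1) : A 0 1 = 0 ∧ A 1 1 = 0 := by
  have hp0 : (0:ℝ) < p := by linarith
  have hforall : ∀ t : ℝ, 2*t*(A 0 0 * A 0 1 + A 1 0 * A 1 1)
      + t^2*((A 0 1)^2 + (A 1 1)^2) ≤ |t| ^ p := by
    intro t
    have h := hcontr (1, t)
    have hnn : 0 ≤ pnorm p (1, t) := pnorm_nonneg hp0 _
    rw [pnorm_two_le_iff hnn] at h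
    have htp : (0:ℝ) ≤ |t| ^ p := Real.rpow_nonneg (abs_nonneg t) p
    have hsq : pnorm p ((1:ℝ), t) ^ 2 = (1 + |t| ^ p) ^ (2/p) := by
      rw [pnorm_sq hp0]
      norm_num
    have hb : (1 + |t| ^ p) ^ (2/p) ≤ 1 + |t| ^ p := rpow_two_over_p_le hp htp
    rw [hsq] at h
    have hfst : (app A ((1:ℝ), t)).1 = A 0 0 + A 0 1 * t := by rw [app_fst]; ring_nf
    have hsnd : (app A ((1:ℝ), t)).2 = A 1 0 + A 1 1 * t := by rw [app_snd]; ring_nf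
    rw [hfst, hsnd] at h
    have hexp : (A 0 0 + A 0 1*t)^2 + (A 1 0 + A 1 1*t)^2
        = 1 + (2*t*(A 0 0 * A 0 1 + A 1 0 * A 1 1) + t^2*((A 0 1)^2 + (A 1 1)^2)) := by
      linear_combination hcol
    linarith
  have hU := quad_kill hp (by positivity) hforall
  constructor
  · have h1 : (A 0 1)^2 = 0 := by nlinarith [sq_nonneg (A 0 1), sq_nonneg (A 1 1)]
    exact pow_eq_zero_iff two_ne_zero |>.mp h1
  · have h1 : (A 1 1)^2 = 0 := by nlinarith [sq_nonneg (A 0 1), sq_nonneg (A 1 1)]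
    exact pow_eq_zero_iff two_ne_zero |>.mp h1

lemma col1_zero (hp : 2 < p) {A : Matrix (Fin 2) (Fin 2) ℝ}
    (hcontr : ∀ z : ℝ × ℝ, pnorm 2 (app A z) ≤ pnorm p z)
    (hcol : (A 0 1)^2 + (A 1 1)^2 = 1) : A 0 0 = 0 ∧ A 1 0 = 0 := by
  have hp0 : (0:ℝ) < p := by linarith
  have hforall : ∀ t : ℝ, 2*t*(A 0 1 * A 0 0 + A 1 1 * A 1 0)
      + t^2*((A 0 0)^2 + (A 1 0)^2) ≤ |t| ^ p := by
    intro t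
    have h := hcontr (t, 1)
    have hnn : 0 ≤ pnorm p (t, 1) := pnorm_nonneg hp0 _
    rw [pnorm_two_le_iff hnn] at h
    have htp : (0:ℝ) ≤ |t| ^ p := Real.rpow_nonneg (abs_nonneg t) p
    have hsq : pnorm p (t, (1:ℝ)) ^ 2 = (1 + |t| ^ p) ^ (2/p) := by
      rw [pnorm_sq hp0]
      norm_num
      rw [add_comm]
    have hb : (1 + |t| ^ p) ^ (2/p) ≤ 1 + |t| ^ p := rpow_two_over_p_le hp htp
    rw [hsq] at h
    have hfst : (app A (t, (1:ℝ))).1 = A 0 1 + A 0 0 * t := by rw [app_fst]; ring_nf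
    have hsnd : (app A (t, (1:ℝ))).2 = A 1 1 + A 1 0 * t := by rw [app_snd]; ring_nf
    rw [hfst, hsnd] at h
    have hexp : (A 0 1 + A 0 0*t)^2 + (A 1 1 + A 1 0*t)^2
        = 1 + (2*t*(A 0 1 * A 0 0 + A 1 1 * A 1 0) + t^2*((A 0 0)^2 + (A 1 0)^2)) := by
      linear_combination hcol
    linarith
  have hU := quad_kill hp (by positivity) hforall
  constructor
  · have h1 : (A 0 0)^2 = 0 := by nlinarith [sq_nonneg (A 0 0), sq_nonneg (A 1 0)]
    exact pow_eq_zero_iff two_ne_zero |>.mp h1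
  · have h1 : (A 1 0)^2 = 0 := by nlinarith [sq_nonneg (A 0 0), sq_nonneg (A 1 0)]
    exact pow_eq_zero_iff two_ne_zero |>.mp h1

/-! ### matrix algebra helpers -/

lemma app_add (X Y : Matrix (Fin 2) (Fin 2) ℝ) (z : ℝ × ℝ) :
    app (X + Y) z = ((app X z).1 + (app Y z).1, (app X z).2 + (app Y z).2) := by
  refine Prod.ext ?_ ?_ <;>
    simp only [app_fst, app_snd, Matrix.add_apply] <;> ring

lemma app_sub (X Y : Matrix (Fin 2) (Fin 2) ℝ) (z : ℝ × ℝ) :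
    app (X - Y) z = ((app X z).1 - (app Y z).1, (app X z).2 - (app Y z).2) := by
  refine Prod.ext ?_ ?_ <;>
    simp only [app_fst, app_snd, Matrix.sub_apply] <;> ring

lemma app_smul_mat (c : ℝ) (X : Matrix (Fin 2) (Fin 2) ℝ) (z : ℝ × ℝ) :
    app (c • X) z = (c * (app X z).1, c * (app X z).2) := by
  refine Prod.ext ?_ ?_ <;>
    simp only [app_fst, app_snd, Matrix.smul_apply, smul_eq_mul] <;> ring

lemma tensor_entries (u v : ℝ × ℝ) :
    (tensor u v) 0 0 = v.1 * u.1 ∧ (tensor u v) 0 1 = v.1 * u.2 ∧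
    (tensor u v) 1 0 = v.2 * u.1 ∧ (tensor u v) 1 1 = v.2 * u.2 := by
  unfold tensor
  refine ⟨?_, ?_, ?_, ?_⟩ <;> simp

/-! ### the off-axis perturbation -/

set_option maxHeartbeats 1000000 in
lemma off_axis_perturb (hp : 2 < p) {T : Matrix (Fin 2) (Fin 2) ℝ} {al be : ℝ}
    (hal : al ≠ 0) (hbe : be ≠ 0)
    (hcontr : ∀ z : ℝ × ℝ, pnorm 2 (app T z) ≤ pnorm p z)
    (hatt1 : pnorm p (al, be) = 1) (hatt2 : pnorm 2 (app T (al, be)) = 1)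
    (hNoPair : ∀ z w : ℝ × ℝ, LinearIndependent ℝ ![z, w] →
      ¬(pnorm 2 (app T z) = pnorm p z ∧ pnorm 2 (app T w) = pnorm p w)) :
    ∃ E : Matrix (Fin 2) (Fin 2) ℝ, E ≠ 0 ∧
      (∀ z : ℝ × ℝ, pnorm 2 (app (T + E) z) ≤ pnorm p z) ∧
      (∀ z : ℝ × ℝ, pnorm 2 (app (T - E) z) ≤ pnorm p z) := by
  have hp0 : (0:ℝ) < p := by linarith
  have hal0 : 0 < |al| := abs_pos.mpr hal
  have hbe0 : 0 < |be| := abs_pos.mpr hbe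
  have hn : |al| ^ p + |be| ^ p = 1 := (pnorm_eq_one_iff hp0 _).mp hatt1
  set a : ℝ := al * |al| ^ (p-2) with ha
  set b : ℝ := be * |be| ^ (p-2) with hb
  have hPa : a * al = |al| ^ p := by
    have h1 : a * al = |al|^(p-2) * al^2 := by rw [ha]; ring
    rw [h1, ← sq_abs al, ← Real.rpow_natCast |al| 2, ← Real.rpow_add hal0]
    norm_num
  have hQb : b * be = |be| ^ p := by
    have h1 : b * be = |be|^(p-2) * be^2 := by rw [hb]; ring
    rw [h1, ← sq_abs be, ← Real.rpow_natCast |be| 2, ← Real.rpow_add hbe0]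
    norm_num
  have habb : al * a + be * b = 1 := by linear_combination hPa + hQb + hn
  set c : ℝ := (app T (al, be)).1 with hc
  set d : ℝ := (app T (al, be)).2 with hd
  have hcd : c^2 + d^2 = 1 := by
    have h1 := (pnorm_two_eq_iff (by norm_num : (0:ℝ) ≤ 1)).mp hatt2
    rw [← hc, ← hd] at h1
    norm_num at h1
    exact h1
  set w1 : ℝ := (app T (-b, a)).1 with hw1d
  set w2 : ℝ := (app T (-b, a)).2 with hw2d
  have hcT : c = T 0 0 * al + T 0 1 * be := by rw [hc, app_fst]
  have hdT : d = T 1 0 * al + T 1 1 * be := by rw [hd, app_snd]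
  have hw1T : w1 = T 0 0 * (-b) + T 0 1 * a := by rw [hw1d, app_fst]
  have hw2T : w2 = T 1 0 * (-b) + T 1 1 * a := by rw [hw2d, app_snd]
  have hdec1 : ∀ z : ℝ × ℝ, (a*z.1 + b*z.2) * al - (al*z.2 - be*z.1) * b = z.1 :=
    fun z => by linear_combination z.1 * habb
  have hdec2 : ∀ z : ℝ × ℝ, (a*z.1 + b*z.2) * be + (al*z.2 - be*z.1) * a = z.2 :=
    fun z => by linear_combination z.2 * habb
  have happ1 : ∀ z : ℝ × ℝ, (app T z).1 = (a*z.1 + b*z.2) * c + (al*z.2 - be*z.1) * w1 := by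
    intro z
    rw [app_fst, hcT, hw1T]
    linear_combination (-(T 0 0)) * hdec1 z - (T 0 1) * hdec2 z
  have happ2 : ∀ z : ℝ × ℝ, (app T z).2 = (a*z.1 + b*z.2) * d + (al*z.2 - be*z.1) * w2 := by
    intro z
    rw [app_snd, hdT, hw2T]
    linear_combination (-(T 1 0)) * hdec1 z - (T 1 1) * hdec2 z
  set e : ℝ := w1*c + w2*d with he_def
  set s : ℝ := -w1*d + w2*c with hs_def
  have hw1e : w1 = e*c - s*d := by rw [he_def, hs_def]; linear_combination (-w1) * hcd
  have hw2e : w2 = e*d + s*c := by rw [he_def, hs_def]; linear_combination (-w2) * hcd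
  -- Step: e = 0
  obtain ⟨K1, hK1, hT1⟩ := taylor_upper hp hal
  obtain ⟨K2, hK2, hT2⟩ := taylor_upper hp hbe
  set K : ℝ := K1*b^2 + K2*a^2 with hKdef
  have hK0 : 0 ≤ K := by
    rw [hKdef]
    positivity
  set δ : ℝ := min (|al|/2/(|b|+1)) (|be|/2/(|a|+1)) with hδdef
  have hδ0 : 0 < δ := lt_min (by positivity) (by positivity)
  have hM : ∀ t : ℝ, |t| ≤ δ → (1 + t*e)^2 + t^2*s^2 ≤ 1 + K * t^2 := by
    intro t ht
    have hbb : 0 < |b| + 1 := by positivity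
    have haa : 0 < |a| + 1 := by positivity
    have hδ1 : δ * (|b|+1) ≤ |al| / 2 := by
      have h1 : δ ≤ |al|/2/(|b|+1) := min_le_left _ _
      have h2 := mul_le_mul_of_nonneg_right h1 hbb.le
      have h3 : |al|/2/(|b|+1) * (|b|+1) = |al| / 2 := div_mul_cancel₀ _ (ne_of_gt hbb)
      linarith [h2, h3.le]
    have hδ2 : δ * (|a|+1) ≤ |be| / 2 := by
      have h1 : δ ≤ |be|/2/(|a|+1) := min_le_right _ _
      have h2 := mul_le_mul_of_nonneg_right h1 haa.le
      have h3 : |be|/2/(|a|+1) * (|a|+1) = |be| / 2 := div_mul_cancel₀ _ (ne_of_gt haa)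
      linarith [h2, h3.le]
    have hh1 : |(-(t*b))| ≤ |al| / 2 := by
      rw [abs_neg, abs_mul]
      calc |t| * |b| ≤ δ * (|b|+1) := by
            apply mul_le_mul ht (by linarith) (abs_nonneg b) hδ0.le
      _ ≤ |al| / 2 := hδ1
    have hh2 : |t*a| ≤ |be| / 2 := by
      rw [abs_mul]
      calc |t| * |a| ≤ δ * (|a|+1) := by
            apply mul_le_mul ht (by linarith) (abs_nonneg a) hδ0.le
      _ ≤ |be| / 2 := hδ2
    have e1 := hT1 (-(t*b)) hh1
    have e2 := hT2 (t*a) hh2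
    have hcancel : p * al * |al|^(p-2) * (-(t*b)) + p * be * |be|^(p-2) * (t*a) = 0 := by
      rw [ha, hb]; ring
    have hS : |al + -(t*b)| ^ p + |be + t*a| ^ p ≤ 1 + K * t^2 := by
      have hKt : K1 * (-(t*b))^2 + K2 * (t*a)^2 = K * t^2 := by rw [hKdef]; ring
      linarith [e1, e2, hcancel, hKt, hn]
    have hzt : pnorm 2 (app T (al + -(t*b), be + t*a)) ≤ pnorm p (al + -(t*b), be + t*a) :=
      hcontr _
    have hnn : 0 ≤ pnorm p (al + -(t*b), be + t*a) := pnorm_nonneg hp0 _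
    rw [pnorm_two_le_iff hnn] at hzt
    have hMle : pnorm p (al + -(t*b), be + t*a) ^ 2 ≤ 1 + K * t^2 := by
      rw [pnorm_sq hp0]
      have hS0 : (0:ℝ) ≤ |(al + -(t*b), be + t*a).1| ^ p + |(al + -(t*b), be + t*a).2| ^ p := by
        have u1 : (0:ℝ) ≤ |(al + -(t*b), be + t*a).1| ^ p := Real.rpow_nonneg (abs_nonneg _) p
        have u2 : (0:ℝ) ≤ |(al + -(t*b), be + t*a).2| ^ p := Real.rpow_nonneg (abs_nonneg _) p
        linarith
      calc (|(al + -(t*b), be + t*a).1| ^ p + |(al + -(t*b), be + t*a).2| ^ p) ^ (2/p)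
          ≤ (1 + K * t^2) ^ (2/p) := by
            apply Real.rpow_le_rpow hS0 _ (by positivity)
            exact hS
      _ ≤ 1 + K * t^2 := rpow_two_over_p_le hp (by positivity)
    have hF : a*(al + -(t*b)) + b*(be + t*a) = 1 := by linear_combination habb
    have hG : al*(be + t*a) - be*(al + -(t*b)) = t := by linear_combination t * habb
    have hfst := happ1 (al + -(t*b), be + t*a)
    have hsnd := happ2 (al + -(t*b), be + t*a)
    dsimp only at hfst hsnd
    rw [hF, hG] at hfst hsnd
    rw [hfst, hsnd] at hzt
    have hexp : (1 * c + t * w1)^2 + (1 * d + t * w2)^2 = 1 + 2*t*e + t^2*(e^2+s^2) := by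
      rw [he_def, hs_def]
      linear_combination (1 - t^2*(w1^2+w2^2)) * hcd
    linarith [hzt, hMle, hexp]
  have he : e = 0 := by
    have hside : ∀ τ : ℝ, 0 < τ → τ ≤ δ → |2*e| ≤ K * τ := by
      intro τ hτ0 hτδ
      have hp1 := hM τ (by rw [abs_of_pos hτ0]; exact hτδ)
      have hp2 := hM (-τ) (by rw [abs_neg, abs_of_pos hτ0]; exact hτδ)
      have h1 : 2*τ*e ≤ K*τ^2 := by nlinarith only [hp1, sq_nonneg (τ*e), sq_nonneg (τ*s)]
      have h2 : -(2*τ*e) ≤ K*τ^2 := by nlinarith only [hp2, sq_nonneg (τ*e), sq_nonneg (τ*s)]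
      rw [abs_le]
      constructor
      · nlinarith only [h2, hτ0]
      · nlinarith only [h1, hτ0]
    by_contra he0
    have habs : 0 < |2*e| := abs_pos.mpr (by
      intro hcon
      apply he0
      linarith)
    set τ : ℝ := min δ (|2*e|/(2*(K+1))) with hτdef
    have hτ0 : 0 < τ := lt_min hδ0 (by positivity)
    have hτδ : τ ≤ δ := min_le_left _ _
    have hKτ : K * τ ≤ K * (|2*e|/(2*(K+1))) :=
      mul_le_mul_of_nonneg_left (min_le_right _ _) hK0
    have h2K : (0:ℝ) < 2*(K+1) := by linarith
    have hlt : K * (|2*e|/(2*(K+1))) < |2*e| := by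
      rw [← mul_div_assoc]
      rw [div_lt_iff₀ h2K]
      nlinarith only [habs, hK0]
    have hfin := hside τ hτ0 hτδ
    exact absurd (lt_of_le_of_lt (hfin.trans hKτ) hlt) (lt_irrefl _)
  -- Step: s^2 < C
  set C : ℝ := |al|^(p-2) * |be|^(p-2) with hCdef
  have hC0 : 0 < C := mul_pos (Real.rpow_pos_of_pos hal0 _) (Real.rpow_pos_of_pos hbe0 _)
  have hab : a * b = al * be * C := by rw [ha, hb, hCdef]; ring
  have hsq1 : (al*a + be*b)^2 = 1 := by rw [habb]; norm_num
  have hstar1 : pnorm p (-al, be) = 1 := by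
    rw [pnorm_eq_one_iff hp0]
    dsimp only
    rw [abs_neg]
    exact hn
  have hw1v : w1 = -(s*d) := by rw [hw1e, he]; ring
  have hw2v : w2 = s*c := by rw [hw2e, he]; ring
  have hztst := hcontr (-al, be)
  rw [hstar1] at hztst
  have hsqst : (app T (-al, be)).1^2 + (app T (-al, be)).2^2 ≤ 1 := by
    have h1 := (pnorm_two_le_iff (by norm_num : (0:ℝ) ≤ 1)).mp hztst
    norm_num at h1
    exact h1
  have hval : (app T (-al, be)).1^2 + (app T (-al, be)).2^2
      = (b*be - a*al)^2 + s^2*(2*al*be)^2 := by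
    rw [happ1 (-al, be), happ2 (-al, be)]
    dsimp only
    rw [hw1v, hw2v]
    linear_combination ((a*(-al)+b*be)^2 + (s*(al*be - be*(-al)))^2) * hcd
  have hid : 1 - (b*be - a*al)^2 = 4*al^2*be^2*C := by
    linear_combination 4*al*be*hab - hsq1
  have hs2C : s^2 ≤ C := by
    have hpos : (0:ℝ) < 4*(al^2*be^2) := by positivity
    have h4 : s^2 * (4*(al^2*be^2)) ≤ C * (4*(al^2*be^2)) := by
      linarith [hsqst, hval.le, hval.ge, hid]
    exact le_of_mul_le_mul_right h4 hpos
  have hslt : s^2 < C := by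
    rcases lt_or_eq_of_le hs2C with h | h
    · exact h
    · exfalso
      have hattst : pnorm 2 (app T (-al, be)) = 1 := by
        rw [pnorm_two_eq_iff (by norm_num : (0:ℝ) ≤ 1)]
        rw [hval, h]
        norm_num
        linear_combination -hid
      have hdet : (al, be).1 * (-al, be).2 - (al, be).2 * (-al, be).1 ≠ 0 := by
        dsimp only
        intro hcon
        have : 2*al*be = 0 := by linarith [hcon]
        rcases mul_eq_zero.mp this with h' | h'
        · rcases mul_eq_zero.mp h' with h'' | h''
          · norm_num at h''
          · exact hal h''
        · exact hbe h'
      exact hNoPair (al, be) (-al, be) (li_of_det hdet)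
        ⟨by rw [hatt2, hatt1], by rw [hattst, hstar1]⟩
  -- the perturbation
  have hsC : |s| < Real.sqrt C := by
    have h1 : Real.sqrt (s^2) < Real.sqrt C := Real.sqrt_lt_sqrt (sq_nonneg s) hslt
    rwa [Real.sqrt_sq_eq_abs] at h1
  set ε : ℝ := (Real.sqrt C - |s|)/2 with hεdef
  have hε0 : 0 < ε := by rw [hεdef]; linarith
  have hbnd : (|s| + ε)^2 < C := by
    have h1 : |s| + ε < Real.sqrt C := by rw [hεdef]; linarith
    have h2 : (|s| + ε)^2 < (Real.sqrt C)^2 := by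
      nlinarith only [h1, abs_nonneg s, hε0, Real.sqrt_nonneg C]
    rwa [Real.sq_sqrt hC0.le] at h2
  set A0 : Matrix (Fin 2) (Fin 2) ℝ := tensor ((-be, al) : ℝ × ℝ) ((-d, c) : ℝ × ℝ) with hA0
  have e00 : A0 0 0 = -d * -be := by rw [hA0]; exact (tensor_entries _ _).1
  have e01 : A0 0 1 = -d * al := by rw [hA0]; exact (tensor_entries _ _).2.1
  have e10 : A0 1 0 = c * -be := by rw [hA0]; exact (tensor_entries _ _).2.2.1
  have e11 : A0 1 1 = c * al := by rw [hA0]; exact (tensor_entries _ _).2.2.2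
  have happA1 : ∀ z : ℝ × ℝ, (app A0 z).1 = (al*z.2 - be*z.1) * -d := by
    intro z
    rw [app_fst, e00, e01]
    ring
  have happA2 : ∀ z : ℝ × ℝ, (app A0 z).2 = (al*z.2 - be*z.1) * c := by
    intro z
    rw [app_snd, e10, e11]
    ring
  refine ⟨ε • A0, ?_, ?_, ?_⟩
  · intro hE0
    have h00 : (ε • A0) 0 0 = 0 := by rw [hE0]; simp
    have h11 : (ε • A0) 1 1 = 0 := by rw [hE0]; simp
    rw [Matrix.smul_apply, e00, smul_eq_mul] at h00
    rw [Matrix.smul_apply, e11, smul_eq_mul] at h11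
    have hd0 : d = 0 := by
      rcases mul_eq_zero.mp h00 with h' | h'
      · exact absurd h' (ne_of_gt hε0)
      · have : d * be = 0 := by linarith [h']
        rcases mul_eq_zero.mp this with h'' | h''
        · exact h''
        · exact absurd h'' hbe
    have hc0 : c = 0 := by
      rcases mul_eq_zero.mp h11 with h' | h'
      · exact absurd h' (ne_of_gt hε0)
      · rcases mul_eq_zero.mp h' with h'' | h''
        · exact h''
        · exact absurd h'' hal
    rw [hc0, hd0] at hcd
    norm_num at hcd
  · intro z
    rw [pnorm_two_le_iff (pnorm_nonneg hp0 z)]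
    have h1 : (app (T + ε • A0) z).1
        = ((a*z.1+b*z.2)*c + (al*z.2-be*z.1)*w1) + ε * ((al*z.2 - be*z.1) * -d) := by
      rw [app_add]
      dsimp only
      rw [happ1 z]
      congr 1
      rw [app_smul_mat]
      dsimp only
      rw [happA1 z]
    have h2 : (app (T + ε • A0) z).2
        = ((a*z.1+b*z.2)*d + (al*z.2-be*z.1)*w2) + ε * ((al*z.2 - be*z.1) * c) := by
      rw [app_add]
      dsimp only
      rw [happ2 z]
      congr 1
      rw [app_smul_mat]
      dsimp only
      rw [happA2 z]
    rw [h1, h2, hw1v, hw2v]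
    have hsq : (((a*z.1+b*z.2)*c + (al*z.2-be*z.1)*(-(s*d))) + ε * ((al*z.2 - be*z.1) * -d))^2
        + (((a*z.1+b*z.2)*d + (al*z.2-be*z.1)*(s*c)) + ε * ((al*z.2 - be*z.1) * c))^2
        = (a*z.1+b*z.2)^2 + (s+ε)^2 * (al*z.2-be*z.1)^2 := by
      linear_combination ((a*z.1+b*z.2)^2 + (s+ε)^2*(al*z.2-be*z.1)^2) * hcd
    rw [hsq]
    have hm := master hp hal hbe hn z
    rw [← ha, ← hb, ← hCdef] at hm
    have hcoef : (s+ε)^2 ≤ (|s|+ε)^2 := by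
      nlinarith only [le_abs_self s, neg_abs_le s, hε0, sq_abs s]
    have h9 : (s+ε)^2 * (al*z.2-be*z.1)^2 ≤ C * (al*z.2-be*z.1)^2 :=
      mul_le_mul_of_nonneg_right (by linarith [hcoef, hbnd]) (sq_nonneg _)
    linarith [hm, h9]
  · intro z
    rw [pnorm_two_le_iff (pnorm_nonneg hp0 z)]
    have h1 : (app (T - ε • A0) z).1
        = ((a*z.1+b*z.2)*c + (al*z.2-be*z.1)*w1) - ε * ((al*z.2 - be*z.1) * -d) := by
      rw [app_sub]
      dsimp only
      rw [happ1 z]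
      congr 1
      rw [app_smul_mat]
      dsimp only
      rw [happA1 z]
    have h2 : (app (T - ε • A0) z).2
        = ((a*z.1+b*z.2)*d + (al*z.2-be*z.1)*w2) - ε * ((al*z.2 - be*z.1) * c) := by
      rw [app_sub]
      dsimp only
      rw [happ2 z]
      congr 1
      rw [app_smul_mat]
      dsimp only
      rw [happA2 z]
    rw [h1, h2, hw1v, hw2v]
    have hsq : (((a*z.1+b*z.2)*c + (al*z.2-be*z.1)*(-(s*d))) - ε * ((al*z.2 - be*z.1) * -d))^2
        + (((a*z.1+b*z.2)*d + (al*z.2-be*z.1)*(s*c)) - ε * ((al*z.2 - be*z.1) * c))^2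
        = (a*z.1+b*z.2)^2 + (s-ε)^2 * (al*z.2-be*z.1)^2 := by
      linear_combination ((a*z.1+b*z.2)^2 + (s-ε)^2*(al*z.2-be*z.1)^2) * hcd
    rw [hsq]
    have hm := master hp hal hbe hn z
    rw [← ha, ← hb, ← hCdef] at hm
    have hcoef : (s-ε)^2 ≤ (|s|+ε)^2 := by
      nlinarith only [le_abs_self s, neg_abs_le s, hε0, sq_abs s]
    have h9 : (s-ε)^2 * (al*z.2-be*z.1)^2 ≤ C * (al*z.2-be*z.1)^2 :=
      mul_le_mul_of_nonneg_right (by linarith [hcoef, hbnd]) (sq_nonneg _)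
    linarith [hm, h9]


end Stmt4Aux

open Stmt4Aux in
set_option maxHeartbeats 1000000 in
/-- Extreme contractions from ℓ^p_2 to ℓ²_2 for p > 2. -/
theorem stmt_4 (p : ℝ) (hp : 2 < p) (T : Matrix (Fin 2) (Fin 2) ℝ)
    (hT : opNorm p 2 T = 1) :
    T ∈ Set.extremePoints ℝ (unitBall p 2) ↔
      ((∃ z w : ℝ × ℝ, LinearIndependent ℝ ![z, w] ∧
          pnorm 2 (app T z) = pnorm p z ∧ pnorm 2 (app T w) = pnorm p w) ∨
       (∃ y : ℝ × ℝ, pnorm 2 y = 1 ∧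
          (T = tensor ((1 : ℝ), (0 : ℝ)) y ∨ T = tensor ((0 : ℝ), (1 : ℝ)) y))) := by
  have hp0 : (0:ℝ) < p := by linarith
  constructor
  · -- forward direction
    intro hext
    by_contra hcon
    obtain ⟨hnota, hnotb⟩ := not_or.mp hcon
    have hNoPair : ∀ z w : ℝ × ℝ, LinearIndependent ℝ ![z, w] →
        ¬(pnorm 2 (app T z) = pnorm p z ∧ pnorm 2 (app T w) = pnorm p w) := by
      intro z w hli hpq
      exact hnota ⟨z, w, hli, hpq.1, hpq.2⟩
    have hcontr : ∀ z : ℝ × ℝ, pnorm 2 (app T z) ≤ pnorm p z :=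
      pnorm_app_le hp0 hT.le
    obtain ⟨z₀, hz1, hz2⟩ := exists_attainer hp0 hT
    have habs_one : ∀ x : ℝ, |x| ^ p = 1 → x^2 = 1 := by
      intro x hx
      have h1 : |x| = 1 := by
        rcases lt_trichotomy |x| 1 with h | h | h
        · exfalso
          have := Real.rpow_lt_rpow (abs_nonneg x) h hp0
          rw [Real.one_rpow] at this
          linarith
        · exact h
        · exfalso
          have := Real.rpow_lt_rpow (by norm_num) h hp0
          rw [Real.one_rpow] at this
          linarith
      calc x^2 = |x|^2 := (sq_abs x).symm
      _ = 1 := by rw [h1]; norm_num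
    by_cases hα : z₀.1 = 0
    · by_cases hβ : z₀.2 = 0
      · have hz0 : z₀ = 0 := Prod.ext hα hβ
        rw [hz0, pnorm_zero' hp0] at hz1
        norm_num at hz1
      · -- z₀ on the second axis : T = tensor (0,1) y
        have hsum1 := (pnorm_eq_one_iff hp0 z₀).mp hz1
        rw [hα] at hsum1
        rw [abs_zero, Real.zero_rpow (ne_of_gt hp0)] at hsum1
        have hb1 : |z₀.2| ^ p = 1 := by linarith
        have hsq2 : z₀.2^2 = 1 := habs_one _ hb1
        have happ0 := (pnorm_two_eq_iff (by norm_num : (0:ℝ) ≤ 1)).mp hz2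
        rw [app_fst, app_snd, hα] at happ0
        have hcol : (T 0 1)^2 + (T 1 1)^2 = 1 := by
          have hexpand : (T 0 0 * 0 + T 0 1 * z₀.2)^2 + (T 1 0 * 0 + T 1 1 * z₀.2)^2
              = ((T 0 1)^2 + (T 1 1)^2) * z₀.2^2 := by ring
          rw [hexpand, hsq2] at happ0
          norm_num at happ0
          linarith
        obtain ⟨h00, h10⟩ := col1_zero hp hcontr hcol
        have hyp : pnorm 2 ((T 0 1, T 1 1) : ℝ × ℝ) = 1 := by
          rw [pnorm_two_eq_iff (by norm_num : (0:ℝ) ≤ 1)]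
          norm_num
          exact hcol
        have g00 : tensor ((0:ℝ), (1:ℝ)) ((T 0 1, T 1 1) : ℝ × ℝ) 0 0 = 0 := by
          rw [(tensor_entries _ _).1]; norm_num
        have g01 : tensor ((0:ℝ), (1:ℝ)) ((T 0 1, T 1 1) : ℝ × ℝ) 0 1 = T 0 1 := by
          rw [(tensor_entries _ _).2.1]; norm_num
        have g10 : tensor ((0:ℝ), (1:ℝ)) ((T 0 1, T 1 1) : ℝ × ℝ) 1 0 = 0 := by
          rw [(tensor_entries _ _).2.2.1]; norm_num
        have g11 : tensor ((0:ℝ), (1:ℝ)) ((T 0 1, T 1 1) : ℝ × ℝ) 1 1 = T 1 1 := by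
          rw [(tensor_entries _ _).2.2.2]; norm_num
        have hTeq : T = tensor ((0:ℝ), (1:ℝ)) ((T 0 1, T 1 1) : ℝ × ℝ) := by
          ext i j
          fin_cases i <;> fin_cases j
          · exact h00.trans g00.symm
          · exact g01.symm
          · exact h10.trans g10.symm
          · exact g11.symm
        exact hnotb ⟨(T 0 1, T 1 1), hyp, Or.inr hTeq⟩
    · by_cases hβ : z₀.2 = 0
      · -- z₀ on the first axis : T = tensor (1,0) y
        have hsum1 := (pnorm_eq_one_iff hp0 z₀).mp hz1
        rw [hβ] at hsum1
        rw [abs_zero, Real.zero_rpow (ne_of_gt hp0)] at hsum1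
        have hb1 : |z₀.1| ^ p = 1 := by linarith
        have hsq2 : z₀.1^2 = 1 := habs_one _ hb1
        have happ0 := (pnorm_two_eq_iff (by norm_num : (0:ℝ) ≤ 1)).mp hz2
        rw [app_fst, app_snd, hβ] at happ0
        have hcol : (T 0 0)^2 + (T 1 0)^2 = 1 := by
          have hexpand : (T 0 0 * z₀.1 + T 0 1 * 0)^2 + (T 1 0 * z₀.1 + T 1 1 * 0)^2
              = ((T 0 0)^2 + (T 1 0)^2) * z₀.1^2 := by ring
          rw [hexpand, hsq2] at happ0
          norm_num at happ0
          linarith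
        obtain ⟨h01, h11⟩ := col2_zero hp hcontr hcol
        have hyp : pnorm 2 ((T 0 0, T 1 0) : ℝ × ℝ) = 1 := by
          rw [pnorm_two_eq_iff (by norm_num : (0:ℝ) ≤ 1)]
          norm_num
          exact hcol
        have g00 : tensor ((1:ℝ), (0:ℝ)) ((T 0 0, T 1 0) : ℝ × ℝ) 0 0 = T 0 0 := by
          rw [(tensor_entries _ _).1]; norm_num
        have g01 : tensor ((1:ℝ), (0:ℝ)) ((T 0 0, T 1 0) : ℝ × ℝ) 0 1 = 0 := by
          rw [(tensor_entries _ _).2.1]; norm_num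
        have g10 : tensor ((1:ℝ), (0:ℝ)) ((T 0 0, T 1 0) : ℝ × ℝ) 1 0 = T 1 0 := by
          rw [(tensor_entries _ _).2.2.1]; norm_num
        have g11 : tensor ((1:ℝ), (0:ℝ)) ((T 0 0, T 1 0) : ℝ × ℝ) 1 1 = 0 := by
          rw [(tensor_entries _ _).2.2.2]; norm_num
        have hTeq : T = tensor ((1:ℝ), (0:ℝ)) ((T 0 0, T 1 0) : ℝ × ℝ) := by
          ext i j
          fin_cases i <;> fin_cases j
          · exact g00.symm
          · exact h01.trans g01.symm
          · exact g10.symm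
          · exact h11.trans g11.symm
        exact hnotb ⟨(T 0 0, T 1 0), hyp, Or.inl hTeq⟩
      · -- off-axis case
        have hz1' : pnorm p (z₀.1, z₀.2) = 1 := by rw [Prod.mk.eta]; exact hz1
        have hz2' : pnorm 2 (app T (z₀.1, z₀.2)) = 1 := by rw [Prod.mk.eta]; exact hz2
        obtain ⟨E, hEne, hE1, hE2⟩ :=
          off_axis_perturb hp hα hβ hcontr hz1' hz2' hNoPair
        rw [mem_extremePoints] at hext
        have hmem1 : T + E ∈ unitBall p 2 := by
          show opNorm p 2 (T + E) ≤ 1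
          apply opNorm_le_one_of_forall hp0
          intro z hz
          have := hE1 z
          rwa [hz] at this
        have hmem2 : T - E ∈ unitBall p 2 := by
          show opNorm p 2 (T - E) ≤ 1
          apply opNorm_le_one_of_forall hp0
          intro z hz
          have := hE2 z
          rwa [hz] at this
        have hseg : T ∈ openSegment ℝ (T + E) (T - E) := by
          refine ⟨1/2, 1/2, by norm_num, by norm_num, by norm_num, ?_⟩
          ext i j
          simp only [Matrix.add_apply, Matrix.smul_apply, Matrix.sub_apply, smul_eq_mul]
          ring
        obtain ⟨hTE1, _⟩ := hext.2 (T + E) hmem1 (T - E) hmem2 hseg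
        apply hEne
        ext i j
        have hij := congrFun (congrFun hTE1 i) j
        simp only [Matrix.add_apply, Matrix.zero_apply] at hij ⊢
        linarith
  · -- reverse direction
    intro hrhs
    rw [mem_extremePoints]
    refine ⟨hT.le, ?_⟩
    intro A hA B hB hseg
    obtain ⟨ca, cb, hca, hcb, hcab, hsum⟩ := hseg
    have pA : ∀ z : ℝ × ℝ, pnorm 2 (app A z) ≤ pnorm p z := pnorm_app_le hp0 hA
    have pB : ∀ z : ℝ × ℝ, pnorm 2 (app B z) ≤ pnorm p z := pnorm_app_le hp0 hB
    have happT1 : ∀ z : ℝ × ℝ, (app T z).1 = ca * (app A z).1 + cb * (app B z).1 := by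
      intro z
      rw [← hsum, app_add, app_smul_mat, app_smul_mat]
    have happT2 : ∀ z : ℝ × ℝ, (app T z).2 = ca * (app A z).2 + cb * (app B z).2 := by
      intro z
      rw [← hsum, app_add, app_smul_mat, app_smul_mat]
    have step : ∀ z : ℝ × ℝ, pnorm 2 (app T z) = pnorm p z →
        app A z = app T z ∧ app B z = app T z := by
      intro z hz
      have hm0 : 0 ≤ pnorm p z := pnorm_nonneg hp0 z
      have hu : (app A z).1^2 + (app A z).2^2 ≤ (pnorm p z)^2 :=
        (pnorm_two_le_iff hm0).mp (pA z)
      have hw : (app B z).1^2 + (app B z).2^2 ≤ (pnorm p z)^2 :=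
        (pnorm_two_le_iff hm0).mp (pB z)
      have hcm : (ca*(app A z).1 + cb*(app B z).1)^2
          + (ca*(app A z).2 + cb*(app B z).2)^2 = (pnorm p z)^2 := by
        have h := (pnorm_two_eq_iff hm0).mp hz
        rw [happT1 z, happT2 z] at h
        exact h
      have hAB : app A z = app B z := strict_convex2 hca hcb hcab hu hw hcm
      have hAT : app A z = app T z := by
        refine Prod.ext ?_ ?_
        · rw [happT1 z, ← hAB]
          linear_combination (-(app A z).1) * hcab
        · rw [happT2 z, ← hAB]
          linear_combination (-(app A z).2) * hcab
      exact ⟨hAT, hAB.symm.trans hAT⟩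
    rcases hrhs with ⟨z, w, hli, hz, hw⟩ | ⟨y, hy, hcase⟩
    · have hdet := det_of_li hli
      obtain ⟨hAz, hBz⟩ := step z hz
      obtain ⟨hAw, hBw⟩ := step w hw
      exact ⟨matrix_eq_of_agree hdet hAz hAw, matrix_eq_of_agree hdet hBz hBw⟩
    · have hy' : y.1^2 + y.2^2 = 1 := by
        have := (pnorm_two_eq_iff (by norm_num : (0:ℝ) ≤ 1)).mp hy
        norm_num at this
        exact this
      rcases hcase with hten | hten
      · -- T = tensor (1,0) y
        have t00 : T 0 0 = y.1 := by rw [hten, (tensor_entries _ _).1]; norm_num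
        have t01 : T 0 1 = 0 := by rw [hten, (tensor_entries _ _).2.1]; norm_num
        have t10 : T 1 0 = y.2 := by rw [hten, (tensor_entries _ _).2.2.1]; norm_num
        have t11 : T 1 1 = 0 := by rw [hten, (tensor_entries _ _).2.2.2]; norm_num
        have happe1 : app T ((1:ℝ), (0:ℝ)) = (y.1, y.2) := by
          refine Prod.ext ?_ ?_
          · rw [app_fst]; dsimp only; rw [t00, t01]; ring
          · rw [app_snd]; dsimp only; rw [t10, t11]; ring
        have hatt : pnorm 2 (app T ((1:ℝ), (0:ℝ))) = pnorm p ((1:ℝ), (0:ℝ)) := by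
          rw [happe1, Prod.mk.eta, hy, pnorm_e1 hp0]
        obtain ⟨hAe, hBe⟩ := step _ hatt
        rw [happe1] at hAe hBe
        have ha00 : A 0 0 = y.1 := by
          have h := congrArg Prod.fst hAe
          rw [app_fst] at h
          dsimp only at h
          linarith [h]
        have ha10 : A 1 0 = y.2 := by
          have h := congrArg Prod.snd hAe
          rw [app_snd] at h
          dsimp only at h
          linarith [h]
        have hb00 : B 0 0 = y.1 := by
          have h := congrArg Prod.fst hBe
          rw [app_fst] at h
          dsimp only at h
          linarith [h]
        have hb10 : B 1 0 = y.2 := by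
          have h := congrArg Prod.snd hBe
          rw [app_snd] at h
          dsimp only at h
          linarith [h]
        obtain ⟨ha01, ha11⟩ := col2_zero hp pA (by rw [ha00, ha10]; exact hy')
        obtain ⟨hb01, hb11⟩ := col2_zero hp pB (by rw [hb00, hb10]; exact hy')
        constructor <;> ext i j <;> fin_cases i <;> fin_cases j
        · exact ha00.trans t00.symm
        · exact ha01.trans t01.symm
        · exact ha10.trans t10.symm
        · exact ha11.trans t11.symm
        · exact hb00.trans t00.symm
        · exact hb01.trans t01.symm
        · exact hb10.trans t10.symm
        · exact hb11.trans t11.symm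
      · -- T = tensor (0,1) y
        have t00 : T 0 0 = 0 := by rw [hten, (tensor_entries _ _).1]; norm_num
        have t01 : T 0 1 = y.1 := by rw [hten, (tensor_entries _ _).2.1]; norm_num
        have t10 : T 1 0 = 0 := by rw [hten, (tensor_entries _ _).2.2.1]; norm_num
        have t11 : T 1 1 = y.2 := by rw [hten, (tensor_entries _ _).2.2.2]; norm_num
        have happe2 : app T ((0:ℝ), (1:ℝ)) = (y.1, y.2) := by
          refine Prod.ext ?_ ?_
          · rw [app_fst]; dsimp only; rw [t00, t01]; ring
          · rw [app_snd]; dsimp only; rw [t10, t11]; ring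
        have hatt : pnorm 2 (app T ((0:ℝ), (1:ℝ))) = pnorm p ((0:ℝ), (1:ℝ)) := by
          rw [happe2, Prod.mk.eta, hy, pnorm_e2 hp0]
        obtain ⟨hAe, hBe⟩ := step _ hatt
        rw [happe2] at hAe hBe
        have ha01 : A 0 1 = y.1 := by
          have h := congrArg Prod.fst hAe
          rw [app_fst] at h
          dsimp only at h
          linarith [h]
        have ha11 : A 1 1 = y.2 := by
          have h := congrArg Prod.snd hAe
          rw [app_snd] at h
          dsimp only at h
          linarith [h]
        have hb01 : B 0 1 = y.1 := by
          have h := congrArg Prod.fst hBe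
          rw [app_fst] at h
          dsimp only at h
          linarith [h]
        have hb11 : B 1 1 = y.2 := by
          have h := congrArg Prod.snd hBe
          rw [app_snd] at h
          dsimp only at h
          linarith [h]
        obtain ⟨ha00, ha10⟩ := col1_zero hp pA (by rw [ha01, ha11]; exact hy')
        obtain ⟨hb00, hb10⟩ := col1_zero hp pB (by rw [hb01, hb11]; exact hy')
        constructor <;> ext i j <;> fin_cases i <;> fin_cases j
        · exact ha00.trans t00.symm
        · exact ha01.trans t01.symm
        · exact ha10.trans t10.symm
        · exact ha11.trans t11.symm
        · exact hb00.trans t00.symm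
        · exact hb01.trans t01.symm
        · exact hb10.trans t10.symm
        · exact hb11.trans t11.symm
end
end

section
/- Let 1 < p, q < ∞. Let T : ℝ² → ℝ² be a linear operator with operator norm ‖T‖ ≤ 1 from ℓ^p_2 to ℓ^q_2, and suppose there is an ℓ^p-unit vector x with Tx = y where ‖y‖_q = 1. Then there exists s ∈ ℝ such that T = x^{p−1}⊗y + s·x^o⊗(y^o)^{q−1}. -/
noncomputable section

-- Young equality case
lemma young_eq {a b p q : ℝ} (ha : 0 ≤ a) (hb : 0 ≤ b) (hpq : p.HolderConjugate q)
    (h : a * b = a ^ p / p + b ^ q / q) : a ^ p = b ^ q := by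
  by_contra hne
  rcases eq_or_lt_of_le ha with ha0 | ha0
  · subst ha0
    have h0 : (0:ℝ) ^ p = 0 := Real.zero_rpow hpq.ne_zero
    rw [h0] at h
    have : b ^ q = 0 := by
      have h' := h.symm
      rw [zero_mul, zero_div, zero_add, div_eq_zero_iff] at h'
      rcases h' with h' | h' <;> simp_all [hpq.symm.ne_zero]
    simp_all
  rcases eq_or_lt_of_le hb with hb0 | hb0
  · subst hb0
    have h0 : (0:ℝ) ^ q = 0 := Real.zero_rpow hpq.symm.ne_zero
    rw [h0] at h
    have : a ^ p = 0 := by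
      have h' := h.symm
      rw [mul_zero, zero_div, add_zero, div_eq_zero_iff] at h'
      rcases h' with h' | h' <;> simp_all [hpq.ne_zero]
    simp_all
  -- both positive
  have hap : 0 < a ^ p := Real.rpow_pos_of_pos ha0 p
  have hbq : 0 < b ^ q := Real.rpow_pos_of_pos hb0 q
  have hlog : Real.log (a ^ p) ≠ Real.log (b ^ q) := fun hl => hne (by
    rw [← Real.exp_log hap, ← Real.exp_log hbq, hl])
  have key := strictConvexOn_exp.2 (Set.mem_univ (Real.log (a ^ p)))
    (Set.mem_univ (Real.log (b ^ q))) hlog hpq.inv_pos hpq.symm.inv_pos hpq.inv_add_inv_eq_one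
  rw [smul_eq_mul, smul_eq_mul, smul_eq_mul, smul_eq_mul, Real.exp_log hap, Real.exp_log hbq] at key
  have hexp : Real.exp (p⁻¹ * Real.log (a ^ p) + q⁻¹ * Real.log (b ^ q)) = a * b := by
    rw [Real.log_rpow ha0, Real.log_rpow hb0, Real.exp_add]
    rw [← mul_assoc, ← mul_assoc, inv_mul_cancel₀ hpq.ne_zero, inv_mul_cancel₀ hpq.symm.ne_zero,
      one_mul, one_mul, Real.exp_log ha0, Real.exp_log hb0]
  rw [hexp] at key
  rw [h] at key
  rw [div_eq_inv_mul, div_eq_inv_mul] at key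
  exact lt_irrefl _ key

lemma pnorm_sum_eq {r : ℝ} (hr : 0 < r) {z : ℝ × ℝ} (h : pnorm r z = 1) :
    |z.1| ^ r + |z.2| ^ r = 1 := by
  have hnn : 0 ≤ |z.1| ^ r + |z.2| ^ r :=
    add_nonneg (Real.rpow_nonneg (abs_nonneg _) _) (Real.rpow_nonneg (abs_nonneg _) _)
  have := congrArg (· ^ r) h
  simp only [Real.one_rpow, pnorm] at this
  rwa [← Real.rpow_mul hnn, one_div, inv_mul_cancel₀ hr.ne', Real.rpow_one] at this

lemma pnorm_scale (r c : ℝ) (hr : 0 < r) (z : ℝ × ℝ) :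
    pnorm r (c * z.1, c * z.2) = |c| * pnorm r z := by
  unfold pnorm
  simp only [abs_mul]
  rw [Real.mul_rpow (abs_nonneg _) (abs_nonneg _), Real.mul_rpow (abs_nonneg _) (abs_nonneg _),
    ← mul_add, Real.mul_rpow (Real.rpow_nonneg (abs_nonneg _) _)
      (add_nonneg (Real.rpow_nonneg (abs_nonneg _) _) (Real.rpow_nonneg (abs_nonneg _) _)),
    ← Real.rpow_mul (abs_nonneg c), mul_one_div_cancel hr.ne', Real.rpow_one]

lemma pnorm_nonneg (r : ℝ) (z : ℝ × ℝ) : 0 ≤ pnorm r z :=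
  Real.rpow_nonneg (add_nonneg (Real.rpow_nonneg (abs_nonneg _) _)
    (Real.rpow_nonneg (abs_nonneg _) _)) _

lemma pnorm_pos {r : ℝ} (hr : 0 < r) {z : ℝ × ℝ} (h : ¬(z.1 = 0 ∧ z.2 = 0)) :
    0 < pnorm r z := by
  have hs : 0 < |z.1| ^ r + |z.2| ^ r := by
    rcases not_and_or.1 h with h1 | h1
    · have : 0 < |z.1| ^ r := Real.rpow_pos_of_pos (abs_pos.2 h1) r
      have h2 : 0 ≤ |z.2| ^ r := Real.rpow_nonneg (abs_nonneg _) _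
      linarith
    · have : 0 < |z.2| ^ r := Real.rpow_pos_of_pos (abs_pos.2 h1) r
      have h2 : 0 ≤ |z.1| ^ r := Real.rpow_nonneg (abs_nonneg _) _
      linarith
  exact Real.rpow_pos_of_pos hs _

lemma pnorm_ne_zero_of_one {r : ℝ} (hr : 0 < r) {z : ℝ × ℝ} (h : pnorm r z = 1) :
    ¬(z.1 = 0 ∧ z.2 = 0) := by
  rintro ⟨h1, h2⟩
  unfold pnorm at h
  rw [h1, h2] at h
  simp only [abs_zero] at h
  rw [Real.zero_rpow hr.ne', add_zero, Real.zero_rpow (by positivity : (1:ℝ)/r ≠ 0)] at h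
  exact zero_ne_one h

lemma mul_sign_abs_rpow (a : ℝ) {r : ℝ} (hr : 0 < r) :
    a * (Real.sign a * |a| ^ r) = |a| ^ (1 + r) := by
  rcases lt_trichotomy a 0 with h | h | h
  · rw [Real.sign_of_neg h, abs_of_neg h,
      Real.rpow_one_add' (by linarith) (by positivity)]
    ring
  · subst h
    simp only [abs_zero, Real.sign_zero]
    rw [Real.zero_rpow (by positivity : (1:ℝ)+r ≠ 0)]
    ring
  · rw [Real.sign_of_pos h, abs_of_pos h,
      Real.rpow_one_add' h.le (by positivity)]
    ring

lemma abs_sign_abs_rpow (a : ℝ) {r : ℝ} (hr : 0 < r) :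
    |Real.sign a * |a| ^ r| = |a| ^ r := by
  rcases lt_trichotomy a 0 with h | h | h
  · rw [Real.sign_of_neg h, abs_mul]
    simp [abs_of_nonneg (Real.rpow_nonneg (abs_nonneg a) r)]
  · subst h; simp [Real.zero_rpow hr.ne']
  · rw [Real.sign_of_pos h, one_mul, abs_of_nonneg (Real.rpow_nonneg (abs_nonneg a) r)]

lemma contraction {p q : ℝ} (hp : 1 < p) (hq : 1 < q) (T : Matrix (Fin 2) (Fin 2) ℝ)
    (hT : opNorm p q T ≤ 1) : ∀ z, pnorm q (app T z) ≤ pnorm p z := by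
  have hp0 : (0:ℝ) < p := by linarith
  have hq0 : (0:ℝ) < q := by linarith
  set S := {c : ℝ | ∃ z : ℝ × ℝ, pnorm p z = 1 ∧ c = pnorm q (app T z)} with hS
  set m1 := |T 0 0| + |T 0 1| with hm1
  set m2 := |T 1 0| + |T 1 1| with hm2
  have hm1nn : 0 ≤ m1 := by positivity
  have hm2nn : 0 ≤ m2 := by positivity
  have hbdd : BddAbove S := by
    refine ⟨(m1 ^ q + m2 ^ q) ^ (1/q), ?_⟩
    rintro c ⟨z, hz, rfl⟩
    have hsum := pnorm_sum_eq hp0 hz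
    have hz1p : |z.1| ^ p ≤ 1 := by
      have := Real.rpow_nonneg (abs_nonneg z.2) p; linarith
    have hz2p : |z.2| ^ p ≤ 1 := by
      have := Real.rpow_nonneg (abs_nonneg z.1) p; linarith
    have habs : ∀ a : ℝ, |a| ^ p ≤ 1 → |a| ≤ 1 := by
      intro a ha
      have h2 := Real.rpow_le_rpow (Real.rpow_nonneg (abs_nonneg a) p) ha
        (le_of_lt (by positivity : (0:ℝ) < 1/p))
      rwa [← Real.rpow_mul (abs_nonneg a), mul_one_div_cancel hp0.ne', Real.rpow_one,
        Real.one_rpow] at h2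
    have hz1 := habs _ hz1p
    have hz2 := habs _ hz2p
    have hb1 : |(app T z).1| ≤ m1 := by
      refine (abs_add_le _ _).trans ?_
      rw [abs_mul, abs_mul]
      have := mul_le_of_le_one_right (abs_nonneg (T 0 0)) hz1
      have := mul_le_of_le_one_right (abs_nonneg (T 0 1)) hz2
      rw [hm1]; linarith
    have hb2 : |(app T z).2| ≤ m2 := by
      refine (abs_add_le _ _).trans ?_
      rw [abs_mul, abs_mul]
      have := mul_le_of_le_one_right (abs_nonneg (T 1 0)) hz1
      have := mul_le_of_le_one_right (abs_nonneg (T 1 1)) hz2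
      rw [hm2]; linarith
    unfold pnorm
    refine Real.rpow_le_rpow (by positivity) ?_ (by positivity)
    exact add_le_add (Real.rpow_le_rpow (abs_nonneg _) hb1 hq0.le)
      (Real.rpow_le_rpow (abs_nonneg _) hb2 hq0.le)
  have hunit : ∀ z, pnorm p z = 1 → pnorm q (app T z) ≤ 1 := by
    intro z hz
    exact le_trans (le_csSup hbdd ⟨z, hz, rfl⟩) hT
  intro z
  by_cases hz : z.1 = 0 ∧ z.2 = 0
  · have hz0 : z = (0, 0) := Prod.ext hz.1 hz.2
    subst hz0
    have : app T (0, 0) = (0, 0) := by simp [app]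
    rw [this]
    unfold pnorm
    simp only [abs_zero]
    rw [Real.zero_rpow hp0.ne', Real.zero_rpow hq0.ne', add_zero,
      Real.zero_rpow (by positivity : (1:ℝ)/p ≠ 0), Real.zero_rpow (by positivity : (1:ℝ)/q ≠ 0)]
  · set c := pnorm p z with hc
    have hcpos : 0 < c := pnorm_pos hp0 hz
    have hz' : pnorm p (c⁻¹ * z.1, c⁻¹ * z.2) = 1 := by
      rw [pnorm_scale p c⁻¹ hp0 z, abs_of_pos (inv_pos.2 hcpos), inv_mul_cancel₀ hcpos.ne']
    have happ : app T (c⁻¹ * z.1, c⁻¹ * z.2) = (c⁻¹ * (app T z).1, c⁻¹ * (app T z).2) := by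
      simp only [app, Prod.mk.injEq]; constructor <;> ring
    have := hunit _ hz'
    rw [happ, pnorm_scale q c⁻¹ hq0 (app T z), abs_of_pos (inv_pos.2 hcpos)] at this
    calc pnorm q (app T z) = c * (c⁻¹ * pnorm q (app T z)) := by
          field_simp
      _ ≤ c * 1 := by exact mul_le_mul_of_nonneg_left this hcpos.le
      _ = c := mul_one c

lemma isConj (p : ℝ) (hp : 1 < p) : p.HolderConjugate (p/(p-1)) := by
  exact (Real.holderConjugate_iff_eq_conjExponent hp).2 rfl

-- (r-1) * (r/(r-1)) = r and similar facts handled inline with field_simp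

lemma holder_w {q : ℝ} (hq : 1 < q) {y : ℝ × ℝ} (hy : |y.1| ^ q + |y.2| ^ q = 1) :
    ∀ u : ℝ × ℝ, (Real.sign y.1 * |y.1| ^ (q-1)) * u.1 + (Real.sign y.2 * |y.2| ^ (q-1)) * u.2
      ≤ pnorm q u := by
  have hq0 : (0:ℝ) < q := by linarith
  have hq1 : (0:ℝ) < q - 1 := by linarith
  set q' := q / (q - 1) with hq'def
  have hconj : q.HolderConjugate q' := isConj q hq
  set w1 := Real.sign y.1 * |y.1| ^ (q-1) with hw1
  set w2 := Real.sign y.2 * |y.2| ^ (q-1) with hw2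
  have habsw1 : |w1| = |y.1| ^ (q-1) := abs_sign_abs_rpow _ hq1
  have habsw2 : |w2| = |y.2| ^ (q-1) := abs_sign_abs_rpow _ hq1
  have hwq' : |w1| ^ q' + |w2| ^ q' = 1 := by
    rw [habsw1, habsw2, ← Real.rpow_mul (abs_nonneg _), ← Real.rpow_mul (abs_nonneg _)]
    have : (q - 1) * q' = q := by rw [hq'def]; field_simp
    rw [this, hy]
  have hunit : ∀ u : ℝ × ℝ, pnorm q u = 1 → w1 * u.1 + w2 * u.2 ≤ 1 := by
    intro u hu
    have husum := pnorm_sum_eq hq0 hu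
    have hy1 : w1 * u.1 ≤ |u.1| * |w1| := by
      calc w1 * u.1 ≤ |w1 * u.1| := le_abs_self _
        _ = |u.1| * |w1| := by rw [abs_mul]; ring
    have hy2 : w2 * u.2 ≤ |u.2| * |w2| := by
      calc w2 * u.2 ≤ |w2 * u.2| := le_abs_self _
        _ = |u.2| * |w2| := by rw [abs_mul]; ring
    have hyoung1 : |u.1| * |w1| ≤ |u.1| ^ q / q + |w1| ^ q' / q' :=
      Real.young_inequality_of_nonneg (abs_nonneg _) (abs_nonneg _) hconj
    have hyoung2 : |u.2| * |w2| ≤ |u.2| ^ q / q + |w2| ^ q' / q' :=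
      Real.young_inequality_of_nonneg (abs_nonneg _) (abs_nonneg _) hconj
    have hsum : 1/q + 1/q' = 1 := by
      have := hconj.inv_add_inv_eq_one
      rw [one_div, one_div]; exact this
    have hq'0 : (0:ℝ) < q' := hconj.symm.pos
    calc w1 * u.1 + w2 * u.2 ≤ (|u.1| ^ q / q + |w1| ^ q' / q') + (|u.2| ^ q / q + |w2| ^ q' / q') := by
          linarith
      _ = (|u.1| ^ q + |u.2| ^ q) / q + (|w1| ^ q' + |w2| ^ q') / q' := by ring
      _ = 1/q + 1/q' := by rw [husum, hwq']
      _ = 1 := hsum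
  intro u
  by_cases hu : u.1 = 0 ∧ u.2 = 0
  · rw [hu.1, hu.2]
    simpa using pnorm_nonneg q u
  · set c := pnorm q u with hc
    have hcpos : 0 < c := pnorm_pos hq0 hu
    have hu' : pnorm q (c⁻¹ * u.1, c⁻¹ * u.2) = 1 := by
      rw [pnorm_scale q c⁻¹ hq0 u, abs_of_pos (inv_pos.2 hcpos), inv_mul_cancel₀ hcpos.ne']
    have := hunit _ hu'
    have h2 : w1 * u.1 + w2 * u.2 = c * (w1 * (c⁻¹ * u.1) + w2 * (c⁻¹ * u.2)) := by
      field_simp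
    rw [h2]
    calc c * (w1 * (c⁻¹ * u.1) + w2 * (c⁻¹ * u.2)) ≤ c * 1 :=
          mul_le_mul_of_nonneg_left this hcpos.le
      _ = c := mul_one c

lemma norming {p : ℝ} (hp : 1 < p) (v x : ℝ × ℝ)
    (h1 : ∀ z : ℝ × ℝ, v.1 * z.1 + v.2 * z.2 ≤ pnorm p z)
    (hvx : v.1 * x.1 + v.2 * x.2 = 1) (hxs : |x.1| ^ p + |x.2| ^ p = 1) :
    v = (Real.sign x.1 * |x.1| ^ (p-1), Real.sign x.2 * |x.2| ^ (p-1)) := by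
  have hp0 : (0:ℝ) < p := by linarith
  have hp1 : (0:ℝ) < p - 1 := by linarith
  set p' := p / (p - 1) with hp'def
  have hconj : p.HolderConjugate p' := isConj p hp
  have hp'1 : 1 < p' := hconj.symm.lt
  have hp'0 : (0:ℝ) < p' := hconj.symm.pos
  set K := |v.1| ^ p' + |v.2| ^ p' with hK
  -- step 1 : K ≤ 1
  have hKle : K ≤ 1 := by
    set z : ℝ × ℝ := (Real.sign v.1 * |v.1| ^ (p'-1), Real.sign v.2 * |v.2| ^ (p'-1)) with hz
    have hdot : v.1 * z.1 + v.2 * z.2 = K := by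
      rw [hz]
      simp only
      rw [mul_sign_abs_rpow _ (by linarith : (0:ℝ) < p'-1),
        mul_sign_abs_rpow _ (by linarith : (0:ℝ) < p'-1)]
      rw [show (1:ℝ) + (p'-1) = p' by ring]
    have hpz : pnorm p z = K ^ (1/p) := by
      unfold pnorm
      rw [hz]
      simp only
      rw [abs_sign_abs_rpow _ (by linarith : (0:ℝ) < p'-1),
        abs_sign_abs_rpow _ (by linarith : (0:ℝ) < p'-1),
        ← Real.rpow_mul (abs_nonneg _), ← Real.rpow_mul (abs_nonneg _)]
      have : (p' - 1) * p = p' := by rw [hp'def]; field_simp; ring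
      rw [this]
    have hle : K ≤ K ^ (1/p) := by rw [← hpz, ← hdot]; exact h1 z
    by_contra hKgt
    push_neg at hKgt
    have : K ^ (1/p) < K ^ (1:ℝ) :=
      Real.rpow_lt_rpow_of_exponent_lt hKgt (by rw [div_lt_one hp0]; linarith)
    rw [Real.rpow_one] at this
    linarith
  -- step 2 : equalities
  have hy1 : v.1 * x.1 ≤ |x.1| * |v.1| := by
    calc v.1 * x.1 ≤ |v.1 * x.1| := le_abs_self _
      _ = |x.1| * |v.1| := by rw [abs_mul]; ring
  have hy2 : v.2 * x.2 ≤ |x.2| * |v.2| := by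
    calc v.2 * x.2 ≤ |v.2 * x.2| := le_abs_self _
      _ = |x.2| * |v.2| := by rw [abs_mul]; ring
  have hyoung1 : |x.1| * |v.1| ≤ |x.1| ^ p / p + |v.1| ^ p' / p' :=
    Real.young_inequality_of_nonneg (abs_nonneg _) (abs_nonneg _) hconj
  have hyoung2 : |x.2| * |v.2| ≤ |x.2| ^ p / p + |v.2| ^ p' / p' :=
    Real.young_inequality_of_nonneg (abs_nonneg _) (abs_nonneg _) hconj
  have hsum : 1/p + 1/p' = 1 := by
    have := hconj.inv_add_inv_eq_one
    rw [one_div, one_div]; exact this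
  have hxp : |x.1| ^ p / p + |x.2| ^ p / p = 1 / p := by
    rw [← add_div, hxs]
  have hKp : |v.1| ^ p' / p' + |v.2| ^ p' / p' = K / p' := by
    rw [← add_div]
  have hKdiv : K / p' ≤ 1 / p' := by gcongr
  have hE1 : |x.1| * |v.1| = |x.1| ^ p / p + |v.1| ^ p' / p' := by linarith
  have hE2 : |x.2| * |v.2| = |x.2| ^ p / p + |v.2| ^ p' / p' := by linarith
  have hF1 : v.1 * x.1 = |x.1| * |v.1| := by linarith
  have hF2 : v.2 * x.2 = |x.2| * |v.2| := by linarith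
  have hxv1 : |x.1| ^ p = |v.1| ^ p' := young_eq (abs_nonneg _) (abs_nonneg _) hconj hE1
  have hxv2 : |x.2| ^ p = |v.2| ^ p' := young_eq (abs_nonneg _) (abs_nonneg _) hconj hE2
  have habs : ∀ a b : ℝ, |a| ^ p = |b| ^ p' → |b| = |a| ^ (p-1) := by
    intro a b hab
    have : (|b| ^ p') ^ (1/p') = |b| := by
      rw [← Real.rpow_mul (abs_nonneg _), mul_one_div_cancel hp'0.ne', Real.rpow_one]
    rw [← this, ← hab, ← Real.rpow_mul (abs_nonneg _)]
    congr 1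
    rw [hp'def]
    field_simp
  have habs1 : |v.1| = |x.1| ^ (p-1) := habs _ _ hxv1
  have habs2 : |v.2| = |x.2| ^ (p-1) := habs _ _ hxv2
  have key : ∀ a b : ℝ, |b| = |a| ^ (p-1) → b * a = |a| * |b| →
      b = Real.sign a * |a| ^ (p-1) := by
    intro a b hab hba
    rcases lt_trichotomy a 0 with h | h | h
    · rw [Real.sign_of_neg h]
      rw [abs_of_neg h] at hba
      have h0 : a * (b + |b|) = 0 := by linear_combination hba
      have h3 : b + |b| = 0 := by
        rcases mul_eq_zero.1 h0 with h' | h'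
        · exact absurd h' (ne_of_lt h)
        · exact h'
      rw [← hab]
      linarith
    · subst h
      have hb0 : |b| = 0 := by rw [hab, abs_zero, Real.zero_rpow hp1.ne']
      rw [abs_eq_zero.1 hb0]
      simp
    · rw [Real.sign_of_pos h, one_mul]
      rw [abs_of_pos h] at hba
      have h0 : a * (b - |b|) = 0 := by linear_combination hba
      have h3 : b - |b| = 0 := by
        rcases mul_eq_zero.1 h0 with h' | h'
        · exact absurd h' (ne_of_gt h)
        · exact h'
      rw [← hab]
      linarith
  have e1 := key _ _ habs1 hF1
  have e2 := key _ _ habs2 hF2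
  rw [Prod.ext_iff]
  exact ⟨e1, e2⟩

lemma perp {c d : ℝ} (hcd : ¬(c = 0 ∧ d = 0)) (a b : ℝ) (h : a * c + b * d = 0) :
    ∃ t : ℝ, a = -(t * d) ∧ b = t * c := by
  rcases not_and_or.1 hcd with hc | hd
  · refine ⟨b / c, ?_, ?_⟩
    · field_simp
      linear_combination h
    · field_simp
  · refine ⟨-a / d, ?_, ?_⟩
    · field_simp
    · field_simp
      linear_combination h


/-- Any contraction T from ℓ^p_2 to ℓ^q_2 with Tx = y for unit vectors x, y is of the form
  T = x^{p−1}⊗y + s·x^o⊗(y^o)^{q−1}. -/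
theorem stmt_11 (p q : ℝ) (hp : 1 < p) (hq : 1 < q)
    (T : Matrix (Fin 2) (Fin 2) ℝ) (hT : opNorm p q T ≤ 1)
    (x y : ℝ × ℝ) (hx : pnorm p x = 1) (hy : pnorm q y = 1) (hxy : app T x = y) :
    ∃ s : ℝ, T = tensor (spow x (p - 1)) y + s • tensor (rot x) (spow (rot y) (q - 1)) := by
  have hp0 : (0:ℝ) < p := by linarith
  have hq0 : (0:ℝ) < q := by linarith
  have hp1 : (0:ℝ) < p - 1 := by linarith
  have hq1 : (0:ℝ) < q - 1 := by linarith
  have hxsum := pnorm_sum_eq hp0 hx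
  have hysum := pnorm_sum_eq hq0 hy
  have hxne := pnorm_ne_zero_of_one hp0 hx
  set w1 := Real.sign y.1 * |y.1| ^ (q-1) with hw1def
  set w2 := Real.sign y.2 * |y.2| ^ (q-1) with hw2def
  set x'1 := Real.sign x.1 * |x.1| ^ (p-1) with hx'1def
  set x'2 := Real.sign x.2 * |x.2| ^ (p-1) with hx'2def
  have hwdoty : w1 * y.1 + w2 * y.2 = 1 := by
    rw [hw1def, hw2def, mul_comm _ y.1, mul_comm _ y.2, mul_sign_abs_rpow y.1 hq1,
      mul_sign_abs_rpow y.2 hq1, show (1:ℝ) + (q-1) = q by ring, hysum]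
  have hx'dotx : x'1 * x.1 + x'2 * x.2 = 1 := by
    rw [hx'1def, hx'2def, mul_comm _ x.1, mul_comm _ x.2, mul_sign_abs_rpow x.1 hp1,
      mul_sign_abs_rpow x.2 hp1, show (1:ℝ) + (p-1) = p by ring, hxsum]
  have hA := contraction hp hq T hT
  have hC := holder_w hq hysum
  set v : ℝ × ℝ := (T 0 0 * w1 + T 1 0 * w2, T 0 1 * w1 + T 1 1 * w2) with hvdef
  have hvz : ∀ z : ℝ × ℝ, v.1 * z.1 + v.2 * z.2 ≤ pnorm p z := by
    intro z
    have h1 : v.1 * z.1 + v.2 * z.2 = w1 * (app T z).1 + w2 * (app T z).2 := by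
      simp only [hvdef, app]; ring
    rw [h1]
    exact le_trans (hC (app T z)) (hA z)
  have hvx1 : v.1 * x.1 + v.2 * x.2 = 1 := by
    have h1 : v.1 * x.1 + v.2 * x.2 = w1 * (app T x).1 + w2 * (app T x).2 := by
      simp only [hvdef, app]; ring
    rw [h1, hxy, hwdoty]
  have hveq := norming hp v x hvz hvx1 hxsum
  have hv1 : T 0 0 * w1 + T 1 0 * w2 = x'1 := congrArg Prod.fst hveq
  have hv2 : T 0 1 * w1 + T 1 1 * w2 = x'2 := congrArg Prod.snd hveq
  have hTx1 : T 0 0 * x.1 + T 0 1 * x.2 = y.1 := congrArg Prod.fst hxy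
  have hTx2 : T 1 0 * x.1 + T 1 1 * x.2 = y.2 := congrArg Prod.snd hxy
  -- rows of A := T - x' ⊗ y are perpendicular to x
  have hrow0 : (T 0 0 - y.1 * x'1) * x.1 + (T 0 1 - y.1 * x'2) * x.2 = 0 := by
    linear_combination hTx1 - y.1 * hx'dotx
  have hrow1 : (T 1 0 - y.2 * x'1) * x.1 + (T 1 1 - y.2 * x'2) * x.2 = 0 := by
    linear_combination hTx2 - y.2 * hx'dotx
  obtain ⟨t0, ht00, ht01⟩ := perp hxne _ _ hrow0
  obtain ⟨t1, ht10, ht11⟩ := perp hxne _ _ hrow1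
  -- columns perpendicular to w
  have hcol0 : (T 0 0 - y.1 * x'1) * w1 + (T 1 0 - y.2 * x'1) * w2 = 0 := by
    linear_combination hv1 - x'1 * hwdoty
  have hcol1 : (T 0 1 - y.1 * x'2) * w1 + (T 1 1 - y.2 * x'2) * w2 = 0 := by
    linear_combination hv2 - x'2 * hwdoty
  have hwne : ¬(w1 = 0 ∧ w2 = 0) := by
    rintro ⟨h1, h2⟩
    rw [h1, h2] at hwdoty
    simp at hwdoty
  have htw : t0 * w1 + t1 * w2 = 0 := by
    rcases not_and_or.1 hxne with h | h
    · have h0 : x.1 * (t0 * w1 + t1 * w2) = 0 := by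
        linear_combination hcol1 - w1 * ht01 - w2 * ht11
      rcases mul_eq_zero.1 h0 with h' | h'
      · exact absurd h' h
      · exact h'
    · have h0 : x.2 * (t0 * w1 + t1 * w2) = 0 := by
        linear_combination w1 * ht00 + w2 * ht10 - hcol0
      rcases mul_eq_zero.1 h0 with h' | h'
      · exact absurd h' h
      · exact h'
  obtain ⟨s, hs0, hs1⟩ := perp hwne _ _ htw
  refine ⟨s, ?_⟩
  have hsign2 : Real.sign (-y.2) * |(-y.2)| ^ (q-1) = -(Real.sign y.2 * |y.2| ^ (q-1)) := by
    rw [Real.sign_neg, abs_neg]; ring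
  rw [hw2def] at hs0
  rw [hw1def] at hs1
  rw [hx'1def] at ht00 ht10
  rw [hx'2def] at ht01 ht11
  ext i j
  fin_cases i <;> fin_cases j <;>
    simp only [tensor, spow, rot, Matrix.add_apply, Matrix.smul_apply, smul_eq_mul,
      Fin.zero_eta, Fin.mk_one, Fin.isValue,
      Matrix.cons_val', Matrix.cons_val_zero, Matrix.cons_val_one, Matrix.head_cons,
      Matrix.empty_val', Matrix.cons_val_fin_one, Matrix.head_fin_const, Matrix.of_apply,
      hsign2]
  · linear_combination ht00 - x.2 * hs0
  · linear_combination ht01 + x.1 * hs0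
  · linear_combination ht10 - x.2 * hs1
  · linear_combination ht11 + x.1 * hs1
end
end

section
/- Let 1 < p < ∞ and let x = (x1, x2) be an ℓ^p-unit vector with x1 ≥ 0 and x2 ≥ 0. Define F_p(x, r) = ‖x + r·(x^o)^{p−1}‖_p^p = |x1 − r·x2^{p−1}|^p + |x2 + r·x1^{p−1}|^p for r ∈ ℝ. Then r ↦ F_p(x, r) is strictly increasing on [0, ∞) and strictly decreasing on (−∞, 0]; in particular F_p(x, r) > 1 for every r ≠ 0. -/
noncomputable section

/-- F_p(x, r) = ‖x + r·(x^o)^{p−1}‖_p^p = |x1 − r x2^{p−1}|^p + |x2 + r x1^{p−1}|^p. -/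
def Fp (p : ℝ) (x : ℝ × ℝ) (r : ℝ) : ℝ :=
  |x.1 - r * x.2 ^ (p - 1)| ^ p + |x.2 + r * x.1 ^ (p - 1)| ^ p

open Set in
private lemma strictConvexOn_abs_rpow' {p : ℝ} (hp : 1 < p) :
    StrictConvexOn ℝ Set.univ (fun t : ℝ => |t| ^ p) := by
  refine ⟨convex_univ, ?_⟩
  intro x _ y _ hxy a b ha hb hab
  simp only [smul_eq_mul]
  rcases eq_or_ne |x| |y| with h | h
  · have hy : y ≠ 0 := by
      rintro rfl
      simp only [abs_zero, abs_eq_zero] at h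
      exact hxy (by simp [h])
    have hx : x = -y := by
      rcases abs_eq_abs.mp h with h1 | h1
      · exact absurd h1 hxy
      · exact h1
    have h1 : |a * x + b * y| < |y| := by
      have e : a * x + b * y = (b - a) * y := by rw [hx]; ring
      rw [e, abs_mul]
      have hba : |b - a| < 1 := by
        rw [abs_lt]; constructor <;> linarith
      calc |b - a| * |y| < 1 * |y| := mul_lt_mul_of_pos_right hba (abs_pos.mpr hy)
        _ = |y| := one_mul _
    calc |a * x + b * y| ^ p < |y| ^ p :=
          Real.rpow_lt_rpow (abs_nonneg _) h1 (lt_trans one_pos hp)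
      _ = a * |x| ^ p + b * |y| ^ p := by rw [h, ← add_mul, hab, one_mul]
  · have key := (strictConvexOn_rpow hp).2 (Set.mem_Ici.mpr (abs_nonneg x))
      (Set.mem_Ici.mpr (abs_nonneg y)) h ha hb hab
    simp only [smul_eq_mul] at key
    have h2 : |a * x + b * y| ^ p ≤ (a * |x| + b * |y|) ^ p := by
      apply Real.rpow_le_rpow (abs_nonneg _) _ (le_of_lt (lt_trans one_pos hp))
      calc |a * x + b * y| ≤ |a * x| + |b * y| := abs_add_le _ _
        _ = a * |x| + b * |y| := by rw [abs_mul, abs_mul, abs_of_pos ha, abs_of_pos hb]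
    exact h2.trans_lt key

private lemma strictConvexOn_affine_abs_rpow {p c d : ℝ} (hp : 1 < p) (hd : d ≠ 0) :
    StrictConvexOn ℝ Set.univ (fun r : ℝ => |c + r * d| ^ p) := by
  refine ⟨convex_univ, ?_⟩
  intro x _ y _ hxy a b ha hb hab
  have hne : c + x * d ≠ c + y * d := by
    intro h
    exact hxy (mul_right_cancel₀ hd (by linarith))
  have key := (strictConvexOn_abs_rpow' hp).2 (Set.mem_univ (c + x * d))
    (Set.mem_univ (c + y * d)) hne ha hb hab
  simp only [smul_eq_mul] at key ⊢
  have e : c + (a * x + b * y) * d = a * (c + x * d) + b * (c + y * d) := by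
    linear_combination c * hab.symm
  rw [e]; exact key

private lemma convexOn_affine_abs_rpow {p : ℝ} (c d : ℝ) (hp : 1 < p) :
    ConvexOn ℝ Set.univ (fun r : ℝ => |c + r * d| ^ p) := by
  rcases eq_or_ne d 0 with rfl | hd
  · simpa using convexOn_const (|c| ^ p) convex_univ
  · exact (strictConvexOn_affine_abs_rpow hp hd).convexOn

/-- For an ℓ^p-unit vector x with nonnegative coordinates, F_p(x, ·) agrees with
  ‖x + r·(x^o)^{p−1}‖_p^p, is strictly increasing on [0,∞), strictly decreasing on (−∞,0],
  and exceeds 1 away from 0. -/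
theorem stmt_12 (p : ℝ) (hp : 1 < p) (x : ℝ × ℝ) (hx1 : 0 ≤ x.1) (hx2 : 0 ≤ x.2)
    (hx : pnorm p x = 1) :
    (∀ r : ℝ, Fp p x r = pnorm p (x + r • spow (rot x) (p - 1)) ^ p) ∧
    StrictMonoOn (Fp p x) (Set.Ici 0) ∧
    StrictAntiOn (Fp p x) (Set.Iic 0) ∧
    ∀ r : ℝ, r ≠ 0 → 1 < Fp p x r := by
  have hp0 : (0:ℝ) < p := lt_trans one_pos hp
  have hp0' : p ≠ 0 := ne_of_gt hp0
  have hp1 : (0:ℝ) < p - 1 := by linarith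
  have hpq : p.HolderConjugate (Real.conjExponent p) := Real.HolderConjugate.conjExponent hp
  set q := Real.conjExponent p with hqdef
  have hq0 : 0 < q := hpq.symm.pos
  -- unit norm in power form
  have h0 : (0:ℝ) ≤ |x.1| ^ p + |x.2| ^ p :=
    add_nonneg (Real.rpow_nonneg (abs_nonneg _) _) (Real.rpow_nonneg (abs_nonneg _) _)
  have hS : x.1 ^ p + x.2 ^ p = 1 := by
    have hx' : (|x.1| ^ p + |x.2| ^ p) ^ (1 / p) = 1 := hx
    calc x.1 ^ p + x.2 ^ p = |x.1| ^ p + |x.2| ^ p := by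
          rw [abs_of_nonneg hx1, abs_of_nonneg hx2]
      _ = ((|x.1| ^ p + |x.2| ^ p) ^ (1 / p)) ^ p := by
          rw [← Real.rpow_mul h0, one_div_mul_cancel hp0', Real.rpow_one]
      _ = 1 ^ p := by rw [hx']
      _ = 1 := Real.one_rpow p
  have hpow : ∀ t : ℝ, 0 ≤ t → t ^ (p - 1) * t = t ^ p := by
    intro t ht
    rcases ht.eq_or_lt with rfl | h
    · simp [Real.zero_rpow hp0', Real.zero_rpow (ne_of_gt hp1)]
    · have e := Real.rpow_add h (p - 1) 1
      rw [Real.rpow_one] at e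
      rw [show p - 1 + 1 = p by ring] at e
      exact e.symm
  have hone : Fp p x 0 = 1 := by
    simp only [Fp, zero_mul, sub_zero, add_zero, abs_of_nonneg hx1, abs_of_nonneg hx2]
    exact hS
  -- F ≥ 1 via Young's inequality
  have hge : ∀ r : ℝ, 1 ≤ Fp p x r := by
    intro r
    simp only [Fp]
    set z1 := x.1 - r * x.2 ^ (p - 1) with hz1
    set z2 := x.2 + r * x.1 ^ (p - 1) with hz2
    have hq1 : (x.1 ^ (p - 1)) ^ q = x.1 ^ p := by
      rw [← Real.rpow_mul hx1, hpq.sub_one_mul_conj]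
    have hq2 : (x.2 ^ (p - 1)) ^ q = x.2 ^ p := by
      rw [← Real.rpow_mul hx2, hpq.sub_one_mul_conj]
    have hpair : x.1 ^ (p - 1) * z1 + x.2 ^ (p - 1) * z2 = 1 := by
      have e1 := hpow x.1 hx1
      have e2 := hpow x.2 hx2
      calc x.1 ^ (p - 1) * z1 + x.2 ^ (p - 1) * z2
          = x.1 ^ (p - 1) * x.1 + x.2 ^ (p - 1) * x.2 := by rw [hz1, hz2]; ring
        _ = 1 := by rw [e1, e2, hS]
    have hy1 : x.1 ^ (p - 1) * z1 ≤ |z1| ^ p / p + x.1 ^ p / q := by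
      calc x.1 ^ (p - 1) * z1 ≤ |x.1 ^ (p - 1) * z1| := le_abs_self _
        _ = |z1| * x.1 ^ (p - 1) := by
            rw [abs_mul, abs_of_nonneg (Real.rpow_nonneg hx1 _)]; ring
        _ ≤ |z1| ^ p / p + (x.1 ^ (p - 1)) ^ q / q :=
            Real.young_inequality_of_nonneg (abs_nonneg _) (Real.rpow_nonneg hx1 _) hpq
        _ = |z1| ^ p / p + x.1 ^ p / q := by rw [hq1]
    have hy2 : x.2 ^ (p - 1) * z2 ≤ |z2| ^ p / p + x.2 ^ p / q := by
      calc x.2 ^ (p - 1) * z2 ≤ |x.2 ^ (p - 1) * z2| := le_abs_self _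
        _ = |z2| * x.2 ^ (p - 1) := by
            rw [abs_mul, abs_of_nonneg (Real.rpow_nonneg hx2 _)]; ring
        _ ≤ |z2| ^ p / p + (x.2 ^ (p - 1)) ^ q / q :=
            Real.young_inequality_of_nonneg (abs_nonneg _) (Real.rpow_nonneg hx2 _) hpq
        _ = |z2| ^ p / p + x.2 ^ p / q := by rw [hq2]
    have final : 1 ≤ (|z1| ^ p + |z2| ^ p) / p + 1 / q := by
      calc (1:ℝ) = x.1 ^ (p - 1) * z1 + x.2 ^ (p - 1) * z2 := hpair.symm
        _ ≤ (|z1| ^ p / p + x.1 ^ p / q) + (|z2| ^ p / p + x.2 ^ p / q) := add_le_add hy1 hy2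
        _ = (|z1| ^ p + |z2| ^ p) / p + (x.1 ^ p + x.2 ^ p) / q := by ring
        _ = (|z1| ^ p + |z2| ^ p) / p + 1 / q := by rw [hS]
    have h1q : 1 / p + 1 / q = 1 := by
      have := hpq.inv_add_inv_eq_one
      rw [one_div, one_div]; exact this
    have hdiv : 1 / p ≤ (|z1| ^ p + |z2| ^ p) / p := by linarith
    have := mul_le_mul_of_nonneg_right hdiv hp0.le
    rwa [div_mul_cancel₀ _ hp0', div_mul_cancel₀ _ hp0'] at this
  -- strict convexity
  have hfp : Fp p x = fun r : ℝ =>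
      |x.1 + r * (-(x.2 ^ (p - 1)))| ^ p + |x.2 + r * x.1 ^ (p - 1)| ^ p := by
    funext r
    simp only [Fp]
    congr 2 <;> ring
  have hcases : x.1 ^ (p - 1) ≠ 0 ∨ -(x.2 ^ (p - 1)) ≠ 0 := by
    rcases hx1.eq_or_lt with h1 | h1
    · rcases hx2.eq_or_lt with h2 | h2
      · exfalso
        rw [← h1, ← h2] at hS
        simp [Real.zero_rpow hp0'] at hS
      · right
        simp only [ne_eq, neg_eq_zero]
        exact ne_of_gt (Real.rpow_pos_of_pos h2 _)
    · left; exact ne_of_gt (Real.rpow_pos_of_pos h1 _)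
  have hconv : StrictConvexOn ℝ Set.univ (Fp p x) := by
    rw [hfp]
    rcases hcases with hA | hB
    · exact (convexOn_affine_abs_rpow x.1 (-(x.2 ^ (p - 1))) hp).add_strictConvexOn
        (strictConvexOn_affine_abs_rpow hp hA)
    · exact (strictConvexOn_affine_abs_rpow hp hB).add_convexOn
        (convexOn_affine_abs_rpow x.2 (x.1 ^ (p - 1)) hp)
  -- part 4
  have part4 : ∀ r : ℝ, r ≠ 0 → 1 < Fp p x r := by
    intro r hr
    rcases lt_or_eq_of_le (hge r) with h | h
    · exact h
    exfalso
    have hmid := hconv.2 (Set.mem_univ 0) (Set.mem_univ r) (Ne.symm hr)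
      (by norm_num : (0:ℝ) < 1/2) (by norm_num : (0:ℝ) < 1/2) (by norm_num)
    simp only [smul_eq_mul, mul_zero, zero_add, hone, ← h] at hmid
    have := hge (1/2 * r)
    linarith
  -- part 1 : the identity
  have part1 : ∀ r : ℝ, Fp p x r = pnorm p (x + r • spow (rot x) (p - 1)) ^ p := by
    intro r
    have hv1 : Real.sign (rot x).1 * |(rot x).1| ^ (p - 1) = -(x.2 ^ (p - 1)) := by
      simp only [rot]
      rcases hx2.eq_or_lt with h2 | h2
      · rw [← h2]
        simp [Real.zero_rpow (ne_of_gt hp1)]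
      · rw [abs_neg, abs_of_pos h2, Real.sign_of_neg (neg_lt_zero.mpr h2)]
        ring
    have hv2 : Real.sign (rot x).2 * |(rot x).2| ^ (p - 1) = x.1 ^ (p - 1) := by
      simp only [rot]
      rcases hx1.eq_or_lt with h1 | h1
      · rw [← h1]
        simp [Real.zero_rpow (ne_of_gt hp1)]
      · rw [abs_of_pos h1, Real.sign_of_pos h1, one_mul]
    have hz : x + r • spow (rot x) (p - 1)
        = (x.1 - r * x.2 ^ (p - 1), x.2 + r * x.1 ^ (p - 1)) := by
      have hsp : spow (rot x) (p - 1) = (-(x.2 ^ (p - 1)), x.1 ^ (p - 1)) := by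
        simp only [spow]
        rw [hv1, hv2]
      rw [hsp, Prod.smul_mk, smul_eq_mul, smul_eq_mul]
      refine Prod.ext ?_ ?_ <;> simp <;> ring
    rw [hz]
    simp only [pnorm, Fp]
    have hnn : (0:ℝ) ≤ |x.1 - r * x.2 ^ (p - 1)| ^ p + |x.2 + r * x.1 ^ (p - 1)| ^ p :=
      add_nonneg (Real.rpow_nonneg (abs_nonneg _) _) (Real.rpow_nonneg (abs_nonneg _) _)
    rw [← Real.rpow_mul hnn, one_div_mul_cancel hp0', Real.rpow_one]
  -- strict monotonicity on [0, ∞)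
  have mono : StrictMonoOn (Fp p x) (Set.Ici 0) := by
    intro a ha b _ hab
    rcases (Set.mem_Ici.mp ha).eq_or_lt with h0 | h0
    · rw [← h0, hone]
      exact part4 b (by rw [← h0] at hab; exact hab.ne')
    · have hb0 : 0 < b := lt_trans h0 hab
      set t := a / b with ht
      have ht0 : 0 < t := div_pos h0 hb0
      have ht1 : t < 1 := (div_lt_one hb0).mpr hab
      have hkey := hconv.2 (Set.mem_univ 0) (Set.mem_univ b) (ne_of_lt hb0)
        (by linarith : (0:ℝ) < 1 - t) ht0 (by ring)
      simp only [smul_eq_mul, mul_zero, zero_add, hone] at hkey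
      rw [ht, div_mul_cancel₀ _ hb0.ne'] at hkey
      nlinarith [mul_nonneg (by linarith : (0:ℝ) ≤ 1 - t)
        (by linarith [hge b] : (0:ℝ) ≤ Fp p x b - 1)]
  -- strict antitonicity on (−∞, 0]
  have anti : StrictAntiOn (Fp p x) (Set.Iic 0) := by
    intro a _ b hb hab
    rcases (Set.mem_Iic.mp hb).lt_or_eq with h0 | h0
    · have ha0 : a < 0 := lt_trans hab h0
      set t := b / a with ht
      have ht0 : 0 < t := div_pos_of_neg_of_neg h0 ha0
      have ht1 : t < 1 := (div_lt_one_of_neg ha0).mpr hab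
      have hkey := hconv.2 (Set.mem_univ 0) (Set.mem_univ a) ((ne_of_lt ha0).symm)
        (by linarith : (0:ℝ) < 1 - t) ht0 (by ring)
      simp only [smul_eq_mul, mul_zero, zero_add, hone] at hkey
      rw [ht, div_mul_cancel₀ _ ha0.ne] at hkey
      nlinarith [mul_nonneg (by linarith : (0:ℝ) ≤ 1 - t)
        (by linarith [hge a] : (0:ℝ) ≤ Fp p x a - 1)]
    · rw [h0, hone]
      exact part4 a (by rw [h0] at hab; exact ne_of_lt hab)
  exact ⟨part1, mono, anti, part4⟩
end
end

section
/- Let 1 < p, q < ∞. Let x be an ℓ^p-unit vector with nonnegative coordinates and y an ℓ^q-unit vector with nonnegative coordinates, and let r ≠ 0 be a real number. Then there exists a unique s⁺ > 0 and a unique s⁻ < 0 such that ‖y + r·s^±·(y^o)^{q−1}‖_q = ‖x + r·(x^o)^{p−1}‖_p. -/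
noncomputable section

open Set Real


open Set Real


lemma abs_rpow_strictConvexOn {q : ℝ} (hq : 1 < q) :
    StrictConvexOn ℝ Set.univ (fun u : ℝ => |u| ^ q) := by
  have hq0 : (0:ℝ) < q := lt_trans one_pos hq
  have h := strictConvexOn_rpow hq
  refine ⟨convex_univ, ?_⟩
  intro x _ y _ hxy a b ha hb hab
  simp only [smul_eq_mul]
  have habs : |a * x + b * y| ≤ a * |x| + b * |y| := by
    calc |a*x + b*y| ≤ |a*x| + |b*y| := abs_add_le _ _
    _ = a*|x| + b*|y| := by rw [abs_mul, abs_mul, abs_of_pos ha, abs_of_pos hb]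
  by_cases hxy2 : |x| = |y|
  · have hx0 : x ≠ 0 := by
      rintro rfl
      apply hxy
      simpa [eq_comm, abs_eq_zero] using hxy2
    have hyx : y = -x := by
      rcases abs_eq_abs.1 hxy2 with h1 | h1
      · exact absurd h1 hxy
      · simp [h1]
    have hablt : |a - b| < 1 := by
      rw [abs_lt]; constructor <;> linarith
    have h1 : |a * x + b * y| = |a - b| * |x| := by
      rw [hyx, ← abs_mul]; ring_nf
    have h2 : |a * x + b * y| < |x| := by
      rw [h1]
      have hxp : (0:ℝ) < |x| := abs_pos.2 hx0
      nlinarith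
    calc |a * x + b * y| ^ q < |x| ^ q := rpow_lt_rpow (abs_nonneg _) h2 hq0
    _ = a * |x| ^ q + b * |y| ^ q := by
        rw [hyx, abs_neg]; linear_combination (|x|:ℝ) ^ q * hab.symm
  · have h3 := h.2 (mem_Ici.2 (abs_nonneg x)) (mem_Ici.2 (abs_nonneg y)) hxy2 ha hb hab
    simp only [smul_eq_mul] at h3
    calc |a * x + b * y| ^ q ≤ (a * |x| + b * |y|) ^ q :=
          rpow_le_rpow (abs_nonneg _) habs hq0.le
    _ < a * |x| ^ q + b * |y| ^ q := h3

lemma sc_affine {q : ℝ} (hq : 1 < q) (c d : ℝ) (hd : d ≠ 0) :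
    StrictConvexOn ℝ Set.univ (fun t : ℝ => |c + d * t| ^ q) := by
  have h := abs_rpow_strictConvexOn hq
  refine ⟨convex_univ, ?_⟩
  intro s _ t _ hst a b ha hb hab
  simp only [smul_eq_mul]
  have hkey : c + d * (a * s + b * t) = a * (c + d * s) + b * (c + d * t) := by
    linear_combination c * hab.symm
  have hne : c + d * s ≠ c + d * t := by
    intro hcon
    exact hst (mul_left_cancel₀ hd (by linarith))
  have h2 := h.2 (mem_univ (c + d * s)) (mem_univ (c + d * t)) hne ha hb hab
  simpa [hkey, smul_eq_mul] using h2

lemma cv_affine {q : ℝ} (hq : 1 < q) (c d : ℝ) :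
    ConvexOn ℝ Set.univ (fun t : ℝ => |c + d * t| ^ q) := by
  rcases eq_or_ne d 0 with rfl | hd
  · simpa using convexOn_const (|c| ^ q) convex_univ
  · exact (sc_affine hq c d hd).convexOn

lemma reach_aux {q c d K T : ℝ} (hq : 1 ≤ q) (h : |c| + |K| + 1 ≤ |d * T|) :
    K ≤ |c + d * T| ^ q := by
  have h1 : |K| + 1 ≤ |c + d * T| := by
    have h2 : |d * T| - |-c| ≤ |d * T - -c| := abs_sub_abs_le_abs_sub _ _
    rw [abs_neg, sub_neg_eq_add] at h2
    have : |d * T + c| = |c + d * T| := by rw [add_comm]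
    rw [this] at h2
    linarith
  calc K ≤ |c + d * T| := by linarith [le_abs_self K]
  _ = |c + d * T| ^ (1:ℝ) := (rpow_one _).symm
  _ ≤ |c + d * T| ^ q := rpow_le_rpow_of_exponent_le (by linarith [abs_nonneg K]) hq

lemma reach_pos (q c d K : ℝ) (hq : 1 ≤ q) (hd : d ≠ 0) :
    ∃ T, 0 < T ∧ K ≤ |c + d * T| ^ q := by
  have hdp : 0 < |d| := abs_pos.2 hd
  refine ⟨(|c| + |K| + 1) / |d|, by positivity, reach_aux hq ?_⟩
  rw [abs_mul, abs_of_pos (by positivity : (0:ℝ) < (|c| + |K| + 1) / |d|)]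
  rw [mul_div_cancel₀ _ (ne_of_gt hdp)]

lemma reach_neg (q c d K : ℝ) (hq : 1 ≤ q) (hd : d ≠ 0) :
    ∃ T, T < 0 ∧ K ≤ |c + d * T| ^ q := by
  have hdp : 0 < |d| := abs_pos.2 hd
  have hTpos : (0:ℝ) < (|c| + |K| + 1) / |d| := by positivity
  refine ⟨-((|c| + |K| + 1) / |d|), by linarith, reach_aux hq ?_⟩
  rw [mul_neg, abs_neg, abs_mul, abs_of_pos hTpos, mul_div_cancel₀ _ (ne_of_gt hdp)]

/-- Solve `f t = K` on the positive axis. -/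
lemma solveEqPos {f : ℝ → ℝ} {K : ℝ} (hconv : StrictConvexOn ℝ Set.univ f)
    (hmin : ∀ t, f 0 ≤ f t) (hcont : Continuous f)
    (htop : ∃ T, 0 < T ∧ K ≤ f T) (hK : f 0 < K) :
    ∃! t, 0 < t ∧ f t = K := by
  have mono : ∀ u v : ℝ, 0 ≤ u → u < v → f u < f v := by
    intro u v hu huv
    rcases eq_or_lt_of_le hu with rfl | hu'
    · have h2 := hconv.2 (mem_univ (0:ℝ)) (mem_univ v) (ne_of_lt huv)
        (by norm_num : (0:ℝ) < 1/2) (by norm_num : (0:ℝ) < 1/2) (by norm_num)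
      simp only [smul_eq_mul, mul_zero, zero_add] at h2
      have h3 := hmin ((1/2 : ℝ) * v)
      linarith
    · have hv : 0 < v := hu'.trans huv
      have hb0 : 0 < u / v := div_pos hu' hv
      have hb1 : u / v < 1 := (div_lt_one hv).2 huv
      have hid : (1 - u / v) * 0 + (u / v) * v = u := by field_simp; ring
      have h2 := hconv.2 (mem_univ (0:ℝ)) (mem_univ v) (ne_of_lt hv)
        (by linarith : (0:ℝ) < 1 - u / v) hb0 (by ring)
      simp only [smul_eq_mul, hid] at h2
      have h3 := hmin u
      nlinarith
  obtain ⟨T, hT, hTK⟩ := htop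
  have hmem : K ∈ Icc (f 0) (f T) := ⟨hK.le, hTK⟩
  obtain ⟨t, ⟨ht0, htT⟩, htK⟩ :=
    intermediate_value_Icc hT.le hcont.continuousOn hmem
  have htpos : 0 < t := by
    rcases eq_or_lt_of_le ht0 with rfl | h
    · exact absurd htK (ne_of_lt hK)
    · exact h
  refine ⟨t, ⟨htpos, htK⟩, ?_⟩
  rintro s ⟨hs, hsK⟩
  rcases lt_trichotomy s t with h | h | h
  · exact absurd (hsK.trans htK.symm) (ne_of_lt (mono s t hs.le h))
  · exact h
  · exact absurd (htK.trans hsK.symm) (ne_of_lt (mono t s htpos.le h))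

lemma solveEq {f : ℝ → ℝ} {K : ℝ} (hconv : StrictConvexOn ℝ Set.univ f)
    (hmin : ∀ t, f 0 ≤ f t) (hcont : Continuous f)
    (htop : ∃ T, 0 < T ∧ K ≤ f T) (hbot : ∃ T, T < 0 ∧ K ≤ f T) (hK : f 0 < K) :
    (∃! t, 0 < t ∧ f t = K) ∧ (∃! t, t < 0 ∧ f t = K) := by
  refine ⟨solveEqPos hconv hmin hcont htop hK, ?_⟩
  have hconvneg : StrictConvexOn ℝ Set.univ (fun t => f (-t)) := by
    refine ⟨convex_univ, ?_⟩
    intro x _ y _ hxy a b ha hb hab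
    have h2 := hconv.2 (mem_univ (-x)) (mem_univ (-y))
      (fun h => hxy (neg_injective h)) ha hb hab
    simpa [smul_eq_mul, mul_neg, neg_add, add_comm] using h2
  obtain ⟨T, hT, hTK⟩ := hbot
  have h := solveEqPos hconvneg (by intro t; simpa using hmin (-t))
    (hcont.comp continuous_neg) ⟨-T, by linarith, by simpa using hTK⟩ (by simpa using hK)
  obtain ⟨t, ⟨ht, htK⟩, huniq⟩ := h
  refine ⟨-t, ⟨by linarith, by simpa using htK⟩, ?_⟩
  rintro s ⟨hs, hsK⟩
  have := huniq (-s) ⟨by linarith, by simpa using hsK⟩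
  linarith [this]

/-- The q-th power of the q-norm along the curve. -/
def Fc (q : ℝ) (y : ℝ × ℝ) (t : ℝ) : ℝ :=
  |y.1 + -(y.2 ^ (q - 1)) * t| ^ q + |y.2 + y.1 ^ (q - 1) * t| ^ q

section core

variable {q : ℝ} {y : ℝ × ℝ}

lemma Fc_nonneg (q : ℝ) (y : ℝ × ℝ) (t : ℝ) : 0 ≤ Fc q y t := by
  unfold Fc; positivity

lemma Fc_zero (hq : 1 < q) (hyq : |y.1| ^ q + |y.2| ^ q = 1) : Fc q y 0 = 1 := by
  unfold Fc; simp only [mul_zero, add_zero]; exact hyq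

lemma coord_ne (hq : 1 < q) (hy1 : 0 ≤ y.1) (hy2 : 0 ≤ y.2)
    (hyq : |y.1| ^ q + |y.2| ^ q = 1) : y.2 ^ (q - 1) ≠ 0 ∨ y.1 ^ (q - 1) ≠ 0 := by
  by_contra hcon
  push_neg at hcon
  obtain ⟨h1, h2⟩ := hcon
  have hy2' : y.2 = 0 := by
    by_contra h
    exact absurd h1 (ne_of_gt (rpow_pos_of_pos (lt_of_le_of_ne hy2 (Ne.symm h)) _))
  have hy1' : y.1 = 0 := by
    by_contra h
    exact absurd h2 (ne_of_gt (rpow_pos_of_pos (lt_of_le_of_ne hy1 (Ne.symm h)) _))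
  rw [hy1', hy2'] at hyq
  simp [Real.zero_rpow (by positivity : q ≠ 0)] at hyq

lemma Fc_strictConvex (hq : 1 < q) (hy1 : 0 ≤ y.1) (hy2 : 0 ≤ y.2)
    (hyq : |y.1| ^ q + |y.2| ^ q = 1) :
    StrictConvexOn ℝ Set.univ (Fc q y) := by
  rcases coord_ne hq hy1 hy2 hyq with h | h
  · exact (sc_affine hq y.1 (-(y.2 ^ (q-1))) (neg_ne_zero.2 h)).add_convexOn
      (cv_affine hq y.2 (y.1 ^ (q-1)))
  · exact (cv_affine hq y.1 (-(y.2 ^ (q-1)))).add_strictConvexOn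
      (sc_affine hq y.2 (y.1 ^ (q-1)) h)

lemma Fc_cont (hq : 1 < q) : Continuous (Fc q y) := by
  have hq0 : (0:ℝ) ≤ q := by linarith
  apply Continuous.add
  · exact ((continuous_const.add (continuous_const.mul continuous_id)).abs).rpow_const
      (fun x => Or.inr hq0)
  · exact ((continuous_const.add (continuous_const.mul continuous_id)).abs).rpow_const
      (fun x => Or.inr hq0)

lemma rpow_self_mul (a : ℝ) (ha : 0 ≤ a) (hq : 1 < q) : a ^ (q - 1) * a = |a| ^ q := by
  rcases eq_or_lt_of_le ha with rfl | ha'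
  · simp [Real.zero_rpow (by intro h; linarith [h] : q - 1 ≠ 0),
      Real.zero_rpow (by positivity : q ≠ 0)]
  · rw [abs_of_pos ha']
    have : a ^ (q - 1) * a ^ (1:ℝ) = a ^ (q - 1 + 1) := (Real.rpow_add ha' _ _).symm
    rw [rpow_one] at this
    rw [this]
    norm_num

lemma Fc_min (hq : 1 < q) (hy1 : 0 ≤ y.1) (hy2 : 0 ≤ y.2)
    (hyq : |y.1| ^ q + |y.2| ^ q = 1) : ∀ t, 1 ≤ Fc q y t := by
  intro t
  have hq0 : (0:ℝ) < q := by linarith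
  have hcq : (q.conjExponent).HolderConjugate q :=
    (Real.HolderConjugate.conjExponent hq).symm
  set q' := q.conjExponent with hq'def
  have hq'pos : 0 < q' := hcq.pos
  set z1 := y.1 + -(y.2 ^ (q - 1)) * t with hz1
  set z2 := y.2 + y.1 ^ (q - 1) * t with hz2
  have hA := Real.young_inequality (y.1 ^ (q - 1)) z1 hcq
  have hB := Real.young_inequality (y.2 ^ (q - 1)) z2 hcq
  have hexp : (q - 1) * q' = q := by
    have hne : q - 1 ≠ 0 := sub_ne_zero.mpr hq.ne'
    rw [hq'def, Real.conjExponent]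
    field_simp
  have e1 : |y.1 ^ (q - 1)| ^ q' = |y.1| ^ q := by
    rw [abs_of_nonneg (rpow_nonneg hy1 _), abs_of_nonneg hy1, ← Real.rpow_mul hy1, hexp]
  have e2 : |y.2 ^ (q - 1)| ^ q' = |y.2| ^ q := by
    rw [abs_of_nonneg (rpow_nonneg hy2 _), abs_of_nonneg hy2, ← Real.rpow_mul hy2, hexp]
  have i1 : y.1 ^ (q - 1) * y.1 = |y.1| ^ q := rpow_self_mul y.1 hy1 hq
  have i2 : y.2 ^ (q - 1) * y.2 = |y.2| ^ q := rpow_self_mul y.2 hy2 hq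
  have key : y.1 ^ (q - 1) * z1 + y.2 ^ (q - 1) * z2 = 1 := by
    rw [hz1, hz2]
    linear_combination i1 + i2 + hyq
  rw [e1] at hA
  rw [e2] at hB
  have hsum : 1 ≤ (|y.1| ^ q + |y.2| ^ q) / q' + (|z1| ^ q + |z2| ^ q) / q := by
    rw [← key]
    have : (|y.1| ^ q + |y.2| ^ q) / q' + (|z1| ^ q + |z2| ^ q) / q
        = (|y.1| ^ q / q' + |z1| ^ q / q) + (|y.2| ^ q / q' + |z2| ^ q / q) := by ring
    rw [this]
    exact add_le_add hA hB
  rw [hyq] at hsum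
  have hconj := hcq.inv_add_inv_eq_one
  have hFt : Fc q y t = |z1| ^ q + |z2| ^ q := rfl
  rw [hFt]
  have hq'inv : 1 / q' = 1 - 1 / q := by
    rw [one_div, one_div]; linarith
  rw [hq'inv] at hsum
  have h4 : 1 / q ≤ (|z1| ^ q + |z2| ^ q) / q := by linarith
  have h5 := (div_le_div_iff_of_pos_right hq0).1 h4
  linarith

lemma Fc_gt_one (hq : 1 < q) (hy1 : 0 ≤ y.1) (hy2 : 0 ≤ y.2)
    (hyq : |y.1| ^ q + |y.2| ^ q = 1) {t : ℝ} (ht : t ≠ 0) : 1 < Fc q y t := by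
  have hconv := Fc_strictConvex hq hy1 hy2 hyq
  have h2 := hconv.2 (mem_univ (0:ℝ)) (mem_univ t) (fun h => ht h.symm)
    (by norm_num : (0:ℝ) < 1/2) (by norm_num : (0:ℝ) < 1/2) (by norm_num)
  simp only [smul_eq_mul, mul_zero, zero_add] at h2
  rw [Fc_zero hq hyq] at h2
  have h3 := Fc_min hq hy1 hy2 hyq ((1/2 : ℝ) * t)
  linarith

lemma Fc_solve (hq : 1 < q) (hy1 : 0 ≤ y.1) (hy2 : 0 ≤ y.2)
    (hyq : |y.1| ^ q + |y.2| ^ q = 1) {K : ℝ} (hK : 1 < K) :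
    (∃! t, 0 < t ∧ Fc q y t = K) ∧ (∃! t, t < 0 ∧ Fc q y t = K) := by
  have hmin : ∀ t, Fc q y 0 ≤ Fc q y t := by
    intro t; rw [Fc_zero hq hyq]; exact Fc_min hq hy1 hy2 hyq t
  have htop : ∃ T, 0 < T ∧ K ≤ Fc q y T := by
    rcases coord_ne hq hy1 hy2 hyq with h | h
    · obtain ⟨T, hT, hle⟩ := reach_pos q y.1 (-(y.2 ^ (q-1))) K hq.le (neg_ne_zero.2 h)
      exact ⟨T, hT, hle.trans (le_add_of_nonneg_right (by positivity))⟩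
    · obtain ⟨T, hT, hle⟩ := reach_pos q y.2 (y.1 ^ (q-1)) K hq.le h
      exact ⟨T, hT, hle.trans (le_add_of_nonneg_left (by positivity))⟩
  have hbot : ∃ T, T < 0 ∧ K ≤ Fc q y T := by
    rcases coord_ne hq hy1 hy2 hyq with h | h
    · obtain ⟨T, hT, hle⟩ := reach_neg q y.1 (-(y.2 ^ (q-1))) K hq.le (neg_ne_zero.2 h)
      exact ⟨T, hT, hle.trans (le_add_of_nonneg_right (by positivity))⟩
    · obtain ⟨T, hT, hle⟩ := reach_neg q y.2 (y.1 ^ (q-1)) K hq.le h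
      exact ⟨T, hT, hle.trans (le_add_of_nonneg_left (by positivity))⟩
  exact solveEq (Fc_strictConvex hq hy1 hy2 hyq) hmin (Fc_cont hq) htop hbot
    (by rw [Fc_zero hq hyq]; exact hK)

end core

lemma scale_lemma {f : ℝ → ℝ} {K r : ℝ} (hr : r ≠ 0)
    (hpos : ∃! t, 0 < t ∧ f t = K) (hneg : ∃! t, t < 0 ∧ f t = K) :
    (∃! s, 0 < s ∧ f (r * s) = K) ∧ (∃! s, s < 0 ∧ f (r * s) = K) := by
  obtain ⟨tp, ⟨htp, htpK⟩, huniqp⟩ := hpos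
  obtain ⟨tn, ⟨htn, htnK⟩, huniqn⟩ := hneg
  rcases hr.lt_or_gt with hrneg | hrpos
  · constructor
    · refine ⟨tn / r, ⟨div_pos_of_neg_of_neg htn hrneg, by
        rw [mul_div_cancel₀ _ hr]; exact htnK⟩, ?_⟩
      rintro s ⟨hs, hsK⟩
      have h := huniqn (r * s) ⟨mul_neg_of_neg_of_pos hrneg hs, hsK⟩
      field_simp [h.symm]; linarith [h]
    · refine ⟨tp / r, ⟨div_neg_of_pos_of_neg htp hrneg, by
        rw [mul_div_cancel₀ _ hr]; exact htpK⟩, ?_⟩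
      rintro s ⟨hs, hsK⟩
      have h := huniqp (r * s) ⟨mul_pos_of_neg_of_neg hrneg hs, hsK⟩
      field_simp [h.symm]; linarith [h]
  · constructor
    · refine ⟨tp / r, ⟨div_pos htp hrpos, by
        rw [mul_div_cancel₀ _ hr]; exact htpK⟩, ?_⟩
      rintro s ⟨hs, hsK⟩
      have h := huniqp (r * s) ⟨mul_pos hrpos hs, hsK⟩
      field_simp [h.symm]; linarith [h]
    · refine ⟨tn / r, ⟨div_neg_of_neg_of_pos htn hrpos, by
        rw [mul_div_cancel₀ _ hr]; exact htnK⟩, ?_⟩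
      rintro s ⟨hs, hsK⟩
      have h := huniqn (r * s) ⟨mul_neg_of_pos_of_neg hrpos hs, hsK⟩
      field_simp [h.symm]; linarith [h]


lemma spow_rot_eq {q : ℝ} (hq : 1 < q) {y : ℝ × ℝ} (hy1 : 0 ≤ y.1) (hy2 : 0 ≤ y.2) :
    spow (rot y) (q - 1) = (-(y.2 ^ (q - 1)), y.1 ^ (q - 1)) := by
  have hq1 : q - 1 ≠ 0 := sub_ne_zero.mpr hq.ne'
  unfold spow rot
  have h1 : Real.sign (-y.2) * |(-y.2)| ^ (q - 1) = -(y.2 ^ (q - 1)) := by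
    rcases eq_or_lt_of_le hy2 with h | h
    · rw [← h]; simp [Real.zero_rpow hq1]
    · rw [Real.sign_of_neg (by linarith), abs_neg, abs_of_pos h]; ring
  have h2 : Real.sign y.1 * |y.1| ^ (q - 1) = y.1 ^ (q - 1) := by
    rcases eq_or_lt_of_le hy1 with h | h
    · rw [← h]; simp [Real.zero_rpow hq1]
    · rw [Real.sign_of_pos h, abs_of_pos h, one_mul]
  simp only [h1, h2]

lemma pnorm_curve {q : ℝ} (hq : 1 < q) {y : ℝ × ℝ} (hy1 : 0 ≤ y.1) (hy2 : 0 ≤ y.2)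
    (t : ℝ) : pnorm q (y + t • spow (rot y) (q - 1)) = Fc q y t ^ (1 / q) := by
  rw [spow_rot_eq hq hy1 hy2]
  have hc1 : (y + t • ((-(y.2 ^ (q - 1)), y.1 ^ (q - 1)) : ℝ × ℝ)).1
      = y.1 + -(y.2 ^ (q - 1)) * t := by
    simp [Prod.fst_add, smul_eq_mul]; ring
  have hc2 : (y + t • ((-(y.2 ^ (q - 1)), y.1 ^ (q - 1)) : ℝ × ℝ)).2
      = y.2 + y.1 ^ (q - 1) * t := by
    simp [Prod.snd_add, smul_eq_mul]; ring
  rw [pnorm, hc1, hc2]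
  rfl


/-- Existence and uniqueness of s₊ > 0 and s₋ < 0 with
  ‖y + r·s·(y^o)^{q−1}‖_q = ‖x + r·(x^o)^{p−1}‖_p for fixed r ≠ 0. -/
theorem stmt_13 (p q : ℝ) (hp : 1 < p) (hq : 1 < q)
    (x y : ℝ × ℝ) (hx : pnorm p x = 1) (hy : pnorm q y = 1)
    (hx1 : 0 ≤ x.1) (hx2 : 0 ≤ x.2) (hy1 : 0 ≤ y.1) (hy2 : 0 ≤ y.2)
    (r : ℝ) (hr : r ≠ 0) :
    (∃! s : ℝ, 0 < s ∧
      pnorm q (y + (r * s) • spow (rot y) (q - 1)) = pnorm p (x + r • spow (rot x) (p - 1))) ∧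
    (∃! s : ℝ, s < 0 ∧
      pnorm q (y + (r * s) • spow (rot y) (q - 1)) = pnorm p (x + r • spow (rot x) (p - 1))) := by
  have hp0 : (0:ℝ) < p := by linarith
  have hq0 : (0:ℝ) < q := by linarith
  have norm_sq : ∀ (w : ℝ) (z : ℝ × ℝ), 0 < w → pnorm w z = 1 →
      |z.1| ^ w + |z.2| ^ w = 1 := by
    intro w z hw hz
    have hS : (0:ℝ) ≤ |z.1| ^ w + |z.2| ^ w := by positivity
    have h2 := congrArg (· ^ w) hz
    simp only [pnorm, Real.one_rpow] at h2
    rwa [← Real.rpow_mul hS, one_div_mul_cancel (ne_of_gt hw), Real.rpow_one] at h2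
  have hxq : |x.1| ^ p + |x.2| ^ p = 1 := norm_sq p x hp0 hx
  have hyq : |y.1| ^ q + |y.2| ^ q = 1 := norm_sq q y hq0 hy
  have hFxr : 1 < Fc p x r := Fc_gt_one hp hx1 hx2 hxq hr
  set Kp := Fc p x r ^ (1 / p) with hKpdef
  have hKp : 1 < Kp := by
    rw [hKpdef]
    exact (Real.one_lt_rpow_iff_of_pos (by linarith)).2 (Or.inl ⟨hFxr, by positivity⟩)
  have hKp0 : (0:ℝ) ≤ Kp := by linarith
  set C := Kp ^ q with hCdef
  have hC : 1 < C := by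
    rw [hCdef]
    exact (Real.one_lt_rpow_iff_of_pos (by linarith)).2 (Or.inl ⟨hKp, hq0⟩)
  have hiff : ∀ t : ℝ, Fc q y t ^ (1 / q) = Kp ↔ Fc q y t = C := by
    intro t
    have h0 : (0:ℝ) ≤ Fc q y t := Fc_nonneg _ _ _
    constructor
    · intro h
      have e : (Fc q y t ^ (1 / q)) ^ q = Fc q y t := by
        rw [← Real.rpow_mul h0, one_div_mul_cancel (ne_of_gt hq0), Real.rpow_one]
      rw [hCdef, ← h, e]
    · intro h
      rw [h, hCdef, ← Real.rpow_mul hKp0, mul_one_div_cancel (ne_of_gt hq0), Real.rpow_one]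
  have hsolve := Fc_solve hq hy1 hy2 hyq hC
  have hscale := scale_lemma (f := Fc q y) hr hsolve.1 hsolve.2
  have hRx : pnorm p (x + r • spow (rot x) (p - 1)) = Kp := pnorm_curve hp hx1 hx2 r
  simp only [pnorm_curve hq hy1 hy2, hRx, hiff]
  exact hscale

end
end

section
/- Let 1 < p, q < ∞ with conjugate exponents p' = p/(p−1) and q' = q/(q−1). Let T : ℝ² → ℝ² be a linear operator with operator norm ‖T‖ = 1 from ℓ^p_2 to ℓ^q_2, and let T* : ℝ² → ℝ² be its adjoint, given by the transpose matrix, regarded as an operator from ℓ^{q'}_2 to ℓ^{p'}_2. Then T attains its norm on two linearly independent vectors if and only if T* attains its norm on two linearly independent vectors. -/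
noncomputable section

namespace Aux

def dot (x y : ℝ × ℝ) : ℝ := x.1 * y.1 + x.2 * y.2

lemma dot_transpose (A : Matrix (Fin 2) (Fin 2) ℝ) (x y : ℝ × ℝ) :
    dot (app A.transpose y) x = dot y (app A x) := by
  simp [dot, app, Matrix.transpose_apply]; ring

lemma app_smul (A : Matrix (Fin 2) (Fin 2) ℝ) (s : ℝ) (x : ℝ × ℝ) :
    app A (s • x) = s • app A x := by
  simp [app, Prod.smul_def, smul_eq_mul]; constructor <;> ring

lemma app_zero (A : Matrix (Fin 2) (Fin 2) ℝ) : app A 0 = 0 := by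
  simp [app]

lemma pnorm_nonneg (r : ℝ) (z : ℝ × ℝ) : 0 ≤ pnorm r z :=
  Real.rpow_nonneg (by positivity) _

lemma sum_pos_of_ne_zero {r : ℝ} (hr : 0 < r) {z : ℝ × ℝ} (hz : z ≠ 0) :
    0 < |z.1| ^ r + |z.2| ^ r := by
  have h1 : (0:ℝ) ≤ |z.1| ^ r := by positivity
  have h2 : (0:ℝ) ≤ |z.2| ^ r := by positivity
  rcases eq_or_ne z.1 0 with h | h
  · have hz2 : z.2 ≠ 0 := fun h2' => hz (Prod.ext h h2')
    have : 0 < |z.2| ^ r := Real.rpow_pos_of_pos (abs_pos.2 hz2) r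
    linarith
  · have : 0 < |z.1| ^ r := Real.rpow_pos_of_pos (abs_pos.2 h) r
    linarith

lemma pnorm_pos {r : ℝ} (hr : 0 < r) {z : ℝ × ℝ} (hz : z ≠ 0) : 0 < pnorm r z :=
  Real.rpow_pos_of_pos (sum_pos_of_ne_zero hr hz) _

lemma pnorm_zero {r : ℝ} (hr : 0 < r) : pnorm r 0 = 0 := by
  rw [pnorm]
  simp [Real.zero_rpow hr.ne', Real.zero_rpow (inv_ne_zero hr.ne')]

lemma pnorm_rpow {r : ℝ} (hr : 0 < r) (z : ℝ × ℝ) :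
    pnorm r z ^ r = |z.1| ^ r + |z.2| ^ r := by
  rw [pnorm, ← Real.rpow_mul (by positivity), one_div, inv_mul_cancel₀ hr.ne', Real.rpow_one]

lemma pnorm_smul {r : ℝ} (hr : 0 < r) (s : ℝ) (z : ℝ × ℝ) :
    pnorm r (s • z) = |s| * pnorm r z := by
  have habs : ∀ t : ℝ, |s * t| ^ r = |s| ^ r * |t| ^ r := fun t => by
    rw [abs_mul, Real.mul_rpow (abs_nonneg _) (abs_nonneg _)]
  rw [pnorm, pnorm, Prod.smul_def, smul_eq_mul, smul_eq_mul]
  simp only [habs]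
  rw [← mul_add, Real.mul_rpow (by positivity) (by positivity),
    ← Real.rpow_mul (abs_nonneg s), mul_one_div, div_self hr.ne', Real.rpow_one]

lemma rsign_mul_abs (x : ℝ) : Real.sign x * |x| = x := by
  rcases lt_trichotomy x 0 with h | h | h
  · rw [Real.sign_of_neg h, abs_of_neg h]; ring
  · simp [h]
  · rw [Real.sign_of_pos h, abs_of_pos h]; ring

lemma rsign_mul_self (x : ℝ) : Real.sign x * x = |x| := by
  rcases lt_trichotomy x 0 with h | h | h
  · rw [Real.sign_of_neg h, abs_of_neg h]; ring
  · simp [h]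
  · rw [Real.sign_of_pos h, abs_of_pos h]; ring

lemma rsign_mul (x y : ℝ) : Real.sign (x * y) = Real.sign x * Real.sign y := by
  rcases lt_trichotomy x 0 with hx | hx | hx <;> rcases lt_trichotomy y 0 with hy | hy | hy
  · rw [Real.sign_of_pos (mul_pos_of_neg_of_neg hx hy), Real.sign_of_neg hx,
      Real.sign_of_neg hy]; ring
  · simp [hy]
  · rw [Real.sign_of_neg (mul_neg_of_neg_of_pos hx hy), Real.sign_of_neg hx,
      Real.sign_of_pos hy]; ring
  · simp [hx]
  · simp [hx]
  · simp [hx]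
  · rw [Real.sign_of_neg (mul_neg_of_pos_of_neg hx hy), Real.sign_of_pos hx,
      Real.sign_of_neg hy]; ring
  · simp [hy]
  · rw [Real.sign_of_pos (mul_pos hx hy), Real.sign_of_pos hx, Real.sign_of_pos hy]; ring

lemma abs_scomp {r : ℝ} (hr : 0 < r) (x : ℝ) : |Real.sign x * |x| ^ r| = |x| ^ r := by
  rcases eq_or_ne x 0 with h | h
  · simp [h, Real.zero_rpow hr.ne']
  · rw [abs_mul, Real.abs_rpow_of_nonneg (abs_nonneg x), abs_abs]
    rcases Real.sign_apply_eq_of_ne_zero x h with hs | hs <;> simp [hs]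

lemma sign_scomp {r : ℝ} (x : ℝ) : Real.sign (Real.sign x * |x| ^ r) = Real.sign x := by
  rcases lt_trichotomy x 0 with h | h | h
  · have hpos : (0:ℝ) < |x| ^ r := Real.rpow_pos_of_pos (abs_pos.2 h.ne) r
    rw [Real.sign_of_neg h]
    rw [Real.sign_of_neg (by nlinarith)]
  · simp [h]
  · have hpos : (0:ℝ) < |x| ^ r := Real.rpow_pos_of_pos (abs_pos.2 h.ne') r
    rw [Real.sign_of_pos h]
    rw [Real.sign_of_pos (by nlinarith)]

lemma scomp_mul {r : ℝ} (hr : 0 < r) (c x : ℝ) :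
    Real.sign (c * x) * |c * x| ^ r
      = (Real.sign c * |c| ^ r) * (Real.sign x * |x| ^ r) := by
  rw [rsign_mul, abs_mul, Real.mul_rpow (abs_nonneg c) (abs_nonneg x)]; ring

lemma scomp_scomp {r s : ℝ} (hr : 0 < r) (hs : 0 < s) (x : ℝ) :
    Real.sign (Real.sign x * |x| ^ r) * |Real.sign x * |x| ^ r| ^ s
      = Real.sign x * |x| ^ (r * s) := by
  rw [sign_scomp, abs_scomp hr, ← Real.rpow_mul (abs_nonneg x)]

lemma spow_smul {r : ℝ} (hr : 0 < r) (c : ℝ) (z : ℝ × ℝ) :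
    spow (c • z) r = (Real.sign c * |c| ^ r) • spow z r := by
  unfold spow
  rw [Prod.smul_def, Prod.smul_def]
  simp only [smul_eq_mul]
  exact Prod.ext (scomp_mul hr c z.1) (scomp_mul hr c z.2)

lemma spow_spow {r s : ℝ} (hr : 0 < r) (hs : 0 < s) (z : ℝ × ℝ) :
    spow (spow z r) s = spow z (r * s) := by
  unfold spow
  exact Prod.ext (scomp_scomp hr hs z.1) (scomp_scomp hr hs z.2)

lemma spow_one (z : ℝ × ℝ) : spow z 1 = z := by
  unfold spow
  simp only [Real.rpow_one]
  exact Prod.ext (rsign_mul_abs z.1) (rsign_mul_abs z.2)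

lemma spow_eq_zero {r : ℝ} {z : ℝ × ℝ} (h : spow z r = 0) : z = 0 := by
  unfold spow at h
  rw [Prod.ext_iff] at h ⊢
  obtain ⟨h1, h2⟩ := h
  constructor
  · by_contra hne
    rcases mul_eq_zero.1 h1 with hs | ha
    · exact hne (Real.sign_eq_zero_iff.1 hs)
    · exact hne (abs_eq_zero.1 (by
        by_contra hab
        exact (Real.rpow_pos_of_pos (abs_pos.2 hne) r).ne' ha))
  · by_contra hne
    rcases mul_eq_zero.1 h2 with hs | ha
    · exact hne (Real.sign_eq_zero_iff.1 hs)
    · exact hne (abs_eq_zero.1 (by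
        by_contra hab
        exact (Real.rpow_pos_of_pos (abs_pos.2 hne) r).ne' ha))

lemma pnorm_spow {r s : ℝ} (hr : 0 < r) (hs : 0 < s) (z : ℝ × ℝ) :
    pnorm s (spow z r) = pnorm (r * s) z ^ r := by
  unfold pnorm spow
  simp only [abs_scomp hr]
  rw [← Real.rpow_mul (abs_nonneg z.1), ← Real.rpow_mul (abs_nonneg z.2),
    ← Real.rpow_mul (by positivity)]
  congr 1
  field_simp

lemma dot_spow {r : ℝ} (hr : 1 < r) (v : ℝ × ℝ) :
    dot (spow v (r - 1)) v = pnorm r v ^ r := by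
  rw [pnorm_rpow (by linarith : (0:ℝ) < r)]
  unfold dot spow
  have key : ∀ t : ℝ, Real.sign t * |t| ^ (r - 1) * t = |t| ^ r := by
    intro t
    rcases eq_or_ne t 0 with h | h
    · rw [h]; simp [Real.zero_rpow (by linarith : r ≠ 0)]
    · have : |t| ^ r = |t| ^ (r - 1) * |t| := by
        rw [← Real.rpow_add_one (abs_ne_zero.2 h)]; ring_nf
      rw [this, mul_assoc, mul_comm (|t| ^ (r-1)), ← mul_assoc, rsign_mul_self]
      ring
  rw [key v.1, key v.2]


/-! ### Linear independence via determinants -/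

lemma li_iff_det (z w : ℝ × ℝ) :
    LinearIndependent ℝ ![z, w] ↔ z.1 * w.2 - z.2 * w.1 ≠ 0 := by
  rw [LinearIndependent.pair_iff]
  constructor
  · intro h hdet
    rcases eq_or_ne z 0 with hz | hz
    · have := (h 1 0 (by simp [hz])).1
      norm_num at this
    · rcases eq_or_ne z.1 0 with h1 | h1
      · have h2 : z.2 ≠ 0 := by
          intro h2; exact hz (Prod.ext h1 h2)
        have := (h (-w.2) z.2 (by
          rw [Prod.ext_iff]
          constructor <;> simp [Prod.smul_def, smul_eq_mul] <;> nlinarith)).2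
        exact h2 this
      · have := (h (-w.1) z.1 (by
          rw [Prod.ext_iff]
          constructor <;> simp [Prod.smul_def, smul_eq_mul] <;> nlinarith)).2
        exact h1 this
  · intro hdet s t hst
    rw [Prod.ext_iff] at hst
    simp only [Prod.smul_def, smul_eq_mul, Prod.fst_add, Prod.snd_add, Prod.fst_zero,
      Prod.snd_zero] at hst
    obtain ⟨h1, h2⟩ := hst
    constructor
    · have hs : s * (z.1 * w.2 - z.2 * w.1) = 0 := by linear_combination w.2 * h1 - w.1 * h2
      rcases mul_eq_zero.1 hs with h | h
      · exact h
      · exact absurd h hdet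
    · have ht : t * (z.1 * w.2 - z.2 * w.1) = 0 := by linear_combination z.1 * h2 - z.2 * h1
      rcases mul_eq_zero.1 ht with h | h
      · exact h
      · exact absurd h hdet

lemma exists_smul_of_det_eq_zero {z w : ℝ × ℝ} (hz : z ≠ 0)
    (h : z.1 * w.2 - z.2 * w.1 = 0) : ∃ c : ℝ, w = c • z := by
  rcases eq_or_ne z.1 0 with h1 | h1
  · have h2 : z.2 ≠ 0 := fun h2 => hz (Prod.ext h1 h2)
    refine ⟨w.2 / z.2, ?_⟩
    rw [Prod.ext_iff]
    constructor
    · simp only [Prod.smul_def, smul_eq_mul]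
      rw [h1, mul_zero]
      rw [h1] at h
      have hz2 : z.2 * w.1 = 0 := by linarith
      rcases mul_eq_zero.1 hz2 with hh | hh
      · exact absurd hh h2
      · exact hh
    · simp only [Prod.smul_def, smul_eq_mul]
      field_simp
  · refine ⟨w.1 / z.1, ?_⟩
    rw [Prod.ext_iff]
    constructor
    · simp only [Prod.smul_def, smul_eq_mul]
      field_simp
    · simp only [Prod.smul_def, smul_eq_mul]
      field_simp
      nlinarith

lemma li_spow {s : ℝ} (hs : 0 < s) {u v : ℝ × ℝ} (h : LinearIndependent ℝ ![u, v]) :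
    LinearIndependent ℝ ![spow u s, spow v s] := by
  have hu : u ≠ 0 := by
    intro h0
    rw [li_iff_det] at h
    apply h; rw [h0]; simp
  rw [li_iff_det]
  intro hdet
  have hsu : spow u s ≠ 0 := fun h0 => hu (spow_eq_zero h0)
  obtain ⟨c, hc⟩ := exists_smul_of_det_eq_zero hsu hdet
  have hv : v = (Real.sign c * |c| ^ (1/s)) • u := by
    have : spow (spow v s) (1/s) = spow ((c • spow u s)) (1/s) := by rw [hc]
    rw [spow_spow hs (by positivity), spow_smul (by positivity),
      spow_spow hs (by positivity)] at this
    rw [mul_one_div, div_self hs.ne', spow_one, spow_one] at this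
    exact this
  rw [li_iff_det] at h
  apply h
  rw [hv]
  simp only [Prod.smul_def, smul_eq_mul]
  ring

/-! ### Hölder's inequality -/

lemma isConj {r : ℝ} (hr : 1 < r) : Real.HolderConjugate r (r / (r - 1)) := by
  exact Real.HolderConjugate.conjExponent hr

lemma conj_pos {r : ℝ} (hr : 1 < r) : 1 < r / (r - 1) := (isConj hr).symm.lt

lemma conj_conj {r : ℝ} (hr : 1 < r) : (r / (r - 1)) / (r / (r - 1) - 1) = r := by
  have h1 : r - 1 ≠ 0 := by linarith
  field_simp
  ring

lemma holder {r : ℝ} (hr : 1 < r) (x y : ℝ × ℝ) :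
    dot x y ≤ pnorm r x * pnorm (r / (r - 1)) y := by
  have := Real.inner_le_Lp_mul_Lq (s := Finset.univ) (f := ![x.1, x.2]) (g := ![y.1, y.2]) (isConj hr)
  simpa [Fin.sum_univ_two, dot, pnorm] using this


/-! ### Strict Young and Hölder equality case -/

lemma young_strict {p₁ p₂ : ℝ} (hpq : Real.HolderConjugate p₁ p₂) {a b : ℝ}
    (ha : 0 ≤ a) (hb : 0 ≤ b) (hne : a ^ p₁ ≠ b ^ p₂) :
    a * b < a ^ p₁ / p₁ + b ^ p₂ / p₂ := by
  have hp1 : 0 < p₁ := hpq.pos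
  have hp2 : 0 < p₂ := hpq.symm.pos
  rcases eq_or_lt_of_le ha with ha0 | ha0
  · rw [← ha0] at hne ⊢
    rw [Real.zero_rpow hp1.ne'] at hne ⊢
    have hb0 : b ≠ 0 := by
      intro h; rw [h, Real.zero_rpow hp2.ne'] at hne; exact hne rfl
    have : 0 < b ^ p₂ := Real.rpow_pos_of_pos (lt_of_le_of_ne hb (Ne.symm hb0)) _
    rw [zero_mul, zero_div, zero_add]
    positivity
  rcases eq_or_lt_of_le hb with hb0 | hb0
  · rw [← hb0] at hne ⊢
    rw [Real.zero_rpow hp2.ne'] at hne ⊢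
    have : 0 < a ^ p₁ := Real.rpow_pos_of_pos ha0 _
    rw [mul_zero, zero_div, add_zero]
    positivity
  · have hA : (0:ℝ) < a ^ p₁ := Real.rpow_pos_of_pos ha0 _
    have hB : (0:ℝ) < b ^ p₂ := Real.rpow_pos_of_pos hb0 _
    have hlog := strictConcaveOn_log_Ioi.2 (Set.mem_Ioi.2 hA) (Set.mem_Ioi.2 hB) hne
      (by positivity : (0:ℝ) < 1/p₁) (by positivity : (0:ℝ) < 1/p₂)
      (by rw [one_div, one_div]; exact hpq.inv_add_inv_eq_one)
    rw [smul_eq_mul, smul_eq_mul, smul_eq_mul, smul_eq_mul] at hlog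
    have hL : 1/p₁ * Real.log (a ^ p₁) + 1/p₂ * Real.log (b ^ p₂) = Real.log (a * b) := by
      rw [Real.log_rpow ha0, Real.log_rpow hb0, Real.log_mul ha0.ne' hb0.ne']
      field_simp
    rw [hL] at hlog
    have hab : 0 < a * b := mul_pos ha0 hb0
    have hS : 0 < 1/p₁ * (a ^ p₁) + 1/p₂ * (b ^ p₂) := by positivity
    have := (Real.log_lt_log_iff hab hS).1 hlog
    calc a * b < 1/p₁ * (a ^ p₁) + 1/p₂ * (b ^ p₂) := this
    _ = a ^ p₁ / p₁ + b ^ p₂ / p₂ := by ring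

/-- From termwise equality in Young's inequality, extract the component formula. -/
lemma comp_eq {r r' : ℝ} (hr : 1 < r) (hr' : r' = r / (r - 1)) {u x : ℝ}
    (hbig : u * x = |u| ^ r' / r' + |x| ^ r / r) :
    x = Real.sign u * |u| ^ (r' - 1) := by
  have hconj : Real.HolderConjugate r' r := by rw [hr']; exact (isConj hr).symm
  have hpow : |u| ^ r' = |x| ^ r := by
    by_contra hne
    have := young_strict hconj (abs_nonneg u) (abs_nonneg x) hne
    have h2 : u * x ≤ |u| * |x| := by
      calc u * x ≤ |u * x| := le_abs_self _
      _ = |u| * |x| := abs_mul u x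
    linarith
  have hsign : u * x = |u| * |x| := by
    have := Real.young_inequality_of_nonneg (abs_nonneg u) (abs_nonneg x) hconj
    have h2 : u * x ≤ |u| * |x| := by
      calc u * x ≤ |u * x| := le_abs_self _
      _ = |u| * |x| := abs_mul u x
    linarith
  rcases eq_or_ne u 0 with hu0 | hu0
  · have : |x| ^ r = 0 := by rw [← hpow, hu0]; simp [Real.zero_rpow hconj.ne_zero]
    have hx0 : x = 0 := by
      by_contra hx0
      exact (Real.rpow_pos_of_pos (abs_pos.2 hx0) r).ne' this
    rw [hx0, hu0, Real.sign_zero, zero_mul]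
  · have hx0 : x ≠ 0 := by
      intro hx0
      rw [hx0] at hpow
      rw [abs_zero, Real.zero_rpow (by linarith : r ≠ 0)] at hpow
      exact (Real.rpow_pos_of_pos (abs_pos.2 hu0) r').ne' hpow
    have habs : |x| = |u| ^ (r' - 1) := by
      have h1 : |x| = (|x| ^ r) ^ (1/r) := by
        rw [← Real.rpow_mul (abs_nonneg x), mul_one_div,
          div_self (by linarith : r ≠ 0), Real.rpow_one]
      rw [h1, ← hpow, ← Real.rpow_mul (abs_nonneg u)]
      congr 1
      have h2 : r - 1 ≠ 0 := by linarith
      have h3 : r ≠ 0 := by linarith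
      rw [hr']
      field_simp
      ring
    rw [← habs]
    conv_lhs => rw [← rsign_mul_abs x]
    congr 1
    have hpos : 0 < u * x := by
      rw [hsign]; exact mul_pos (abs_pos.2 hu0) (abs_pos.2 hx0)
    rcases lt_trichotomy u 0 with hu | hu | hu
    · rw [Real.sign_of_neg (by nlinarith : x < 0), Real.sign_of_neg hu]
    · exact absurd hu hu0
    · rw [Real.sign_of_pos (by nlinarith : 0 < x), Real.sign_of_pos hu]


lemma holder_eq {r : ℝ} (hr : 1 < r) {u x : ℝ × ℝ}
    (hu : pnorm (r / (r - 1)) u = 1) (hx : pnorm r x = 1) (heq : dot u x = 1) :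
    x = spow u (r / (r - 1) - 1) := by
  have hconj := isConj hr
  have hr' : 1 < r / (r - 1) := conj_pos hr
  set r' := r / (r - 1) with hr'def
  have hsum_u : |u.1| ^ r' + |u.2| ^ r' = 1 := by
    have h := pnorm_rpow (by linarith : (0:ℝ) < r') u
    rw [hu, Real.one_rpow] at h
    linarith
  have hsum_x : |x.1| ^ r + |x.2| ^ r = 1 := by
    have h := pnorm_rpow (by linarith : (0:ℝ) < r) x
    rw [hx, Real.one_rpow] at h
    linarith
  have e1 : u.1 * x.1 ≤ |u.1| ^ r' / r' + |x.1| ^ r / r :=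
    Real.young_inequality _ _ hconj.symm
  have e2 : u.2 * x.2 ≤ |u.2| ^ r' / r' + |x.2| ^ r / r :=
    Real.young_inequality _ _ hconj.symm
  have hsum1 : 1 / r + 1 / r' = 1 := by
    rw [one_div, one_div]; exact hconj.inv_add_inv_eq_one
  have htot : (|u.1| ^ r' / r' + |x.1| ^ r / r) + (|u.2| ^ r' / r' + |x.2| ^ r / r) = 1 := by
    have hre : (|u.1| ^ r' / r' + |x.1| ^ r / r) + (|u.2| ^ r' / r' + |x.2| ^ r / r)
        = (|u.1| ^ r' + |u.2| ^ r') / r' + (|x.1| ^ r + |x.2| ^ r) / r := by ring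
    rw [hre, hsum_u, hsum_x]
    rw [one_div, one_div] at hsum1 ⊢
    linarith
  have hdot : u.1 * x.1 + u.2 * x.2 = 1 := heq
  have hb1 : u.1 * x.1 = |u.1| ^ r' / r' + |x.1| ^ r / r := by linarith
  have hb2 : u.2 * x.2 = |u.2| ^ r' / r' + |x.2| ^ r / r := by linarith
  exact Prod.ext (comp_eq hr hr'def hb1) (comp_eq hr hr'def hb2)


lemma dot_comm (x y : ℝ × ℝ) : dot x y = dot y x := by unfold dot; ring

lemma dot_smul_smul (s t : ℝ) (u z : ℝ × ℝ) :
    dot (s • u) (t • z) = s * t * dot u z := by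
  simp only [dot, Prod.smul_def, smul_eq_mul]; ring

/-! ### The adjoint bound -/

lemma adjoint_bound {p q : ℝ} (hp : 1 < p) (hq : 1 < q) {T : Matrix (Fin 2) (Fin 2) ℝ}
    (hb : ∀ x, pnorm q (app T x) ≤ pnorm p x) (y : ℝ × ℝ) :
    pnorm (p / (p - 1)) (app T.transpose y) ≤ pnorm (q / (q - 1)) y := by
  have hp' : 1 < p / (p - 1) := conj_pos hp
  have hq' : 1 < q / (q - 1) := conj_pos hq
  set p' := p / (p - 1) with hp'def
  set q' := q / (q - 1) with hq'def
  set v := app T.transpose y with hv_def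
  rcases eq_or_ne v 0 with hv | hv
  · rw [hv, pnorm_zero (by linarith : (0:ℝ) < p')]
    exact pnorm_nonneg _ _
  · set x := spow v (p' - 1) with hx_def
    have hN : 0 < pnorm p' v := pnorm_pos (by linarith) hv
    set N := pnorm p' v with hN_def
    have h1 : dot v x = N ^ p' := by
      rw [hx_def, dot_comm]
      exact dot_spow hp' v
    have hx_norm : pnorm p x = N ^ (p' - 1) := by
      have h := pnorm_spow (by linarith : (0:ℝ) < p' - 1) (by linarith : (0:ℝ) < p) v
      rw [hx_def, h]
      congr 2
      have hp1 : p - 1 ≠ 0 := by linarith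
      rw [hp'def]
      field_simp
      ring
    have h2 : dot y (app T x) ≤ pnorm q' y * pnorm q (app T x) := by
      have h := holder hq' y (app T x)
      rwa [show q' / (q' - 1) = q by rw [hq'def]; exact conj_conj hq] at h
    have h3 : dot v x = dot y (app T x) := dot_transpose T x y
    have h4 : pnorm q (app T x) ≤ pnorm p x := hb x
    have h5 : N ^ p' ≤ pnorm q' y * N ^ (p' - 1) := by
      rw [← h1, h3]
      calc dot y (app T x) ≤ pnorm q' y * pnorm q (app T x) := h2
      _ ≤ pnorm q' y * pnorm p x := by
          apply mul_le_mul_of_nonneg_left h4 (pnorm_nonneg _ _)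
      _ = pnorm q' y * N ^ (p' - 1) := by rw [hx_norm]
    have h6 : N ^ p' = N ^ (p' - 1) * N := by
      rw [← Real.rpow_add_one hN.ne']
      ring_nf
    rw [h6] at h5
    have h7 : 0 < N ^ (p' - 1) := Real.rpow_pos_of_pos hN _
    have h5' : N * N ^ (p' - 1) ≤ pnorm q' y * N ^ (p' - 1) := by linarith
    exact le_of_mul_le_mul_right h5' h7


/-! ### Norm attainment transfers to the adjoint -/

lemma attain {p q : ℝ} (hp : 1 < p) (hq : 1 < q) {T : Matrix (Fin 2) (Fin 2) ℝ}
    (hb : ∀ x, pnorm q (app T x) ≤ pnorm p x) {z : ℝ × ℝ} (hz0 : z ≠ 0)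
    (hz : pnorm q (app T z) = pnorm p z) :
    pnorm (p / (p - 1)) (app T.transpose (spow (app T z) (q - 1)))
      = pnorm (q / (q - 1)) (spow (app T z) (q - 1)) := by
  have hp' : 1 < p / (p - 1) := conj_pos hp
  have hq' : 1 < q / (q - 1) := conj_pos hq
  set p' := p / (p - 1) with hp'def
  set q' := q / (q - 1) with hq'def
  set v := app T z with hv_def
  set y := spow v (q - 1) with hy_def
  have hN : 0 < pnorm p z := pnorm_pos (by linarith) hz0
  set N := pnorm p z with hN_def
  have hvN : pnorm q v = N := hz
  have hy_norm : pnorm q' y = N ^ (q - 1) := by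
    have h := pnorm_spow (by linarith : (0:ℝ) < q - 1) (by linarith : (0:ℝ) < q') v
    rw [hy_def, h, show (q - 1) * q' = q by
      rw [hq'def]; rw [mul_div_assoc', mul_div_cancel_left₀ _ (by linarith : q - 1 ≠ 0)], hvN]
  have hdot : dot (app T.transpose y) z = N ^ q := by
    rw [dot_transpose, ← hv_def, dot_comm, ← hvN]
    exact (dot_comm _ _).trans (dot_spow hq v)
  have hle : pnorm p' (app T.transpose y) ≤ N ^ (q - 1) := by
    rw [← hy_norm]
    exact adjoint_bound hp hq hb y
  have hge : N ^ (q - 1) ≤ pnorm p' (app T.transpose y) := by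
    have hh : dot (app T.transpose y) z ≤ pnorm p' (app T.transpose y) * pnorm p z := by
      have h := holder hp' (app T.transpose y) z
      rwa [show p' / (p' - 1) = p by rw [hp'def]; exact conj_conj hp] at h
    rw [hdot, ← hN_def] at hh
    have hNq : N ^ q = N ^ (q - 1) * N := by
      rw [← Real.rpow_add_one hN.ne']; ring_nf
    rw [hNq] at hh
    have := le_of_mul_le_mul_right (by linarith : N ^ (q-1) * N ≤ pnorm p' (app T.transpose y) * N) hN
    exact this
  rw [hy_norm]
  exact le_antisymm hle hge


/-! ### Independence of the images -/

lemma img_li {p q : ℝ} (hp : 1 < p) (hq : 1 < q) {T : Matrix (Fin 2) (Fin 2) ℝ}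
    (hb : ∀ x, pnorm q (app T x) ≤ pnorm p x) {z w : ℝ × ℝ}
    (hli : LinearIndependent ℝ ![z, w])
    (hz : pnorm q (app T z) = pnorm p z) (hw : pnorm q (app T w) = pnorm p w) :
    LinearIndependent ℝ ![app T z, app T w] := by
  have hp' : 1 < p / (p - 1) := conj_pos hp
  set p' := p / (p - 1) with hp'def
  have hz0 : z ≠ 0 := by
    intro h0; rw [li_iff_det] at hli; apply hli; rw [h0]; simp
  have hw0 : w ≠ 0 := by
    intro h0; rw [li_iff_det] at hli; apply hli; rw [h0]; simp
  have hNz : 0 < pnorm p z := pnorm_pos (by linarith) hz0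
  have hTz0 : app T z ≠ 0 := by
    intro h0
    rw [h0, pnorm_zero (by linarith : (0:ℝ) < q)] at hz
    exact hNz.ne (hz ▸ rfl)
  rw [li_iff_det]
  intro hdet
  obtain ⟨c, hc⟩ := exists_smul_of_det_eq_zero hTz0 hdet
  have hc0 : c ≠ 0 := by
    intro h0
    rw [h0, zero_smul] at hc
    have hNw : 0 < pnorm p w := pnorm_pos (by linarith) hw0
    rw [hc, pnorm_zero (by linarith : (0:ℝ) < q)] at hw
    exact hNw.ne (hw ▸ rfl)
  -- replace w by w₂ = c⁻¹ • w, which has the same image as z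
  set w₂ := c⁻¹ • w with hw₂_def
  have hTw₂ : app T w₂ = app T z := by
    rw [hw₂_def, app_smul, hc, smul_smul, inv_mul_cancel₀ hc0, one_smul]
  have hw₂norm : pnorm p w₂ = pnorm p z := by
    have h1 : pnorm q (app T w₂) = pnorm p z := by rw [hTw₂]; exact hz
    have h2 : pnorm q (app T w₂) = pnorm p w₂ := by
      rw [hw₂_def, app_smul, pnorm_smul (by linarith : (0:ℝ) < q),
        pnorm_smul (by linarith : (0:ℝ) < p), hw]
    rw [← h2, h1]
  set N := pnorm p z with hN_def
  set v := app T z with hv_def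
  set y := spow v (q - 1) with hy_def
  set u := app T.transpose y with hu_def
  have hu_norm : pnorm p' u = N ^ (q - 1) := by
    have h1 := attain hp hq hb hz0 hz
    have h2 : pnorm (q / (q - 1)) y = N ^ (q - 1) := by
      have h := pnorm_spow (by linarith : (0:ℝ) < q - 1)
        (by linarith [conj_pos hq] : (0:ℝ) < q / (q - 1)) v
      rw [hy_def, h, show (q - 1) * (q / (q - 1)) = q by
        rw [mul_div_assoc', mul_div_cancel_left₀ _ (by linarith : q - 1 ≠ 0)], hz]
    rw [hu_def, ← h2]
    exact h1
  have hdotz : dot u z = N ^ q := by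
    rw [hu_def, dot_transpose, ← hv_def, hy_def, dot_comm]
    rw [(dot_comm _ _).trans (dot_spow hq v), hz]
  have hdotw₂ : dot u w₂ = N ^ q := by
    rw [hu_def, dot_transpose, hTw₂, hy_def]
    rw [dot_spow hq v, hz]
  -- normalize and apply the Hölder equality case
  have hNq1 : (0:ℝ) < N ^ (q - 1) := Real.rpow_pos_of_pos hNz _
  set s := (N ^ (q - 1))⁻¹ with hs_def
  set t := N⁻¹ with ht_def
  have hst : s * t * N ^ q = 1 := by
    rw [hs_def, ht_def]
    have : N ^ q = N ^ (q - 1) * N := by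
      rw [← Real.rpow_add_one hNz.ne']; ring_nf
    rw [this]
    field_simp
  have hU_norm : pnorm p' (s • u) = 1 := by
    rw [pnorm_smul (by linarith : (0:ℝ) < p'), hu_norm, hs_def,
      abs_of_pos (inv_pos.2 hNq1), inv_mul_cancel₀ hNq1.ne']
  have hXz : pnorm p (t • z) = 1 := by
    rw [pnorm_smul (by linarith : (0:ℝ) < p), ← hN_def, ht_def,
      abs_of_pos (inv_pos.2 hNz), inv_mul_cancel₀ hNz.ne']
  have hXw : pnorm p (t • w₂) = 1 := by
    rw [pnorm_smul (by linarith : (0:ℝ) < p), hw₂norm, ht_def,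
      abs_of_pos (inv_pos.2 hNz), inv_mul_cancel₀ hNz.ne']
  have hdz : dot (s • u) (t • z) = 1 := by rw [dot_smul_smul, hdotz]; exact hst
  have hdw : dot (s • u) (t • w₂) = 1 := by rw [dot_smul_smul, hdotw₂]; exact hst
  have heqz := holder_eq hp (by rw [← hp'def]; exact hU_norm) hXz hdz
  have heqw := holder_eq hp (by rw [← hp'def]; exact hU_norm) hXw hdw
  have hzw₂ : t • z = t • w₂ := by rw [heqz, heqw]
  have hzw : z = w₂ := smul_right_injective _ (inv_ne_zero hNz.ne') hzw₂
  -- contradiction with linear independence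
  rw [li_iff_det] at hli
  apply hli
  have : w = c • z := by
    rw [hzw, hw₂_def, smul_smul, mul_inv_cancel₀ hc0, one_smul]
  rw [this]
  simp only [Prod.smul_def, smul_eq_mul]
  ring


/-! ### Key transfer lemma -/

lemma key {p q : ℝ} (hp : 1 < p) (hq : 1 < q) {T : Matrix (Fin 2) (Fin 2) ℝ}
    (hb : ∀ x, pnorm q (app T x) ≤ pnorm p x)
    (h : ∃ z w : ℝ × ℝ, LinearIndependent ℝ ![z, w] ∧
        pnorm q (app T z) = pnorm p z ∧ pnorm q (app T w) = pnorm p w) :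
    ∃ z w : ℝ × ℝ, LinearIndependent ℝ ![z, w] ∧
        pnorm (p / (p - 1)) (app T.transpose z) = pnorm (q / (q - 1)) z ∧
        pnorm (p / (p - 1)) (app T.transpose w) = pnorm (q / (q - 1)) w := by
  obtain ⟨z, w, hli, hz, hw⟩ := h
  have hz0 : z ≠ 0 := by
    intro h0; rw [li_iff_det] at hli; apply hli; rw [h0]; simp
  have hw0 : w ≠ 0 := by
    intro h0; rw [li_iff_det] at hli; apply hli; rw [h0]; simp
  exact ⟨spow (app T z) (q - 1), spow (app T w) (q - 1),
    li_spow (by linarith) (img_li hp hq hb hli hz hw),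
    attain hp hq hb hz0 hz, attain hp hq hb hw0 hw⟩

/-! ### From the operator norm hypothesis to a pointwise bound -/

lemma pnorm_mono {r : ℝ} (hr : 0 < r) {x : ℝ × ℝ} {a b : ℝ}
    (h1 : |x.1| ≤ a) (h2 : |x.2| ≤ b) : pnorm r x ≤ pnorm r (a, b) := by
  have ha : 0 ≤ a := le_trans (abs_nonneg _) h1
  have hb : 0 ≤ b := le_trans (abs_nonneg _) h2
  unfold pnorm
  apply Real.rpow_le_rpow (by positivity) ?_ (by positivity)
  apply add_le_add
  · apply Real.rpow_le_rpow (abs_nonneg _) ?_ hr.le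
    simpa [abs_of_nonneg ha] using h1
  · apply Real.rpow_le_rpow (abs_nonneg _) ?_ hr.le
    simpa [abs_of_nonneg hb] using h2

lemma bound_of_opNorm {p q : ℝ} (hp : 1 < p) (hq : 1 < q) {T : Matrix (Fin 2) (Fin 2) ℝ}
    (hT : opNorm p q T = 1) (x : ℝ × ℝ) : pnorm q (app T x) ≤ pnorm p x := by
  set S := {c : ℝ | ∃ z : ℝ × ℝ, pnorm p z = 1 ∧ c = pnorm q (app T z)} with hS_def
  set C := pnorm q (|T 0 0| + |T 0 1|, |T 1 0| + |T 1 1|) with hC_def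
  have hbdd : BddAbove S := by
    refine ⟨C, fun c hc => ?_⟩
    obtain ⟨z, hz1, rfl⟩ := hc
    have hzsum : |z.1| ^ p + |z.2| ^ p = 1 := by
      have h := pnorm_rpow (by linarith : (0:ℝ) < p) z
      rw [hz1, Real.one_rpow] at h
      linarith
    have hz1le : |z.1| ≤ 1 := by
      by_contra hgt
      push_neg at hgt
      have h1 : (1:ℝ) < |z.1| ^ p := by
        calc (1:ℝ) = 1 ^ p := (Real.one_rpow p).symm
        _ < |z.1| ^ p := Real.rpow_lt_rpow (by norm_num) hgt (by linarith)
      have h2 : (0:ℝ) ≤ |z.2| ^ p := by positivity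
      linarith
    have hz2le : |z.2| ≤ 1 := by
      by_contra hgt
      push_neg at hgt
      have h1 : (1:ℝ) < |z.2| ^ p := by
        calc (1:ℝ) = 1 ^ p := (Real.one_rpow p).symm
        _ < |z.2| ^ p := Real.rpow_lt_rpow (by norm_num) hgt (by linarith)
      have h2 : (0:ℝ) ≤ |z.1| ^ p := by positivity
      linarith
    apply pnorm_mono (by linarith : (0:ℝ) < q)
    · calc |(app T z).1| = |T 0 0 * z.1 + T 0 1 * z.2| := rfl
      _ ≤ |T 0 0 * z.1| + |T 0 1 * z.2| := abs_add_le _ _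
      _ = |T 0 0| * |z.1| + |T 0 1| * |z.2| := by rw [abs_mul, abs_mul]
      _ ≤ |T 0 0| * 1 + |T 0 1| * 1 := by
          apply add_le_add <;> apply mul_le_mul_of_nonneg_left (by assumption) (abs_nonneg _)
      _ = |T 0 0| + |T 0 1| := by ring
    · calc |(app T z).2| = |T 1 0 * z.1 + T 1 1 * z.2| := rfl
      _ ≤ |T 1 0 * z.1| + |T 1 1 * z.2| := abs_add_le _ _
      _ = |T 1 0| * |z.1| + |T 1 1| * |z.2| := by rw [abs_mul, abs_mul]
      _ ≤ |T 1 0| * 1 + |T 1 1| * 1 := by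
          apply add_le_add <;> apply mul_le_mul_of_nonneg_left (by assumption) (abs_nonneg _)
      _ = |T 1 0| + |T 1 1| := by ring
  rcases eq_or_ne x 0 with hx | hx
  · rw [hx, app_zero, pnorm_zero (by linarith : (0:ℝ) < q),
      pnorm_zero (by linarith : (0:ℝ) < p)]
  · have hN : 0 < pnorm p x := pnorm_pos (by linarith) hx
    set t := (pnorm p x)⁻¹ with ht_def
    have htx : pnorm p (t • x) = 1 := by
      rw [pnorm_smul (by linarith : (0:ℝ) < p), ht_def,
        abs_of_pos (inv_pos.2 hN), inv_mul_cancel₀ hN.ne']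
    have hmem : pnorm q (app T (t • x)) ∈ S := ⟨t • x, htx, rfl⟩
    have hle : pnorm q (app T (t • x)) ≤ 1 := by
      have := le_csSup hbdd hmem
      rwa [show sSup S = 1 from hT] at this
    rw [app_smul, pnorm_smul (by linarith : (0:ℝ) < q), ht_def,
      abs_of_pos (inv_pos.2 hN)] at hle
    have h2 : pnorm p x * ((pnorm p x)⁻¹ * pnorm q (app T x)) ≤ pnorm p x * 1 :=
      mul_le_mul_of_nonneg_left hle hN.le
    rw [mul_one, ← mul_assoc, mul_inv_cancel₀ hN.ne', one_mul] at h2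
    exact h2

end Aux

/-- A norm-one operator T from ℓ^p_2 to ℓ^q_2 attains its norm on two linearly independent
  vectors iff its adjoint (the transpose, from ℓ^{q'}_2 to ℓ^{p'}_2) does. -/
theorem stmt_19 (p q : ℝ) (hp : 1 < p) (hq : 1 < q)
    (T : Matrix (Fin 2) (Fin 2) ℝ) (hT : opNorm p q T = 1) :
    (∃ z w : ℝ × ℝ, LinearIndependent ℝ ![z, w] ∧
        pnorm q (app T z) = pnorm p z ∧ pnorm q (app T w) = pnorm p w) ↔
    (∃ z w : ℝ × ℝ, LinearIndependent ℝ ![z, w] ∧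
        pnorm (p / (p - 1)) (app T.transpose z) = pnorm (q / (q - 1)) z ∧
        pnorm (p / (p - 1)) (app T.transpose w) = pnorm (q / (q - 1)) w) := by
  have hb : ∀ x, pnorm q (app T x) ≤ pnorm p x := Aux.bound_of_opNorm hp hq hT
  constructor
  · exact Aux.key hp hq hb
  · intro h
    have hb' : ∀ x, pnorm (p / (p - 1)) (app T.transpose x) ≤ pnorm (q / (q - 1)) x :=
      Aux.adjoint_bound hp hq hb
    have h2 := Aux.key (Aux.conj_pos hq) (Aux.conj_pos hp) hb' h
    rwa [Aux.conj_conj hq, Aux.conj_conj hp, Matrix.transpose_transpose] at h2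
end
end
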